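/- arXiv:math/0303147 — 5 statements merged into one kernel-verified Lean document; each statement's English description precedes it below -/
import Mathlib

section
/- Let f = a₀ + a₁x + ⋯ + aₙxⁿ and g = b₀ + b₁x + ⋯ + bₘxᵐ be real polynomials. Suppose f and g are real-rooted and all zeros of g are nonzero and of the same sign (all positive or all negative). Then the polynomial f ⊙ g := Σₖ k! aₖ bₖ xᵏ is real-rooted or identically zero. Moreover, if a₀b₀ ≠ 0 then all zeros of f ⊙ g are distinct. -/
open Polynomial

/-- A real polynomial is real-rooted if it is nonzero and all of its complex zeros are real. -/
def RealRooted (f : Polynomial ℝ) : Prop :=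
  f ≠ 0 ∧ ∀ z : ℂ, (f.map (algebraMap ℝ ℂ)).IsRoot z → z.im = 0

/-- The Schur product `f ⊙ g = Σₖ k! aₖ bₖ xᵏ`. -/
noncomputable def schurProd (f g : Polynomial ℝ) : Polynomial ℝ :=
  ∑ k ∈ Finset.range (max f.natDegree g.natDegree + 1),
    C ((k.factorial : ℝ) * f.coeff k * g.coeff k) * X ^ k

namespace SchurAux

noncomputable def toC (p : Polynomial ℝ) : Polynomial ℂ := p.map (algebraMap ℝ ℂ)

lemma coeff_toC (p : Polynomial ℝ) (k : ℕ) : (toC p).coeff k = (p.coeff k : ℂ) :=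
  coeff_map _ k

lemma toC_ne_zero {p : Polynomial ℝ} (hp : p ≠ 0) : toC p ≠ 0 := by
  simpa [toC, Polynomial.map_eq_zero_iff (algebraMap ℝ ℂ).injective] using hp

lemma toC_eq_zero {p : Polynomial ℝ} (hp : toC p = 0) : p = 0 := by
  by_contra h; exact toC_ne_zero h hp

lemma natDegree_toC (p : Polynomial ℝ) : (toC p).natDegree = p.natDegree :=
  natDegree_map_eq_of_injective (algebraMap ℝ ℂ).injective p

lemma toC_conj (p : Polynomial ℝ) (z : ℂ) :
    (toC p).eval ((starRingEnd ℂ) z) = (starRingEnd ℂ) ((toC p).eval z) := by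
  have h1 : (toC p).map (starRingEnd ℂ) = toC p := by
    rw [toC, map_map]
    congr 1
    ext x
    simp [Complex.conj_ofReal]
  conv_lhs => rw [← h1]
  rw [eval_map, eval₂_at_apply]

lemma eval_toC_real (p : Polynomial ℝ) (r : ℝ) :
    (toC p).eval (r : ℂ) = ((p.eval r : ℝ) : ℂ) := by
  rw [toC, eval_map]
  exact eval₂_at_apply (algebraMap ℝ ℂ) r

lemma derivative_toC (p : Polynomial ℝ) : derivative (toC p) = toC (derivative p) :=
  (derivative_map p (algebraMap ℝ ℂ))

lemma RealRooted.eval_ne {f : Polynomial ℝ} (hf : RealRooted f) {z : ℂ} (hz : z.im ≠ 0) :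
    (toC f).eval z ≠ 0 := fun h => hz (hf.2 z h)

/-- coefficient of a ranged sum of `C c k * X^k`. -/
lemma coeff_ranged_sum (c : ℕ → ℝ) (N j : ℕ) :
    (∑ k ∈ Finset.range N, C (c k) * X ^ k).coeff j = if j < N then c j else 0 := by
  rw [finset_sum_coeff]
  simp only [coeff_C_mul, coeff_X_pow, mul_ite, mul_one, mul_zero]
  rw [Finset.sum_ite_eq]
  simp [Finset.mem_range]

lemma coeff_ranged_sumC (c : ℕ → ℂ) (N j : ℕ) :
    (∑ k ∈ Finset.range N, C (c k) * X ^ k).coeff j = if j < N then c j else 0 := by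
  rw [finset_sum_coeff]
  simp only [coeff_C_mul, coeff_X_pow, mul_ite, mul_one, mul_zero]
  rw [Finset.sum_ite_eq]
  simp [Finset.mem_range]

end SchurAux

namespace SchurAux

/-- The Schur operator over ℂ with real "multiplier" polynomial `g`. -/
noncomputable def T (g : Polynomial ℝ) (F : Polynomial ℂ) : Polynomial ℂ :=
  ∑ k ∈ Finset.range (g.natDegree + 1),
    C ((k.factorial : ℂ) * (g.coeff k : ℂ) * F.coeff k) * X ^ k

lemma T_coeff (g : Polynomial ℝ) (F : Polynomial ℂ) (j : ℕ) :
    (T g F).coeff j = (j.factorial : ℂ) * (g.coeff j : ℂ) * F.coeff j := by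
  rw [T, coeff_ranged_sumC]
  split_ifs with h
  · rfl
  · have : g.natDegree < j := by omega
    rw [coeff_eq_zero_of_natDegree_lt this]
    simp

lemma T_eval (g : Polynomial ℝ) (F : Polynomial ℂ) (x : ℂ) :
    (T g F).eval x = ∑ k ∈ Finset.range (g.natDegree + 1),
      (k.factorial : ℂ) * (g.coeff k : ℂ) * F.coeff k * x ^ k := by
  rw [T, eval_finset_sum]
  simp

lemma schurProd_coeff (f g : Polynomial ℝ) (j : ℕ) :
    (schurProd f g).coeff j = (j.factorial : ℝ) * f.coeff j * g.coeff j := by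
  rw [schurProd, coeff_ranged_sum]
  split_ifs with h
  · rfl
  · have : f.natDegree < j := by omega
    rw [coeff_eq_zero_of_natDegree_lt this]
    simp

lemma map_schurProd (f g : Polynomial ℝ) : toC (schurProd f g) = T g (toC f) := by
  ext j
  rw [coeff_toC, T_coeff, schurProd_coeff, coeff_toC]
  push_cast
  ring

/-- `g` is real rooted with all (real) roots negative. -/
def NegRR (g : Polynomial ℝ) : Prop := RealRooted g ∧ ∀ θ : ℝ, g.IsRoot θ → θ < 0

lemma NegRR.ne_zero {g : Polynomial ℝ} (h : NegRR g) : g ≠ 0 := h.1.1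

/-- peel one root from a NegRR polynomial of positive degree. -/
lemma NegRR.peel {g : Polynomial ℝ} (hg : NegRR g) (h1 : 1 ≤ g.natDegree) :
    ∃ θ : ℝ, 0 < θ ∧ ∃ g₁ : Polynomial ℝ, g = (X + C θ) * g₁ ∧ NegRR g₁ ∧
      g₁.natDegree + 1 = g.natDegree ∧ g₁.leadingCoeff = g.leadingCoeff := by
  have hdeg : 0 < (toC g).degree := by
    rw [← natDegree_pos_iff_degree_pos, natDegree_toC]
    omega
  obtain ⟨z, hz⟩ := Complex.exists_root hdeg
  have hzim : z.im = 0 := hg.1.2 z hz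
  have hzre : z = ((z.re : ℝ) : ℂ) := Complex.ext rfl (by simp [hzim])
  have hroot : g.IsRoot z.re := by
    have := hz
    rw [IsRoot, hzre, eval_toC_real] at this
    exact_mod_cast this
  have hneg : z.re < 0 := hg.2 _ hroot
  refine ⟨-z.re, by linarith, ?_⟩
  obtain ⟨g₁, hg₁⟩ := (dvd_iff_isRoot.mpr hroot)
  have hXC : X - C z.re = X + C (-z.re) := by rw [map_neg]; ring
  have hgfact : g = (X + C (-z.re)) * g₁ := by rw [← hXC]; exact hg₁
  have hg₁ne : g₁ ≠ 0 := by
    intro h; rw [h, mul_zero] at hgfact; exact hg.ne_zero hgfact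
  refine ⟨g₁, hgfact, ⟨⟨hg₁ne, ?_⟩, ?_⟩, ?_, ?_⟩
  · intro w hw
    apply hg.1.2 w
    have : toC g = toC (X + C (-z.re)) * toC g₁ := by rw [hgfact, toC, Polynomial.map_mul]; rfl
    show (toC g).eval w = 0
    rw [this, eval_mul]
    have : (toC g₁).eval w = 0 := hw
    rw [this, mul_zero]
  · intro θ hθ
    apply hg.2 θ
    rw [IsRoot, hgfact, eval_mul, hθ, mul_zero]
  · have : g.natDegree = (X + C (-z.re)).natDegree + g₁.natDegree := by
      rw [hgfact, natDegree_mul (X_add_C_ne_zero _) hg₁ne]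
    rw [natDegree_X_add_C] at this
    omega
  · rw [hgfact, leadingCoeff_mul, leadingCoeff_X_add_C, one_mul]

/-- All coefficients of a NegRR polynomial up to the degree have the sign of the leading
coefficient; all others are zero. -/
lemma NegRR.coeff_pos {g : Polynomial ℝ} (hg : NegRR g) :
    (∀ k, 0 ≤ g.coeff k * g.leadingCoeff) ∧
      (∀ k ≤ g.natDegree, 0 < g.coeff k * g.leadingCoeff) := by
  obtain ⟨n, hn⟩ : ∃ n, g.natDegree = n := ⟨_, rfl⟩
  induction n generalizing g with
  | zero =>
    obtain ⟨c, rfl⟩ := natDegree_eq_zero.mp hn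
    have hc : c ≠ 0 := fun h => hg.ne_zero (by simp [h])
    constructor
    · intro k
      rcases Nat.eq_zero_or_pos k with rfl | hk
      · simp [mul_self_nonneg]
      · simp [coeff_C, Nat.pos_iff_ne_zero.mp hk]
    · intro k hk
      rw [hn] at hk
      interval_cases k
      simpa using (mul_self_pos.mpr hc)
  | succ n IH =>
    obtain ⟨θ, hθ, g₁, hfact, hg₁, hdeg, hlc⟩ := hg.peel (by omega)
    have hdeg₁ : g₁.natDegree = n := by omega
    obtain ⟨IH0, IH1⟩ := IH hg₁ hdeg₁
    have hco : ∀ k, g.coeff k = (if k = 0 then 0 else g₁.coeff (k-1)) + θ * g₁.coeff k := by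
      intro k
      rw [hfact, add_mul, coeff_add, coeff_C_mul]
      rcases k with _ | k
      · simp [mul_coeff_zero]
      · simp [coeff_X_mul]
    rw [← hlc]
    constructor
    · intro k
      rw [hco]
      rcases k with _ | k
      · simp only [if_pos rfl, zero_add, if_true]
        nlinarith [IH0 0]
      · simp only [Nat.succ_ne_zero, if_false, Nat.add_sub_cancel, add_mul]
        nlinarith [IH0 (k+1), IH0 k]
    · intro k hk
      rw [hn] at hk
      rw [hco]
      rcases k with _ | k
      · simp only [if_pos rfl, zero_add, if_true]
        nlinarith [IH1 0 (by omega : 0 ≤ g₁.natDegree)]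
      · simp only [Nat.succ_ne_zero, if_false, Nat.add_sub_cancel, add_mul]
        nlinarith [IH1 k (by omega : k ≤ g₁.natDegree), IH0 (k+1)]

lemma NegRR.coeff_ne {g : Polynomial ℝ} (hg : NegRR g) {k : ℕ} (hk : k ≤ g.natDegree) :
    g.coeff k ≠ 0 := by
  have := hg.coeff_pos.2 k hk
  intro h; rw [h, zero_mul] at this; exact lt_irrefl _ this

end SchurAux

namespace SchurAux

/-- peel a root from a nonconstant complex polynomial. -/
lemma peelC {q : Polynomial ℂ} (h1 : 1 ≤ q.natDegree) :
    ∃ r q₁, q = (X - C r) * q₁ ∧ q.IsRoot r ∧ q₁ ≠ 0 ∧ q₁.natDegree + 1 = q.natDegree ∧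
      (∀ y, q₁.IsRoot y → q.IsRoot y) := by
  have hq : q ≠ 0 := fun h => by simp [h] at h1
  have hdeg : 0 < q.degree := by rw [← natDegree_pos_iff_degree_pos]; omega
  obtain ⟨r, hr⟩ := Complex.exists_root hdeg
  obtain ⟨q₁, hq₁⟩ := dvd_iff_isRoot.mpr hr
  have hq₁ne : q₁ ≠ 0 := fun h => hq (by rw [hq₁, h, mul_zero])
  refine ⟨r, q₁, hq₁, hr, hq₁ne, ?_, ?_⟩
  · have : q.natDegree = (X - C r).natDegree + q₁.natDegree := by
      rw [hq₁, natDegree_mul (X_sub_C_ne_zero _) hq₁ne]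
    rw [natDegree_X_sub_C] at this
    omega
  · intro y hy
    rw [IsRoot, hq₁, eval_mul, hy, mul_zero]

/-- Logarithmic-derivative bound at 0 for polynomials with roots in the closed lower
half plane, evaluated at `0`. -/
lemma Lq : ∀ n : ℕ, ∀ q : Polynomial ℂ, q.natDegree = n → q ≠ 0 →
    (∀ y, q.IsRoot y → y.im ≤ 0) → q.eval 0 ≠ 0 →
    ((q.derivative.eval 0) * (starRingEnd ℂ) (q.eval 0)).im ≤ 0 := by
  intro n
  induction n using Nat.strong_induction_on with
  | _ n IH =>
    intro q hdeg hq hroots h0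
    rcases Nat.eq_zero_or_pos n with rfl | hn
    · rw [eq_C_of_natDegree_eq_zero hdeg]
      simp
    · obtain ⟨r, q₁, hfact, hr, hq₁ne, hdeg₁, hsub⟩ := peelC (by omega : 1 ≤ q.natDegree)
      have hrim : r.im ≤ 0 := hroots r hr
      have h0' : q.eval 0 = (0 - r) * q₁.eval 0 := by rw [hfact]; simp
      have hr0 : r ≠ 0 := by
        intro h
        apply h0
        rw [h0', h]
        ring
      have hq₁0 : q₁.eval 0 ≠ 0 := by
        intro h; rw [h, mul_zero] at h0'; exact h0 h0'
      have IH₁ := IH q₁.natDegree (by omega) q₁ rfl hq₁ne (fun y hy => hroots y (hsub y hy)) hq₁0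
      have hd : q.derivative.eval 0 = q₁.eval 0 + (0 - r) * q₁.derivative.eval 0 := by
        rw [hfact, derivative_mul]
        simp
      rw [hd, h0']
      set a := q₁.eval 0
      set b := q₁.derivative.eval 0
      have expand : (a + (0 - r) * b) * (starRingEnd ℂ) ((0 - r) * a)
          = (starRingEnd ℂ) (-r) * ((a : ℂ) * (starRingEnd ℂ) a)
            + (r * (starRingEnd ℂ) r) * (b * (starRingEnd ℂ) a) := by
        simp only [map_mul, map_sub, map_neg, map_zero]
        ring
      rw [expand]
      have h1 : ((starRingEnd ℂ) (-r) * ((a : ℂ) * (starRingEnd ℂ) a)).im ≤ 0 := by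
        rw [Complex.mul_conj]
        simp only [Complex.mul_im, Complex.ofReal_im, Complex.ofReal_re, mul_zero, add_zero,
          zero_add, map_neg, Complex.neg_im, Complex.conj_im, neg_neg]
        exact mul_nonpos_of_nonpos_of_nonneg hrim (Complex.normSq_nonneg a)
      have h2 : ((r * (starRingEnd ℂ) r) * (b * (starRingEnd ℂ) a)).im ≤ 0 := by
        rw [Complex.mul_conj]
        simp only [Complex.mul_im, Complex.ofReal_im, Complex.ofReal_re, zero_mul, add_zero,
          zero_add, mul_zero]
        exact mul_nonpos_of_nonneg_of_nonpos (Complex.normSq_nonneg r) IH₁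
      calc ((starRingEnd ℂ) (-r) * (a * (starRingEnd ℂ) a)
          + (r * (starRingEnd ℂ) r) * (b * (starRingEnd ℂ) a)).im
          = ((starRingEnd ℂ) (-r) * (a * (starRingEnd ℂ) a)).im
            + ((r * (starRingEnd ℂ) r) * (b * (starRingEnd ℂ) a)).im := Complex.add_im _ _
        _ ≤ 0 := by linarith

lemma eval_ne_of_roots_real {q : Polynomial ℂ} (hq : q ≠ 0)
    (hroots : ∀ y, q.IsRoot y → y.im = 0) {z : ℂ} (hz : z.im ≠ 0) : q.eval z ≠ 0 :=
  fun h => hz (hroots z h)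

/-- Strict logarithmic-derivative bound in the upper half plane for polynomials with
all roots real. -/
lemma Lqz : ∀ n : ℕ, ∀ q : Polynomial ℂ, q.natDegree = n → q ≠ 0 →
    (∀ y, q.IsRoot y → y.im = 0) → ∀ z : ℂ, 0 < z.im → 1 ≤ q.natDegree →
    ((q.derivative.eval z) * (starRingEnd ℂ) (q.eval z)).im < 0 := by
  intro n
  induction n using Nat.strong_induction_on with
  | _ n IH =>
    intro q hdeg hq hroots z hz hn
    obtain ⟨r, q₁, hfact, hr, hq₁ne, hdeg₁, hsub⟩ := peelC hn
    have hrim : r.im = 0 := hroots r hr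
    have hq₁roots : ∀ y, q₁.IsRoot y → y.im = 0 := fun y hy => hroots y (hsub y hy)
    have ha : q₁.eval z ≠ 0 := eval_ne_of_roots_real hq₁ne hq₁roots (by linarith)
    have h0' : q.eval z = (z - r) * q₁.eval z := by rw [hfact]; simp
    have hd : q.derivative.eval z = q₁.eval z + (z - r) * q₁.derivative.eval z := by
      rw [hfact, derivative_mul]; simp
    rw [hd, h0', map_mul]
    set a := q₁.eval z
    set b := q₁.derivative.eval z
    have expand : ∀ u v w : ℂ, (a + u * b) * (v * w)
        = v * (a * w) + (u * v) * (b * w) := by intros; ring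
    rw [expand]
    have him : ((starRingEnd ℂ) (z - r) * (a * (starRingEnd ℂ) a)).im < 0 := by
      rw [Complex.mul_conj]
      simp only [Complex.mul_im, Complex.ofReal_im, Complex.ofReal_re, mul_zero, add_zero,
        Complex.conj_im, Complex.sub_im, hrim, sub_zero]
      have : 0 < Complex.normSq a := by
        rw [Complex.normSq_pos]; exact ha
      nlinarith
    have h2 : (((z - r) * (starRingEnd ℂ) (z - r)) * (b * (starRingEnd ℂ) a)).im ≤ 0 := by
      rw [Complex.mul_conj]
      simp only [Complex.mul_im, Complex.ofReal_im, Complex.ofReal_re, zero_mul, add_zero,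
        zero_add, mul_zero]
      rcases Nat.eq_zero_or_pos q₁.natDegree with h0 | hpos
      · have : q₁.derivative = 0 := by
          rw [eq_C_of_natDegree_eq_zero h0]; simp
        simp [b, this]
      · have := IH q₁.natDegree (by omega) q₁ rfl hq₁ne hq₁roots z hz (by omega)
        exact mul_nonpos_of_nonneg_of_nonpos (Complex.normSq_nonneg _) (le_of_lt this)
    calc ((starRingEnd ℂ) (z - r) * (a * (starRingEnd ℂ) a)
        + ((z - r) * (starRingEnd ℂ) (z - r)) * (b * (starRingEnd ℂ) a)).im
        = ((starRingEnd ℂ) (z - r) * (a * (starRingEnd ℂ) a)).im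
          + (((z - r) * (starRingEnd ℂ) (z - r)) * (b * (starRingEnd ℂ) a)).im :=
          Complex.add_im _ _
      _ < 0 := by linarith

/-- The "concavity" identity: for a complex polynomial with all roots real, at a real
point `s` which is not a root, `q''(s) q(s) - q'(s)^2 = - q(s)^2 S` with `S ≥ 0`,
strictly positive when `q` is nonconstant. -/
lemma CW : ∀ n : ℕ, ∀ q : Polynomial ℂ, q.natDegree = n → q ≠ 0 →
    (∀ y, q.IsRoot y → y.im = 0) → ∀ s : ℝ, q.eval (s : ℂ) ≠ 0 →
    ∃ S : ℝ, 0 ≤ S ∧ (1 ≤ q.natDegree → 0 < S) ∧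
      (q.derivative.derivative.eval (s:ℂ)) * q.eval (s:ℂ) - (q.derivative.eval (s:ℂ))^2
        = -(q.eval (s:ℂ))^2 * (S : ℂ) := by
  intro n
  induction n using Nat.strong_induction_on with
  | _ n IH =>
    intro q hdeg hq hroots s hs
    rcases Nat.eq_zero_or_pos n with rfl | hn
    · refine ⟨0, le_refl _, by omega, ?_⟩
      rw [eq_C_of_natDegree_eq_zero hdeg]
      simp
    · obtain ⟨r, q₁, hfact, hr, hq₁ne, hdeg₁, hsub⟩ := peelC (by omega : 1 ≤ q.natDegree)
      have hrim : r.im = 0 := hroots r hr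
      have hrre : r = ((r.re : ℝ) : ℂ) := Complex.ext rfl (by simp [hrim])
      have hq₁roots : ∀ y, q₁.IsRoot y → y.im = 0 := fun y hy => hroots y (hsub y hy)
      have hev : q.eval (s:ℂ) = ((s:ℂ) - r) * q₁.eval (s:ℂ) := by rw [hfact]; simp
      have hu : (s:ℂ) - r ≠ 0 := by
        intro h; rw [h, zero_mul] at hev; exact hs hev
      have hq₁s : q₁.eval (s:ℂ) ≠ 0 := by
        intro h; rw [h, mul_zero] at hev; exact hs hev
      obtain ⟨S₁, hS₁0, hS₁pos, hS₁⟩ := IH q₁.natDegree (by omega) q₁ rfl hq₁ne hq₁roots s hq₁s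
      have hsr : s - r.re ≠ 0 := by
        intro h
        apply hu
        rw [hrre, ← Complex.ofReal_sub, h, Complex.ofReal_zero]
      refine ⟨S₁ + (s - r.re)⁻¹^2, by positivity, fun _ => by positivity, ?_⟩
      have hd1 : q.derivative.eval (s:ℂ) = q₁.eval (s:ℂ) + ((s:ℂ) - r) * q₁.derivative.eval (s:ℂ) := by
        rw [hfact, derivative_mul]; simp
      have hd2 : q.derivative.derivative.eval (s:ℂ)
          = 2 * q₁.derivative.eval (s:ℂ) + ((s:ℂ) - r) * q₁.derivative.derivative.eval (s:ℂ) := by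
        rw [hfact, derivative_mul, derivative_add, derivative_mul, derivative_mul]
        simp
        ring
      rw [hd1, hd2, hev]
      have hcast : ((s:ℂ) - r) = ((s - r.re : ℝ) : ℂ) := by
        rw [Complex.ofReal_sub, ← hrre]
      rw [hcast]
      set u : ℝ := s - r.re
      set a := q₁.eval (s:ℂ)
      set b := q₁.derivative.eval (s:ℂ)
      set c := q₁.derivative.derivative.eval (s:ℂ)
      have key : (2*b + (u:ℂ)*c) * ((u:ℂ)*a) - (a + (u:ℂ)*b)^2
          = (u:ℂ)^2 * (c*a - b^2) - a^2 := by ring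
      rw [key, hS₁]
      have huC : ((u:ℝ):ℂ) ≠ 0 := by exact_mod_cast hsr
      field_simp
      push_cast
      have hu2 : (u:ℂ)^2 * (u:ℂ)⁻¹^2 = 1 := by rw [← mul_pow, mul_inv_cancel₀ huC, one_pow]
      linear_combination (1 + (u:ℂ)^2 * (S₁:ℂ)) * hu2
    
end SchurAux

namespace SchurAux

/-- `(derivative^[k] f).eval 0 = k! * f.coeff k`. -/
lemma iterate_derivative_eval_zero (f : Polynomial ℝ) (k : ℕ) :
    (derivative^[k] f).eval 0 = (k.factorial : ℝ) * f.coeff k := by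
  induction k generalizing f with
  | zero => simp [eval_zero, coeff_zero_eq_eval_zero]
  | succ k IH =>
    rw [Function.iterate_succ_apply, IH (derivative f), coeff_derivative,
      Nat.factorial_succ]
    push_cast
    ring

/-- The differential operator `Φ G f = Σ G_k f^{(k)}`. -/
noncomputable def Phi (G f : Polynomial ℝ) : Polynomial ℝ :=
  ∑ k ∈ Finset.range (G.natDegree + 1), C (G.coeff k) * derivative^[k] f

lemma Phi_ext (G f : Polynomial ℝ) {N : ℕ} (hN : G.natDegree + 1 ≤ N) :
    Phi G f = ∑ k ∈ Finset.range N, C (G.coeff k) * derivative^[k] f := by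
  rw [Phi]
  apply Finset.sum_subset (Finset.range_subset_range.mpr hN)
  intro k _ hk
  simp only [Finset.mem_range] at hk
  rw [coeff_eq_zero_of_natDegree_lt (by omega)]
  simp

lemma Phi_peel (s : ℝ) (G₂ f : Polynomial ℝ) (hG₂ : G₂ ≠ 0) :
    Phi ((X - C s) * G₂) f = Phi G₂ (derivative f - C s * f) := by
  have hdeg : ((X - C s) * G₂).natDegree = G₂.natDegree + 1 := by
    rw [natDegree_mul (X_sub_C_ne_zero s) hG₂, natDegree_X_sub_C]
    omega
  have hco : ∀ k, ((X - C s) * G₂).coeff k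
      = (if k = 0 then 0 else G₂.coeff (k-1)) - s * G₂.coeff k := by
    intro k
    rw [sub_mul, coeff_sub, coeff_C_mul]
    rcases k with _ | k
    · simp [mul_coeff_zero]
    · simp [coeff_X_mul]
  rw [Phi, hdeg]
  have split : ∀ k ∈ Finset.range (G₂.natDegree + 1 + 1),
      C (((X - C s) * G₂).coeff k) * derivative^[k] f
        = (if k = 0 then 0 else C (G₂.coeff (k-1)) * derivative^[k] f)
          - C (s * G₂.coeff k) * derivative^[k] f := by
    intro k _
    rw [hco k]
    rcases k with _ | k
    · simp [sub_mul]
    · simp only [Nat.succ_ne_zero, if_false, Nat.add_sub_cancel, map_sub, sub_mul, map_mul]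
  rw [Finset.sum_congr rfl split, Finset.sum_sub_distrib]
  have h1 : ∑ k ∈ Finset.range (G₂.natDegree + 1 + 1),
      (if k = 0 then 0 else C (G₂.coeff (k-1)) * derivative^[k] f)
        = ∑ k ∈ Finset.range (G₂.natDegree + 1), C (G₂.coeff k) * derivative^[k] (derivative f) := by
    rw [Finset.sum_range_succ']
    simp only [if_true, if_false, Nat.succ_ne_zero, Nat.add_sub_cancel, add_zero]
    apply Finset.sum_congr rfl
    intro k _
    rw [Function.iterate_succ_apply]
  have h2 : ∑ k ∈ Finset.range (G₂.natDegree + 1 + 1), C (s * G₂.coeff k) * derivative^[k] f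
      = ∑ k ∈ Finset.range (G₂.natDegree + 1), C (s * G₂.coeff k) * derivative^[k] f := by
    rw [Finset.sum_range_succ, coeff_eq_zero_of_natDegree_lt (by omega)]
    simp
  rw [h1, h2, Phi]
  rw [← Finset.sum_sub_distrib]
  apply Finset.sum_congr rfl
  intro k _
  rw [iterate_derivative_sub, iterate_derivative_C_mul]
  simp only [map_mul]
  ring

/-- Real version of the strict concavity bound. -/
lemma LW {f : Polynomial ℝ} (hf : RealRooted f) (hdeg : 1 ≤ f.natDegree) {s : ℝ}
    (hs : f.eval s ≠ 0) :
    (derivative (derivative f)).eval s * f.eval s - ((derivative f).eval s)^2 < 0 := by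
  have h1 : (toC f).eval (s:ℂ) ≠ 0 := by
    rw [eval_toC_real]
    exact_mod_cast hs
  obtain ⟨S, hS0, hSpos, hSeq⟩ := CW (toC f).natDegree (toC f) rfl (toC_ne_zero hf.1)
    (fun y hy => hf.2 y hy) s h1
  have hSpos' : 0 < S := hSpos (by rw [natDegree_toC]; omega)
  have hcast : ∀ p : Polynomial ℝ, (toC p).eval (s:ℂ) = ((p.eval s : ℝ) : ℂ) :=
    fun p => eval_toC_real p s
  rw [derivative_toC, derivative_toC] at hSeq
  rw [hcast, hcast, hcast] at hSeq
  have hreal : (derivative (derivative f)).eval s * f.eval s - ((derivative f).eval s)^2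
      = -(f.eval s)^2 * S := by exact_mod_cast hSeq
  rw [hreal]
  nlinarith [hSpos', (by positivity : (0:ℝ) < (f.eval s)^2)]

/-- Hermite–Poulain step: `f' - s₀ f` is real rooted for real rooted `f` and `s₀ ≠ 0`. -/
lemma HP1 {f : Polynomial ℝ} (hf : RealRooted f) {s₀ : ℝ} (hs₀ : s₀ ≠ 0) :
    RealRooted (derivative f - C s₀ * f) := by
  have hC : toC (derivative f - C s₀ * f)
      = derivative (toC f) - C ((s₀ : ℝ) : ℂ) * toC f := by
    simp only [toC, Polynomial.map_sub, Polynomial.map_mul, map_C, derivative_map]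
    rfl
  constructor
  · rcases Nat.eq_zero_or_pos f.natDegree with h0 | hpos
    · obtain ⟨c, rfl⟩ := natDegree_eq_zero.mp h0
      have hc : c ≠ 0 := fun h => hf.1 (by simp [h])
      intro h
      rw [derivative_C, zero_sub, neg_eq_zero, ← C_mul, C_eq_zero] at h
      exact hc ((mul_eq_zero.mp h).resolve_left hs₀)
    · intro h
      have h2 := congrArg (fun p : Polynomial ℝ => p.coeff f.natDegree) h
      simp only [coeff_sub, coeff_C_mul, coeff_zero] at h2
      rw [coeff_derivative, coeff_eq_zero_of_natDegree_lt (by omega)] at h2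
      field_simp at h2
      exact (leadingCoeff_ne_zero.mpr hf.1) ((mul_eq_zero.mp (by rw [leadingCoeff]; linarith)).resolve_left hs₀)
  · intro z hz
    by_contra hzim
    have key : ∀ w : ℂ, 0 < w.im → (toC (derivative f - C s₀ * f)).eval w ≠ 0 := by
      intro w hw hval
      rw [hC, eval_sub, eval_mul, eval_C] at hval
      have hfz : (toC f).eval w ≠ 0 := RealRooted.eval_ne hf (by intro h; rw [h] at hw; exact lt_irrefl _ hw)
      rcases Nat.eq_zero_or_pos f.natDegree with h0 | hpos
      · obtain ⟨c, rfl⟩ := natDegree_eq_zero.mp h0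
        have hc : c ≠ 0 := fun h => hf.1 (by simp [h])
        rw [show toC (C c) = Polynomial.C ((c:ℝ):ℂ) from by rw [toC, map_C]; rfl] at hval
        simp only [derivative_C, eval_zero, eval_C, zero_sub, neg_eq_zero] at hval
        rw [mul_eq_zero] at hval
        rcases hval with h | h
        · exact hs₀ (by exact_mod_cast h)
        · exact hc (by exact_mod_cast h)
      · have hlt := Lqz (toC f).natDegree (toC f) rfl (toC_ne_zero hf.1)
          (fun y hy => hf.2 y hy) w hw (by rw [natDegree_toC]; omega)
        have heq : (derivative (toC f)).eval w = ((s₀:ℝ):ℂ) * (toC f).eval w := by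
          linear_combination hval
        rw [heq, mul_assoc, Complex.mul_conj] at hlt
        simp only [Complex.mul_im, Complex.ofReal_im, Complex.ofReal_re, zero_mul, add_zero,
          zero_add, mul_zero] at hlt
        exact lt_irrefl _ hlt
    rcases lt_trichotomy z.im 0 with hlt | heq | hgt
    · apply key ((starRingEnd ℂ) z) (by simpa using by linarith)
      rw [toC_conj]
      rw [show (toC (derivative f - C s₀ * f)).eval z = 0 from hz]
      simp
    · exact hzim heq
    · exact key z hgt hz

end SchurAux

namespace SchurAux

/-- Hermite–Poulain step 2: a multiple root of `f' - s₀ f` is a multiple root of `f`. -/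
lemma HP2 {f : Polynomial ℝ} (hf : RealRooted f) {s₀ : ℝ} (hs₀ : s₀ ≠ 0) {s : ℝ}
    (h1 : (derivative f - C s₀ * f).eval s = 0)
    (h2 : (derivative (derivative f - C s₀ * f)).eval s = 0) :
    f.eval s = 0 ∧ (derivative f).eval s = 0 := by
  rw [eval_sub, eval_mul, eval_C, sub_eq_zero] at h1
  rw [derivative_sub, derivative_C_mul, eval_sub, eval_mul, eval_C, sub_eq_zero] at h2
  by_cases hfs : f.eval s = 0
  · exact ⟨hfs, by rw [h1, hfs, mul_zero]⟩
  exfalso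
  rcases Nat.eq_zero_or_pos f.natDegree with h0 | hpos
  · obtain ⟨c, rfl⟩ := natDegree_eq_zero.mp h0
    have hc : c ≠ 0 := fun h => hf.1 (by simp [h])
    simp only [derivative_C, eval_zero, eval_C] at h1
    exact (mul_ne_zero hs₀ hc) h1.symm
  · have := LW hf hpos hfs
    rw [h2, h1] at this
    nlinarith
    
end SchurAux

namespace SchurAux

/-- Iterated Hermite–Poulain: if `G` is real rooted with all roots nonzero, a point where
`Φ G f` and its derivative vanish is a multiple root of `f`. -/
lemma S3core : ∀ n : ℕ, ∀ G : Polynomial ℝ, G.natDegree = n → RealRooted G → G.coeff 0 ≠ 0 →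
    ∀ f : Polynomial ℝ, RealRooted f → ∀ s : ℝ,
    (Phi G f).eval s = 0 → (derivative (Phi G f)).eval s = 0 →
    f.eval s = 0 ∧ (derivative f).eval s = 0 := by
  intro n
  induction n using Nat.strong_induction_on with
  | _ n IH =>
    intro G hdeg hG hG0 f hf s h1 h2
    rcases Nat.eq_zero_or_pos n with rfl | hn
    · obtain ⟨c, rfl⟩ := natDegree_eq_zero.mp hdeg
      have hc : c ≠ 0 := fun h => hG.1 (by simp [h])
      have hPhi : Phi (C c) f = C c * f := by
        rw [Phi]
        simp
      rw [hPhi, eval_mul, eval_C] at h1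
      rw [hPhi, derivative_C_mul, eval_mul, eval_C] at h2
      exact ⟨(mul_eq_zero.mp h1).resolve_left hc, (mul_eq_zero.mp h2).resolve_left hc⟩
    · -- peel a real nonzero root from G
      have hdegpos : 0 < (toC G).degree := by
        rw [← natDegree_pos_iff_degree_pos, natDegree_toC]; omega
      obtain ⟨z, hz⟩ := Complex.exists_root hdegpos
      have hzim : z.im = 0 := hG.2 z hz
      have hzre : z = ((z.re : ℝ) : ℂ) := Complex.ext rfl (by simp [hzim])
      have hroot : G.IsRoot z.re := by
        have := hz
        rw [IsRoot, hzre, eval_toC_real] at this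
        exact_mod_cast this
      set s₀ := z.re with hs₀def
      have hs₀ : s₀ ≠ 0 := by
        intro h
        rw [h] at hroot
        rw [IsRoot, ← coeff_zero_eq_eval_zero] at hroot
        exact hG0 hroot
      obtain ⟨G₂, hG₂⟩ := dvd_iff_isRoot.mpr hroot
      have hG₂ne : G₂ ≠ 0 := fun h => hG.1 (by rw [hG₂, h, mul_zero])
      have hG₂deg : G₂.natDegree + 1 = n := by
        have : G.natDegree = (X - C s₀).natDegree + G₂.natDegree := by
          rw [hG₂, natDegree_mul (X_sub_C_ne_zero _) hG₂ne]
        rw [natDegree_X_sub_C] at this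
        omega
      have hG₂rr : RealRooted G₂ := by
        refine ⟨hG₂ne, fun w hw => hG.2 w ?_⟩
        have hmul : toC G = toC (X - C s₀) * toC G₂ := by
          rw [hG₂, toC, Polynomial.map_mul]
          rfl
        show (toC G).eval w = 0
        rw [hmul, eval_mul]
        have : (toC G₂).eval w = 0 := hw
        rw [this, mul_zero]
      have hG₂0 : G₂.coeff 0 ≠ 0 := by
        intro h
        apply hG0
        rw [hG₂, mul_coeff_zero, h, mul_zero]
      have hφ : RealRooted (derivative f - C s₀ * f) := HP1 hf hs₀
      have hpeel : Phi G f = Phi G₂ (derivative f - C s₀ * f) := by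
        rw [hG₂, Phi_peel s₀ G₂ f hG₂ne]
      rw [hpeel] at h1 h2
      obtain ⟨c1, c2⟩ := IH G₂.natDegree (by omega) G₂ rfl hG₂rr hG₂0 _ hφ s h1 h2
      exact HP2 hf hs₀ c1 c2

end SchurAux

namespace SchurAux

lemma schurProd_eval (f g : Polynomial ℝ) (t : ℝ) :
    (schurProd f g).eval t = ∑ k ∈ Finset.range (max f.natDegree g.natDegree + 1),
      (k.factorial : ℝ) * f.coeff k * g.coeff k * t ^ k := by
  rw [schurProd, eval_finset_sum]
  simp

/-- If `f` is real rooted with `f(0) ≠ 0` and `g₁` is NegRR, then `f ⊙ g₁` and `f' ⊙ g₁`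
have no common zero `t ≠ 0`. -/
lemma S3 {f g₁ : Polynomial ℝ} (hf : RealRooted f) (hf0 : f.coeff 0 ≠ 0) (hg₁ : NegRR g₁)
    {t : ℝ} (ht : t ≠ 0) (hA : (schurProd f g₁).eval t = 0)
    (hB : (schurProd (derivative f) g₁).eval t = 0) : False := by
  set m₁ := g₁.natDegree with hm₁
  set Ghat : Polynomial ℝ := ∑ k ∈ Finset.range (m₁ + 1), C (g₁.coeff k * t^k) * X^k
    with hGhatdef
  have hGcoeff : ∀ j, Ghat.coeff j = g₁.coeff j * t^j := by
    intro j
    rw [hGhatdef, coeff_ranged_sum]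
    split_ifs with h
    · rfl
    · rw [coeff_eq_zero_of_natDegree_lt (by omega)]
      ring
  have hGtop : Ghat.coeff m₁ ≠ 0 := by
    rw [hGcoeff]
    exact mul_ne_zero (hg₁.coeff_ne (le_refl _)) (pow_ne_zero _ ht)
  have hGne : Ghat ≠ 0 := fun h => hGtop (by rw [h, coeff_zero])
  have hGdeg : Ghat.natDegree = m₁ := by
    apply le_antisymm
    · apply natDegree_le_iff_coeff_eq_zero.mpr
      intro j hj
      rw [hGcoeff, coeff_eq_zero_of_natDegree_lt (by omega), zero_mul]
    · exact le_natDegree_of_ne_zero hGtop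
  have hGeval : ∀ z : ℂ, (toC Ghat).eval z = (toC g₁).eval ((t:ℂ) * z) := by
    intro z
    rw [eval_eq_sum_range, eval_eq_sum_range, natDegree_toC, natDegree_toC, hGdeg]
    apply Finset.sum_congr rfl
    intro k _
    rw [coeff_toC, coeff_toC, hGcoeff]
    push_cast
    ring
  have hGrr : RealRooted Ghat := by
    refine ⟨hGne, fun z hz => ?_⟩
    have : (toC g₁).eval ((t:ℂ) * z) = 0 := by rw [← hGeval]; exact hz
    have him : ((t:ℂ) * z).im = 0 := hg₁.1.2 _ this
    rw [Complex.mul_im, Complex.ofReal_im, Complex.ofReal_re, zero_mul, add_zero] at him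
    rcases mul_eq_zero.mp him with h | h
    · exact absurd h ht
    · exact h
  have hG0 : Ghat.coeff 0 ≠ 0 := by
    rw [hGcoeff]
    simpa using hg₁.coeff_ne (Nat.zero_le _)
  -- value identities
  set p := Phi Ghat f with hpdef
  have hp0 : p.eval 0 = (schurProd f g₁).eval t := by
    rw [hpdef, Phi, hGdeg, eval_finset_sum]
    rw [schurProd_eval]
    rw [show ∑ k ∈ Finset.range (max f.natDegree g₁.natDegree + 1),
        (k.factorial : ℝ) * f.coeff k * g₁.coeff k * t ^ k
        = ∑ k ∈ Finset.range (m₁ + 1), (k.factorial : ℝ) * f.coeff k * g₁.coeff k * t ^ k from ?_]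
    · apply Finset.sum_congr rfl
      intro k _
      rw [eval_mul, eval_C, hGcoeff, iterate_derivative_eval_zero]
      ring
    · symm
      apply Finset.sum_subset (Finset.range_subset_range.mpr (by omega))
      intro k _ hk
      simp only [Finset.mem_range] at hk
      rw [coeff_eq_zero_of_natDegree_lt (p := g₁) (by omega)]
      ring
  have hp1 : (derivative p).eval 0 = (schurProd (derivative f) g₁).eval t := by
    rw [hpdef, Phi, hGdeg, derivative_sum, eval_finset_sum]
    rw [schurProd_eval]
    rw [show ∑ k ∈ Finset.range (max (derivative f).natDegree g₁.natDegree + 1),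
        (k.factorial : ℝ) * (derivative f).coeff k * g₁.coeff k * t ^ k
        = ∑ k ∈ Finset.range (m₁ + 1),
          (k.factorial : ℝ) * (derivative f).coeff k * g₁.coeff k * t ^ k from ?_]
    · apply Finset.sum_congr rfl
      intro k _
      rw [derivative_C_mul, eval_mul, eval_C, hGcoeff]
      rw [← Function.iterate_succ_apply' derivative k f, Function.iterate_succ_apply,
        iterate_derivative_eval_zero]
      ring
    · symm
      apply Finset.sum_subset (Finset.range_subset_range.mpr (by omega))
      intro k _ hk
      simp only [Finset.mem_range] at hk
      rw [coeff_eq_zero_of_natDegree_lt (p := g₁) (by omega)]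
      ring
  have := S3core Ghat.natDegree Ghat rfl hGrr hG0 f hf 0 (by rw [hp0]; exact hA)
    (by rw [hp1]; exact hB)
  rw [← coeff_zero_eq_eval_zero] at this
  exact hf0 this.1

end SchurAux

namespace SchurAux

lemma coeff_X_add_C_mul (θ : ℝ) (p : Polynomial ℝ) (j : ℕ) :
    ((X + C θ) * p).coeff j = (if j = 0 then 0 else p.coeff (j-1)) + θ * p.coeff j := by
  rw [add_mul, coeff_add, coeff_C_mul]
  rcases j with _ | j
  · simp [mul_coeff_zero]
  · simp [coeff_X_mul]

lemma T_split (θ : ℝ) (g₁ : Polynomial ℝ) (F : Polynomial ℂ) :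
    T ((X + C θ) * g₁) F = C ((θ:ℝ):ℂ) * T g₁ F + X * T g₁ (derivative F) := by
  ext j
  rw [T_coeff, coeff_add, coeff_C_mul, T_coeff, coeff_X_add_C_mul]
  rcases j with _ | j
  · simp only [if_pos rfl, zero_add]
    rw [show ((X : Polynomial ℂ) * T g₁ (derivative F)).coeff 0 = 0 from by
      rw [mul_coeff_zero, coeff_X_zero, zero_mul]]
    push_cast
    ring
  · rw [show ((X : Polynomial ℂ) * T g₁ (derivative F)).coeff (j+1)
      = (T g₁ (derivative F)).coeff j from coeff_X_mul _ _]
    rw [T_coeff, coeff_derivative]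
    simp only [Nat.succ_ne_zero, if_false, Nat.add_sub_cancel]
    rw [Nat.factorial_succ]
    push_cast
    ring

lemma qkey {g₁ f : Polynomial ℝ} (hg₁0 : g₁.coeff 0 ≠ 0) (hf : RealRooted f)
    {w x : ℂ} (hw : 0 ≤ w.im) (hx : 0 < x.im)
    (HIH : ∀ y : ℂ, 0 < y.im → (T g₁ ((toC f).comp (X + C (w + y))) = 0) ∨
      ((T g₁ ((toC f).comp (X + C (w + y)))).eval x ≠ 0))
    (hA : (T g₁ ((toC f).comp (X + C w))).eval x ≠ 0) :
    ((T g₁ (derivative ((toC f).comp (X + C w)))).eval x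
      * (starRingEnd ℂ) ((T g₁ ((toC f).comp (X + C w))).eval x)).im ≤ 0 := by
  set F := (toC f).comp (X + C w) with hFdef
  set q : Polynomial ℂ := ∑ k ∈ Finset.range (g₁.natDegree + 1),
    C ((k.factorial : ℂ) * (g₁.coeff k : ℂ) * x^k) * (Polynomial.hasseDeriv k F) with hqdef
  have hqeval : ∀ y : ℂ, q.eval y = (T g₁ (F.comp (X + C y))).eval x := by
    intro y
    rw [hqdef, eval_finset_sum, T_eval]
    apply Finset.sum_congr rfl
    intro k _
    rw [eval_mul, eval_C]
    rw [show F.comp (X + C y) = Polynomial.taylor y F from (taylor_apply y F).symm, taylor_coeff]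
    ring
  have hq0 : q.eval 0 = (T g₁ F).eval x := by
    rw [hqeval 0]
    congr 2
    rw [map_zero, add_zero, comp_X]
  have hq0' : q.eval 0 ≠ 0 := by rw [hq0]; exact hA
  have hqne : q ≠ 0 := fun h => hq0' (by rw [h, eval_zero])
  have hqd : (derivative q).eval 0 = (T g₁ (derivative F)).eval x := by
    rw [hqdef, derivative_sum, eval_finset_sum, T_eval]
    apply Finset.sum_congr rfl
    intro k _
    rw [derivative_C_mul, eval_mul, eval_C, ← coeff_zero_eq_eval_zero, coeff_derivative,
      hasseDeriv_coeff, coeff_derivative]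
    have hch : (0 + 1 + k).choose k = k + 1 := by
      rw [show 0 + 1 + k = k + 1 from by omega]
      exact Nat.choose_succ_self_right k
    rw [hch]
    push_cast
    ring
  have hroots : ∀ y, q.IsRoot y → y.im ≤ 0 := by
    intro y hy
    by_contra him
    push_neg at him
    have hcomp : F.comp (X + C y) = (toC f).comp (X + C (w + y)) := by
      rw [hFdef, comp_assoc]
      congr 1
      rw [add_comp, X_comp, C_comp, C_add]
      ring
    have hzero : q.eval y = 0 := hy
    rw [hqeval y, hcomp] at hzero
    rcases HIH y him with hT | hne
    · have hc := congrArg (fun p : Polynomial ℂ => p.coeff 0) hT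
      simp only [coeff_zero] at hc
      rw [T_coeff] at hc
      have hgk : ((g₁.coeff 0 : ℝ):ℂ) ≠ 0 := by exact_mod_cast hg₁0
      have h3 : ((toC f).comp (X + C (w + y))).coeff 0 = 0 := by
        rcases mul_eq_zero.mp hc with h | h
        · rcases mul_eq_zero.mp h with h' | h'
          · exact absurd h' (by norm_num)
          · exact absurd h' hgk
        · exact h
      rw [coeff_zero_eq_eval_zero, eval_comp] at h3
      simp only [eval_add, eval_X, eval_C, zero_add] at h3
      have h4 : (w + y).im = 0 := hf.2 _ h3
      rw [Complex.add_im] at h4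
      linarith
    · exact hne hzero
  have hLq := Lq q.natDegree q rfl hqne hroots hq0'
  rw [hqd, hq0] at hLq
  exact hLq

/-- The master stability lemma. -/
lemma master : ∀ n : ℕ, ∀ g : Polynomial ℝ, g.natDegree = n → NegRR g →
    ∀ f : Polynomial ℝ, RealRooted f → ∀ w : ℂ, 0 ≤ w.im → ∀ x : ℂ, 0 < x.im →
    T g ((toC f).comp (X + C w)) = 0 ∨ (T g ((toC f).comp (X + C w))).eval x ≠ 0 := by
  intro n
  induction n using Nat.strong_induction_on with
  | _ n IH =>
    intro g hdeg hg f hf w hw x hx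
    have hxne : x ≠ 0 := fun h => by rw [h] at hx; simp at hx
    set F := (toC f).comp (X + C w) with hFdef
    have hF0 : F.coeff 0 = (toC f).eval w := by
      rw [coeff_zero_eq_eval_zero, hFdef, eval_comp]
      simp
    rcases Nat.eq_zero_or_pos n with rfl | hn
    · by_cases hfw : (toC f).eval w = 0
      · left
        ext j
        rw [T_coeff, coeff_zero]
        rcases j with _ | j
        · rw [hF0, hfw]; ring
        · rw [coeff_eq_zero_of_natDegree_lt (p := g) (by omega)]
          push_cast
          ring
      · right
        rw [T_eval, hdeg, Finset.sum_range_one]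
        simp only [pow_zero, mul_one, Nat.factorial_zero, Nat.cast_one, one_mul]
        rw [hF0]
        exact mul_ne_zero (by exact_mod_cast hg.coeff_ne (by omega)) hfw
    · obtain ⟨θ, hθ, g₁, hgfact, hg₁, hdeg₁, _⟩ := hg.peel (by omega)
      have IH₁ : ∀ w' : ℂ, 0 ≤ w'.im →
          T g₁ ((toC f).comp (X + C w')) = 0 ∨
            (T g₁ ((toC f).comp (X + C w'))).eval x ≠ 0 :=
        fun w' hw' => IH g₁.natDegree (by omega) g₁ rfl hg₁ f hf w' hw' x hx
      have hsplit : T g F = C ((θ:ℝ):ℂ) * T g₁ F + X * T g₁ (derivative F) := by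
        rw [hgfact]; exact T_split θ g₁ F
      rcases IH₁ w hw with hT0 | hAne
      · -- `T g₁ F = 0` : all low coefficients of `F` vanish
        have hFk : ∀ k ≤ g₁.natDegree, F.coeff k = 0 := by
          intro k hk
          have hc := congrArg (fun p : Polynomial ℂ => p.coeff k) hT0
          simp only [coeff_zero] at hc
          rw [T_coeff] at hc
          have hgk : ((g₁.coeff k : ℝ):ℂ) ≠ 0 := by exact_mod_cast hg₁.coeff_ne hk
          rcases mul_eq_zero.mp hc with h | h
          · rcases mul_eq_zero.mp h with h' | h'
            · exact absurd h' (by exact_mod_cast k.factorial_ne_zero)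
            · exact absurd h' hgk
          · exact h
        have hTg : T g F = C ((n.factorial : ℂ) * (g.coeff n : ℂ) * F.coeff n) * X ^ n := by
          ext j
          rw [T_coeff, coeff_C_mul, coeff_X_pow]
          by_cases hj : j = n
          · subst hj; simp
          · simp only [hj, if_false, mul_zero]
            rcases lt_or_gt_of_ne hj with hlt | hgt
            · rw [hFk j (by omega)]; ring
            · rw [coeff_eq_zero_of_natDegree_lt (p := g) (by omega)]
              push_cast
              ring
        by_cases hFn : F.coeff n = 0
        · left
          rw [hTg, hFn]
          simp
        · right
          rw [hTg, eval_mul, eval_C, eval_pow, eval_X]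
          refine mul_ne_zero (mul_ne_zero (mul_ne_zero ?_ ?_) hFn) (pow_ne_zero _ hxne)
          · exact_mod_cast n.factorial_ne_zero
          · exact_mod_cast hg.coeff_ne (by omega)
      · -- main case
        right
        intro hzero
        have HIH : ∀ y : ℂ, 0 < y.im → (T g₁ ((toC f).comp (X + C (w + y))) = 0) ∨
            ((T g₁ ((toC f).comp (X + C (w + y)))).eval x ≠ 0) := by
          intro y hy
          apply IH₁ (w + y)
          rw [Complex.add_im]
          linarith
        have him := qkey (hg₁.coeff_ne (Nat.zero_le _)) hf hw hx HIH hAne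
        rw [hsplit, eval_add, eval_mul, eval_mul, eval_C, eval_X] at hzero
        set Av := (T g₁ F).eval x with hAv
        set Bv := (T g₁ (derivative F)).eval x with hBv
        have hBveq : Bv = -((θ:ℝ):ℂ) * Av * x⁻¹ := by
          field_simp
          linear_combination hzero
          
        rw [hBveq, show -((θ:ℝ):ℂ) * Av * x⁻¹ * (starRingEnd ℂ) Av
          = -((θ:ℝ):ℂ) * x⁻¹ * (Av * (starRingEnd ℂ) Av) from by ring,
          Complex.mul_conj] at him
        have hexp : (-((θ:ℝ):ℂ) * x⁻¹ * ((Complex.normSq Av : ℝ) : ℂ)).im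
            = -θ * ((x⁻¹).im * Complex.normSq Av) := by
          simp only [Complex.mul_im, Complex.mul_re, Complex.ofReal_re, Complex.ofReal_im,
            Complex.neg_re, Complex.neg_im, neg_zero, zero_mul, mul_zero, add_zero, zero_add,
            sub_zero]
          ring
        rw [hexp] at him
        have hs : 0 < Complex.normSq Av := Complex.normSq_pos.mpr hAne
        have hnx : 0 < Complex.normSq x := Complex.normSq_pos.mpr hxne
        have h5 : (x⁻¹).im < 0 := by
          rw [Complex.inv_im]
          exact div_neg_of_neg_of_pos (by linarith) hnx
        have h6 : (x⁻¹).im * Complex.normSq Av < 0 := mul_neg_of_neg_of_pos h5 hs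
        nlinarith [him, h6, hθ]

end SchurAux

namespace SchurAux

lemma comp_X_zero (p : Polynomial ℂ) : p.comp (X + C 0) = p := by
  rw [map_zero, add_zero, comp_X]

/-- Part 1 of Schur's theorem, for `g` with all roots negative. -/
lemma part1 {f g : Polynomial ℝ} (hf : RealRooted f) (hg : NegRR g) :
    schurProd f g = 0 ∨ RealRooted (schurProd f g) := by
  have hmap : toC (schurProd f g) = T g (toC f) := map_schurProd f g
  have key : ∀ x : ℂ, 0 < x.im →
      T g (toC f) = 0 ∨ (T g (toC f)).eval x ≠ 0 := by
    intro x hx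
    have := master g.natDegree g rfl hg f hf 0 (by simp) x hx
    rwa [comp_X_zero] at this
  by_cases h0 : schurProd f g = 0
  · exact Or.inl h0
  right
  refine ⟨h0, fun z hz => ?_⟩
  have hT : toC (schurProd f g) ≠ 0 := toC_ne_zero h0
  have key2 : ∀ x : ℂ, 0 < x.im → (toC (schurProd f g)).eval x ≠ 0 := by
    intro x hx
    have := key x hx
    rw [← hmap] at this
    exact this.resolve_left hT
  have hzero : (toC (schurProd f g)).eval z = 0 := hz
  rcases lt_trichotomy z.im 0 with hlt | heq | hgt
  · exfalso
    apply key2 ((starRingEnd ℂ) z) (by simpa using by linarith)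
    rw [toC_conj, hzero]
    simp
  · exact heq
  · exact absurd hzero (key2 z hgt)

/-- The half-plane inequality for the pair `(f ⊙ g₁, f' ⊙ g₁)`. -/
lemma I1 {f g₁ : Polynomial ℝ} (hf : RealRooted f) (hg₁ : NegRR g₁) (x : ℂ) (hx : 0 < x.im) :
    ((toC (schurProd (derivative f) g₁)).eval x
      * (starRingEnd ℂ) ((toC (schurProd f g₁)).eval x)).im ≤ 0 := by
  have hmapA : toC (schurProd f g₁) = T g₁ (toC f) := map_schurProd f g₁
  have hmapB : toC (schurProd (derivative f) g₁) = T g₁ (derivative (toC f)) := by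
    rw [map_schurProd, derivative_toC]
  rw [hmapA, hmapB]
  by_cases hA : (T g₁ (toC f)).eval x = 0
  · rw [hA]
    simp
  · have HIH : ∀ y : ℂ, 0 < y.im → (T g₁ ((toC f).comp (X + C ((0:ℂ) + y))) = 0) ∨
        ((T g₁ ((toC f).comp (X + C ((0:ℂ) + y)))).eval x ≠ 0) := by
      intro y hy
      exact master g₁.natDegree g₁ rfl hg₁ f hf (0 + y) (by simpa using le_of_lt hy) x hx
    have := qkey (hg₁.coeff_ne (Nat.zero_le _)) hf (by simp : (0:ℝ) ≤ (0:ℂ).im) hx HIH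
      (by rwa [comp_X_zero])
    rwa [comp_X_zero] at this

/-- From a polynomial inequality on a right neighbourhood of `0`, bound the derivative. -/
lemma ANA {E : Polynomial ℝ} (h0 : E.eval 0 = 0) (hle : ∀ ε : ℝ, 0 < ε → E.eval ε ≤ 0) :
    (derivative E).eval 0 ≤ 0 := by
  by_contra hd
  push_neg at hd
  have hD : HasDerivAt (fun t : ℝ => E.eval t) ((derivative E).eval 0) 0 :=
    E.hasDerivAt 0
  have hslope := hasDerivAt_iff_tendsto_slope.mp hD
  have hev : ∀ᶠ t in nhdsWithin 0 {(0:ℝ)}ᶜ,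
      slope (fun t : ℝ => E.eval t) 0 t ∈ Set.Ioi (0:ℝ) :=
    hslope.eventually (isOpen_Ioi.eventually_mem hd)
  have hsub : Set.Ioi (0:ℝ) ⊆ {(0:ℝ)}ᶜ := by
    intro t ht
    simp only [Set.mem_compl_iff, Set.mem_singleton_iff]
    exact ne_of_gt ht
  have hev2 : ∀ᶠ t in nhdsWithin 0 (Set.Ioi (0:ℝ)),
      slope (fun t : ℝ => E.eval t) 0 t ∈ Set.Ioi (0:ℝ) :=
    hev.filter_mono (nhdsWithin_mono 0 hsub)
  have hne : (nhdsWithin (0:ℝ) (Set.Ioi (0:ℝ))).NeBot := nhdsGT_neBot 0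
  obtain ⟨t, hts, htI⟩ := (hev2.and eventually_mem_nhdsWithin).exists
  have ht0 : 0 < t := htI
  have : 0 < slope (fun t : ℝ => E.eval t) 0 t := hts
  rw [slope_def_field] at this
  simp only [h0, sub_zero] at this
  have hEt : 0 < E.eval t := by
    rcases div_pos_iff.mp this with ⟨h1, _⟩ | ⟨_, h2⟩
    · exact h1
    · linarith
  linarith [hle t ht0]

end SchurAux

namespace SchurAux

/-- The Wronskian inequality derived from the half-plane inequality. -/
lemma WRON {A B : Polynomial ℝ}
    (hIm : ∀ x : ℂ, 0 < x.im → ((toC B).eval x * (starRingEnd ℂ) ((toC A).eval x)).im ≤ 0)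
    (t : ℝ) :
    (derivative B).eval t * A.eval t - B.eval t * (derivative A).eval t ≤ 0 := by
  set l₁ : Polynomial ℂ := C (t:ℂ) + C Complex.I * X with hl₁
  set l₂ : Polynomial ℂ := C (t:ℂ) - C Complex.I * X with hl₂
  set P : Polynomial ℂ := ((toC B).comp l₁) * ((toC A).comp l₂) with hP
  have hl₁e : ∀ ε : ℝ, l₁.eval (ε:ℂ) = (t:ℂ) + Complex.I * ε := by
    intro ε; rw [hl₁]; simp
  have hl₂e : ∀ ε : ℝ, l₂.eval (ε:ℂ) = (t:ℂ) - Complex.I * ε := by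
    intro ε; rw [hl₂]; simp
  have hPe : ∀ ε : ℝ, P.eval (ε:ℂ)
      = (toC B).eval ((t:ℂ) + Complex.I * ε) * (toC A).eval ((t:ℂ) - Complex.I * ε) := by
    intro ε; rw [hP, eval_mul, eval_comp, eval_comp, hl₁e, hl₂e]
  have hconjpt : ∀ ε : ℝ, (starRingEnd ℂ) ((t:ℂ) + Complex.I * ε) = (t:ℂ) - Complex.I * ε := by
    intro ε
    simp [Complex.ext_iff]
  have hPim : ∀ ε : ℝ, 0 < ε → (P.eval (ε:ℂ)).im ≤ 0 := by
    intro ε hε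
    rw [hPe, ← hconjpt, toC_conj]
    apply hIm
    simp [hε]
  set E : Polynomial ℝ := ∑ k ∈ Finset.range (P.natDegree + 1), C ((P.coeff k).im) * X^k
    with hE
  have hEe : ∀ ε : ℝ, E.eval ε = (P.eval (ε:ℂ)).im := by
    intro ε
    rw [eval_eq_sum_range (x := (ε:ℂ))]
    rw [Complex.im_sum]
    rw [hE, eval_finset_sum]
    apply Finset.sum_congr rfl
    intro k _
    rw [eval_mul, eval_C, eval_pow, eval_X,
      show ((ε:ℂ))^k = ((ε^k : ℝ) : ℂ) from by push_cast; ring, Complex.mul_im,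
      Complex.ofReal_im, Complex.ofReal_re]
    ring
  have hE0 : E.eval 0 = 0 := by
    rw [show (0:ℝ) = ((0:ℝ):ℝ) from rfl, hEe 0]
    rw [hPe 0]
    push_cast
    rw [mul_zero, add_zero, sub_zero, eval_toC_real, eval_toC_real, ← Complex.ofReal_mul]
    exact Complex.ofReal_im _
  have hEle : ∀ ε : ℝ, 0 < ε → E.eval ε ≤ 0 := fun ε hε => by
    rw [hEe]; exact hPim ε hε
  have hANA := ANA hE0 hEle
  have hEc : (derivative E).eval 0 = (P.coeff 1).im := by
    rw [← coeff_zero_eq_eval_zero, coeff_derivative]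
    rw [hE, coeff_ranged_sum]
    split_ifs with h
    · push_cast; ring
    · rw [coeff_eq_zero_of_natDegree_lt (by omega)]
      simp
  have hP1 : (P.coeff 1 : ℂ) = (derivative P).eval 0 := by
    rw [← coeff_zero_eq_eval_zero, coeff_derivative]
    push_cast
    ring
  have hdl₁ : derivative l₁ = C Complex.I := by rw [hl₁]; simp
  have hdl₂ : derivative l₂ = -C Complex.I := by rw [hl₂]; simp
  have hl₁0 : l₁.eval 0 = (t:ℂ) := by rw [hl₁]; simp
  have hl₂0 : l₂.eval 0 = (t:ℂ) := by rw [hl₂]; simp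
  have hdP : (derivative P).eval 0
      = Complex.I * ((((derivative B).eval t : ℝ) : ℂ) * ((A.eval t : ℝ) : ℂ))
        - Complex.I * (((B.eval t : ℝ) : ℂ) * (((derivative A).eval t : ℝ) : ℂ)) := by
    rw [hP, derivative_mul, derivative_comp, derivative_comp, hdl₁, hdl₂]
    rw [eval_add, eval_mul, eval_mul, eval_mul, eval_mul, eval_neg, eval_C, eval_comp,
      eval_comp, eval_comp, eval_comp, hl₁0, hl₂0]
    rw [derivative_toC, derivative_toC, eval_toC_real, eval_toC_real, eval_toC_real,
      eval_toC_real]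
    ring
  rw [hEc] at hANA
  have him : (P.coeff 1).im
      = (derivative B).eval t * A.eval t - B.eval t * (derivative A).eval t := by
    rw [hP1, hdP, ← Complex.ofReal_mul, ← Complex.ofReal_mul, ← mul_sub, ← Complex.ofReal_sub]
    simp
  rw [him] at hANA
  exact hANA

end SchurAux

namespace SchurAux

lemma schur_split (θ : ℝ) (g₁ f : Polynomial ℝ) :
    schurProd f ((X + C θ) * g₁)
      = C θ * schurProd f g₁ + X * schurProd (derivative f) g₁ := by
  ext j
  rw [schurProd_coeff, coeff_add, coeff_C_mul, schurProd_coeff, coeff_X_add_C_mul]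
  rcases j with _ | j
  · rw [show ((X : Polynomial ℝ) * schurProd (derivative f) g₁).coeff 0 = 0 from by
      rw [mul_coeff_zero, coeff_X_zero, zero_mul]]
    push_cast
    ring
  · rw [show ((X : Polynomial ℝ) * schurProd (derivative f) g₁).coeff (j+1)
      = (schurProd (derivative f) g₁).coeff j from coeff_X_mul _ _]
    rw [schurProd_coeff, coeff_derivative]
    simp only [Nat.succ_ne_zero, if_false, Nat.add_sub_cancel]
    rw [Nat.factorial_succ]
    push_cast
    ring

/-- Core simplicity lemma: `schurProd f g` has no multiple root `t ≠ 0` when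
`f(0) ≠ 0`. -/
lemma SIMP {f g : Polynomial ℝ} (hf : RealRooted f) (hf0 : f.coeff 0 ≠ 0) (hg : NegRR g)
    {t : ℝ} (ht : t ≠ 0) (h1 : (schurProd f g).eval t = 0)
    (h2 : (derivative (schurProd f g)).eval t = 0) : False := by
  rcases Nat.eq_zero_or_pos g.natDegree with h0 | hpos
  · -- constant case : the Schur product is the nonzero constant a₀b₀
    have : (schurProd f g).eval t = f.coeff 0 * g.coeff 0 := by
      rw [schurProd_eval]
      rw [Finset.sum_eq_single 0]
      · simp
      · intro b _ hb
        rw [coeff_eq_zero_of_natDegree_lt (p := g) (by omega)]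
        ring
      · intro h
        simp at h
    rw [h1] at this
    exact (mul_ne_zero hf0 (hg.coeff_ne (by omega))).symm this
  · obtain ⟨θ, hθ, g₁, hgfact, hg₁, hdeg₁, _⟩ := hg.peel (by omega)
    set A := schurProd f g₁ with hA
    set B := schurProd (derivative f) g₁ with hB
    have hsplit : schurProd f g = C θ * A + X * B := by
      rw [hgfact, schur_split]
    have e1 : θ * A.eval t + t * B.eval t = 0 := by
      rw [hsplit] at h1
      simpa using h1
    have e2 : θ * (derivative A).eval t + B.eval t + t * (derivative B).eval t = 0 := by
      rw [hsplit] at h2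
      rw [derivative_add, derivative_C_mul, derivative_mul, derivative_X] at h2
      simp only [eval_add, eval_mul, eval_C, eval_X, one_mul] at h2
      linarith
    by_cases hAt : A.eval t = 0
    · have hBt : B.eval t = 0 := by
        rw [hAt] at e1
        have : t * B.eval t = 0 := by linarith
        exact (mul_eq_zero.mp this).resolve_left ht
      exact S3 hf hf0 hg₁ ht hAt hBt
    · have hW : (derivative B).eval t * A.eval t - B.eval t * (derivative A).eval t ≤ 0 := by
        apply WRON (fun x hx => ?_) t
        have := I1 hf hg₁ x hx
        rwa [hA, hB]
      have hkey : t^2 * ((derivative B).eval t * A.eval t - B.eval t * (derivative A).eval t)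
          = θ * (A.eval t)^2 := by
        linear_combination (t * A.eval t) * e2 - (t * (derivative A).eval t + A.eval t) * e1
      nlinarith [hW, hθ, sq_nonneg t, sq_nonneg (A.eval t),
        (by positivity : (0:ℝ) < (A.eval t)^2), sq_nonneg (t * A.eval t)]

end SchurAux

namespace SchurAux

noncomputable def mir (p : Polynomial ℝ) : Polynomial ℝ :=
  ∑ k ∈ Finset.range (p.natDegree + 1), C ((-1)^k * p.coeff k) * X^k

lemma mir_coeff (p : Polynomial ℝ) (j : ℕ) : (mir p).coeff j = (-1)^j * p.coeff j := by
  rw [mir, coeff_ranged_sum]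
  split_ifs with h
  · rfl
  · rw [coeff_eq_zero_of_natDegree_lt (by omega)]
    ring

lemma mir_natDegree_le (p : Polynomial ℝ) : (mir p).natDegree ≤ p.natDegree := by
  apply natDegree_le_iff_coeff_eq_zero.mpr
  intro j hj
  rw [mir_coeff, coeff_eq_zero_of_natDegree_lt hj]
  ring

lemma mir_ne_zero {p : Polynomial ℝ} (hp : p ≠ 0) : mir p ≠ 0 := by
  intro h
  apply leadingCoeff_ne_zero.mpr hp
  have := congrArg (fun q : Polynomial ℝ => q.coeff p.natDegree) h
  simp only [mir_coeff, coeff_zero] at this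
  rcases mul_eq_zero.mp this with h' | h'
  · exact absurd h' (by positivity)
  · exact h'

lemma mir_eval_toC (p : Polynomial ℝ) (z : ℂ) :
    (toC (mir p)).eval z = (toC p).eval (-z) := by
  rw [eval_eq_sum_range' (n := p.natDegree + 1)
      (by rw [natDegree_toC]; exact lt_of_le_of_lt (mir_natDegree_le p) (by omega)),
    eval_eq_sum_range' (n := p.natDegree + 1) (by rw [natDegree_toC]; omega)]
  apply Finset.sum_congr rfl
  intro k _
  rw [coeff_toC, coeff_toC, mir_coeff]
  push_cast
  ring

lemma mir_realRooted {p : Polynomial ℝ} (hp : RealRooted p) : RealRooted (mir p) := by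
  refine ⟨mir_ne_zero hp.1, fun z hz => ?_⟩
  have : (toC p).eval (-z) = 0 := by
    rw [← mir_eval_toC]
    exact hz
  have := hp.2 (-z) this
  simpa using this

lemma mir_isRoot {p : Polynomial ℝ} {θ : ℝ} (h : (mir p).IsRoot θ) : p.IsRoot (-θ) := by
  have h1 : (toC (mir p)).eval (θ:ℂ) = 0 := by
    rw [eval_toC_real]
    exact_mod_cast h
  rw [mir_eval_toC] at h1
  have : (toC p).eval ((-θ : ℝ) : ℂ) = 0 := by
    rw [show ((-θ : ℝ):ℂ) = -(θ:ℂ) from by push_cast; ring]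
    exact h1
  rw [eval_toC_real] at this
  exact_mod_cast this

lemma mir_schurProd (f g : Polynomial ℝ) : schurProd (mir f) (mir g) = schurProd f g := by
  ext j
  rw [schurProd_coeff, schurProd_coeff, mir_coeff, mir_coeff]
  have h : ((-1:ℝ))^j * ((-1:ℝ))^j = 1 := by
    rw [← mul_pow]
    norm_num
  linear_combination ((j.factorial : ℝ) * f.coeff j * g.coeff j) * h

/-- Reduction to the NegRR case. -/
lemma reduce {f g : Polynomial ℝ} (hf : RealRooted f) (hg : RealRooted g)
    (hsign : (∀ θ : ℝ, g.IsRoot θ → 0 < θ) ∨ (∀ θ : ℝ, g.IsRoot θ → θ < 0)) :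
    ∃ f' g' : Polynomial ℝ, RealRooted f' ∧ NegRR g' ∧
      schurProd f g = schurProd f' g' ∧ f'.coeff 0 = f.coeff 0 ∧ g'.coeff 0 = g.coeff 0 := by
  rcases hsign with hpos | hneg
  · refine ⟨mir f, mir g, mir_realRooted hf, ⟨mir_realRooted hg, ?_⟩,
      (mir_schurProd f g).symm, ?_, ?_⟩
    · intro θ hθ
      have := hpos (-θ) (mir_isRoot hθ)
      linarith
    · rw [mir_coeff]; ring
    · rw [mir_coeff]; ring
  · exact ⟨f, g, hf, ⟨hg, hneg⟩, rfl, rfl, rfl⟩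

end SchurAux

open SchurAux in
/-- **Schur's theorem.** If `f` and `g` are real-rooted and all zeros of `g` are nonzero and of
one fixed sign, then `f ⊙ g` is real-rooted or identically zero; moreover if `a₀ b₀ ≠ 0` then
all zeros of `f ⊙ g` are distinct. -/
theorem schur_product_real_rooted (f g : Polynomial ℝ)
    (hf : RealRooted f) (hg : RealRooted g)
    (hsign : (∀ θ : ℝ, g.IsRoot θ → 0 < θ) ∨ (∀ θ : ℝ, g.IsRoot θ → θ < 0)) :
    (schurProd f g = 0 ∨ RealRooted (schurProd f g)) ∧
    (f.coeff 0 * g.coeff 0 ≠ 0 →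
      RealRooted (schurProd f g) ∧ ∀ θ : ℝ, ¬ ((X - C θ) ^ 2 ∣ schurProd f g)) := by
  obtain ⟨f', g', hf', hg', heq, hc0f, hc0g⟩ := reduce hf hg hsign
  constructor
  · rw [heq]
    exact part1 hf' hg'
  · intro hne
    have hcoeff0 : (schurProd f g).coeff 0 = f.coeff 0 * g.coeff 0 := by
      rw [schurProd_coeff]
      simp
    have hne0 : schurProd f g ≠ 0 := by
      intro h
      rw [h, coeff_zero] at hcoeff0
      exact hne hcoeff0.symm
    have hrr : RealRooted (schurProd f g) := by
      rcases part1 hf' hg' with h | h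
      · exact absurd (heq.trans h) hne0
      · rw [heq]; exact h
    refine ⟨hrr, fun t hdvd => ?_⟩
    obtain ⟨u, hu⟩ := hdvd
    have hev1 : (schurProd f g).eval t = 0 := by
      rw [hu]
      simp
    have hev2 : (derivative (schurProd f g)).eval t = 0 := by
      rw [hu, derivative_mul, derivative_pow, derivative_sub, derivative_X, derivative_C]
      simp
    by_cases ht : t = 0
    · subst ht
      rw [← coeff_zero_eq_eval_zero, hcoeff0] at hev1
      exact hne hev1
    · have hf0' : f'.coeff 0 ≠ 0 := by
        rw [hc0f]
        exact fun h => hne (by rw [h, zero_mul])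
      rw [heq] at hev1 hev2
      exact SIMP hf' hf0' hg' ht hev1 hev2
end

section
/- Let f₀, f₁, …, fₙ be a sequence of standard real polynomials with deg fᵢ = i for 0 ≤ i ≤ n. Then the following are equivalent: (i) the sequence is a Sturm sequence, i.e. whenever 1 ≤ i ≤ n−1 and fᵢ(θ) = 0 for some θ ∈ ℝ, one has f_{i−1}(θ) f_{i+1}(θ) < 0; (ii) each fᵢ is real-rooted with simple zeros and f₀ ≺ f₁ ≺ ⋯ ≺ fₙ. -/
open Polynomial

/-- Real-rooted with all zeros simple. -/
def SimpleRooted (f : Polynomial ℝ) : Prop :=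
  RealRooted f ∧ ∀ θ : ℝ, ¬ ((X - C θ) ^ 2 ∣ f)

/-- A real polynomial is standard if its leading coefficient is positive. -/
def Standard (f : Polynomial ℝ) : Prop := 0 < f.leadingCoeff

/-- The zeros of `f`, listed in increasing order (with multiplicity). -/
noncomputable def sortedRoots (f : Polynomial ℝ) : List ℝ :=
  f.roots.sort (· ≤ ·)

/-- `g ≺ f`: strict interlacing. `deg f = deg g + 1` and, listing the zeros of `f` as
`α₁ < ⋯ < α_d` and of `g` as `β₁ < ⋯ < β_{d-1}`, we have `α₁ < β₁ < α₂ < ⋯ < β_{d-1} < α_d`. -/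
def StrictInterlaces (g f : Polynomial ℝ) : Prop :=
  RealRooted f ∧ RealRooted g ∧ f.natDegree = g.natDegree + 1 ∧
  ∀ i, i < g.natDegree →
    (sortedRoots f).getD i 0 < (sortedRoots g).getD i 0 ∧
    (sortedRoots g).getD i 0 < (sortedRoots f).getD (i + 1) 0



open Filter


lemma aux_coe_ofFn {d : ℕ} (x : Fin d → ℝ) :
    (↑(List.ofFn x) : Multiset ℝ) = Multiset.map x (Finset.univ : Finset (Fin d)).val := by
  rw [List.ofFn_eq_map]
  rfl

lemma aux_count_filter {d k : ℕ} (x : Fin d → ℝ) (θ : ℝ) (hk : k ≤ d)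
    (hlt : ∀ j : Fin d, (j : ℕ) < k → x j < θ)
    (hgt : ∀ j : Fin d, k ≤ (j : ℕ) → θ < x j) :
    Multiset.card (Multiset.filter (fun r => θ < r) (↑(List.ofFn x) : Multiset ℝ)) = d - k := by
  rw [aux_coe_ofFn, ← Multiset.countP_eq_card_filter, Multiset.countP_map,
    ← Finset.filter_val, ← Finset.card_def]
  have hiff : ∀ j : Fin d, (θ < x j) ↔ k ≤ (j : ℕ) := by
    intro j
    constructor
    · intro h
      by_contra hc
      exact absurd h (not_lt.mpr (hlt j (not_le.mp hc)).le)
    · exact hgt j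
  rcases lt_or_eq_of_le hk with hkd | rfl
  · have : (Finset.univ.filter fun j : Fin d => θ < x j) = Finset.Ici (⟨k, hkd⟩ : Fin d) := by
      ext j
      simp [hiff j, Fin.le_def]
    rw [this, Fin.card_Ici]
  · rw [Finset.filter_false_of_mem, Finset.card_empty, Nat.sub_self]
    intro j _
    exact fun h => absurd ((hiff j).mp h) (not_le.mpr j.isLt)

lemma aux_ne_of_count {d k : ℕ} (x : Fin d → ℝ) (θ : ℝ)
    (hlt : ∀ j : Fin d, (j : ℕ) < k → x j < θ)
    (hgt : ∀ j : Fin d, k ≤ (j : ℕ) → θ < x j) :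
    ∀ r ∈ (↑(List.ofFn x) : Multiset ℝ), r ≠ θ := by
  intro r hr
  rw [Multiset.mem_coe, List.mem_ofFn] at hr
  obtain ⟨j, rfl⟩ := hr
  rcases lt_or_ge (j : ℕ) k with h | h
  · exact ne_of_lt (hlt j h)
  · exact ne_of_gt (hgt j h)

lemma aux_sign (g : Polynomial ℝ) (hstd : 0 < g.leadingCoeff)
    (hcard : Multiset.card g.roots = g.natDegree) (θ : ℝ)
    (hne : ∀ r ∈ g.roots, r ≠ θ) :
    0 < (-1 : ℝ) ^ (Multiset.card (g.roots.filter (fun r => θ < r))) * g.eval θ := by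
  have hfact := Polynomial.C_leadingCoeff_mul_prod_multiset_X_sub_C hcard
  have heval : g.eval θ = g.leadingCoeff * ((g.roots.map (fun r => θ - r)).prod) := by
    conv_lhs => rw [← hfact]
    rw [eval_mul, eval_C, eval_multiset_prod, Multiset.map_map]
    simp
  set s := g.roots with hs
  set m := Multiset.card (s.filter (fun r => θ < r)) with hm
  have hsplit : s.filter (fun r => θ < r) + s.filter (fun r => ¬ θ < r) = s :=
    Multiset.filter_add_not _ s
  have hprod : (s.map (fun r => θ - r)).prod =
      ((s.filter (fun r => θ < r)).map (fun r => θ - r)).prod *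
      ((s.filter (fun r => ¬ θ < r)).map (fun r => θ - r)).prod := by
    conv_lhs => rw [← hsplit]
    rw [Multiset.map_add, Multiset.prod_add]
  have hP1 : 0 < (-1 : ℝ) ^ m * ((s.filter (fun r => θ < r)).map (fun r => θ - r)).prod := by
    have hneg : (Multiset.map Neg.neg ((s.filter (fun r => θ < r)).map (fun r => θ - r))) =
        (s.filter (fun r => θ < r)).map (fun r => r - θ) := by
      rw [Multiset.map_map]; congr 1; ext r; simp
    have := Multiset.prod_map_neg ((s.filter (fun r => θ < r)).map (fun r => θ - r))
    rw [hneg, Multiset.card_map] at this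
    rw [← hm] at this
    rw [← this]
    apply Multiset.prod_pos
    intro a ha
    rw [Multiset.mem_map] at ha
    obtain ⟨r, hr, rfl⟩ := ha
    rw [Multiset.mem_filter] at hr
    exact sub_pos.mpr hr.2
  have hP2 : 0 < ((s.filter (fun r => ¬ θ < r)).map (fun r => θ - r)).prod := by
    apply Multiset.prod_pos
    intro a ha
    rw [Multiset.mem_map] at ha
    obtain ⟨r, hr, rfl⟩ := ha
    rw [Multiset.mem_filter] at hr
    have : r ≠ θ := hne r hr.1
    have : r < θ := lt_of_le_of_ne (not_lt.mp hr.2) this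
    exact sub_pos.mpr this
  rw [heval, hprod]
  have : (-1:ℝ) ^ m * (g.leadingCoeff * (((s.filter (fun r => θ < r)).map (fun r => θ - r)).prod *
      ((s.filter (fun r => ¬ θ < r)).map (fun r => θ - r)).prod)) =
      g.leadingCoeff * (((-1:ℝ)^m * ((s.filter (fun r => θ < r)).map (fun r => θ - r)).prod) *
      ((s.filter (fun r => ¬ θ < r)).map (fun r => θ - r)).prod) := by ring
  rw [this]
  exact mul_pos hstd (mul_pos hP1 hP2)
lemma aux_nodup_ofFn {d : ℕ} {x : Fin d → ℝ} (hx : StrictMono x) : (List.ofFn x).Nodup := by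
  rw [List.nodup_iff_injective_get]
  intro a b hab
  simp only [List.get_ofFn] at hab
  have := hx.injective hab
  have h1 : (a : ℕ) = b := by
    simpa using congrArg Fin.val this
  exact Fin.ext (by simpa using h1)

lemma aux_root_data {d : ℕ} (g : Polynomial ℝ) (hg : g ≠ 0) (hd : g.natDegree = d)
    (x : Fin d → ℝ) (hx : StrictMono x) (hroot : ∀ j, g.IsRoot (x j)) :
    g.roots = ↑(List.ofFn x) := by
  have hnd : (List.ofFn x).Nodup := aux_nodup_ofFn hx
  have hle : (↑(List.ofFn x) : Multiset ℝ) ≤ g.roots := by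
    rw [Multiset.le_iff_count]
    intro a
    rcases Nat.eq_zero_or_pos (Multiset.count a ↑(List.ofFn x)) with h | h
    · simp [h]
    · have ha : a ∈ (↑(List.ofFn x) : Multiset ℝ) := Multiset.count_pos.mp h
      have h1 : Multiset.count a ↑(List.ofFn x) = 1 := by
        have := Multiset.nodup_iff_count_le_one.mp (Multiset.coe_nodup.mpr hnd) a
        omega
      rw [h1, count_roots]
      rw [Multiset.mem_coe, List.mem_ofFn] at ha
      obtain ⟨j, rfl⟩ := ha
      exact (rootMultiplicity_pos hg).mpr (hroot j)
  refine (Multiset.eq_of_le_of_card_le hle ?_).symm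
  have := g.card_roots' 
  rw [hd] at this
  simpa using this

lemma aux_sortedRoots_eq {d : ℕ} (g : Polynomial ℝ) (x : Fin d → ℝ) (hx : StrictMono x)
    (hroots : g.roots = ↑(List.ofFn x)) : sortedRoots g = List.ofFn x := by
  refine (fun h1 h2 h3 => List.Perm.eq_of_pairwise' (r := (· ≤ · : ℝ → ℝ → Prop)) h2 h3 h1) ?_ ?_ ?_
  · rw [← Multiset.coe_eq_coe, sortedRoots, Multiset.sort_eq, hroots]
  · exact Multiset.pairwise_sort _ _
  · rw [List.pairwise_ofFn]
    intro i j hij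
    exact (hx hij).le

lemma aux_getD {d : ℕ} (g : Polynomial ℝ) (x : Fin d → ℝ) (hx : StrictMono x)
    (hroots : g.roots = ↑(List.ofFn x)) (j : Fin d) :
    (sortedRoots g).getD (j : ℕ) 0 = x j := by
  rw [aux_sortedRoots_eq g x hx hroots]
  rw [List.getD_eq_getElem?_getD]
  simp [List.getElem?_ofFn, j.isLt]

lemma aux_simpleRooted {d : ℕ} (g : Polynomial ℝ) (hg : g ≠ 0) (hd : g.natDegree = d)
    (x : Fin d → ℝ) (hx : StrictMono x) (hroots : g.roots = ↑(List.ofFn x)) :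
    SimpleRooted g := by
  have hcard : Multiset.card g.roots = g.natDegree := by
    rw [hroots, hd]; simp
  have hsplits : Splits g := splits_iff_card_roots.mpr hcard
  constructor
  · refine ⟨hg, ?_⟩
    intro z hz
    have hmapne : g.map (algebraMap ℝ ℂ) ≠ 0 := by
      simpa using (Polynomial.map_ne_zero (f := algebraMap ℝ ℂ) hg : _)
    have hmem : z ∈ (g.map (algebraMap ℝ ℂ)).roots := by
      rw [mem_roots hmapne]; exact hz
    rw [hsplits.roots_map (algebraMap ℝ ℂ), Multiset.mem_map] at hmem
    obtain ⟨r, _, rfl⟩ := hmem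
    simp
  · intro θ hdvd
    have h2 : 2 ≤ rootMultiplicity θ g := (le_rootMultiplicity_iff hg).mpr hdvd
    rw [← count_roots, hroots] at h2
    have := Multiset.nodup_iff_count_le_one.mp (Multiset.coe_nodup.mpr (aux_nodup_ofFn hx)) θ
    omega

lemma aux_realRooted_card (g : Polynomial ℝ) (h : RealRooted g) :
    Multiset.card g.roots = g.natDegree := by
  obtain ⟨hg, him⟩ := h
  suffices H : ∀ d : ℕ, ∀ g : Polynomial ℝ, g ≠ 0 →
      (∀ z : ℂ, (g.map (algebraMap ℝ ℂ)).IsRoot z → z.im = 0) → g.natDegree = d →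
      Multiset.card g.roots = d by
    rw [H g.natDegree g hg him rfl]
  intro d
  induction d using Nat.strong_induction_on with
  | _ d ih =>
    intro g hg him hn
    rcases Nat.eq_zero_or_pos d with rfl | hd
    · rw [Polynomial.eq_C_of_natDegree_eq_zero hn]
      simp
    · have hdeg : 0 < (g.map (algebraMap ℝ ℂ)).degree := by
        rw [degree_map]
        rw [Polynomial.degree_eq_natDegree hg, hn]
        exact_mod_cast hd
      obtain ⟨z, hz⟩ := Complex.exists_root hdeg
      have hzim := him z hz
      set r := z.re with hr
      have hzr : z = (r : ℂ) := Complex.ext rfl (by simp [hzim])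
      have hroot : g.IsRoot r := by
        have h0 : (g.map (algebraMap ℝ ℂ)).eval ((algebraMap ℝ ℂ) r) = 0 := by
          have : ((algebraMap ℝ ℂ) r) = z := by rw [hzr]; rfl
          rw [this]; exact hz
        rw [Polynomial.eval_map, Polynomial.eval₂_at_apply] at h0
        have : ((g.eval r : ℝ) : ℂ) = 0 := h0
        exact_mod_cast this
      obtain ⟨q, hq⟩ := (dvd_iff_isRoot.mpr hroot)
      have hqne : q ≠ 0 := by
        rintro rfl; rw [mul_zero] at hq; exact hg hq
      have hqdeg : q.natDegree = d - 1 := by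
        have := hq ▸ hn
        rw [natDegree_mul (X_sub_C_ne_zero r) hqne, natDegree_X_sub_C] at this
        omega
      have hqim : ∀ z : ℂ, (q.map (algebraMap ℝ ℂ)).IsRoot z → z.im = 0 := by
        intro w hw
        apply him w
        rw [hq, Polynomial.map_mul, IsRoot, eval_mul, hw, mul_zero]
      have hqcard := ih (d - 1) (by omega) q hqne hqim hqdeg
      rw [hq, roots_mul (hq ▸ hg), roots_X_sub_C]
      rw [Multiset.card_add, hqcard]
      simp only [Multiset.card_singleton]
      omega



lemma aux_root_Ioo (g : Polynomial ℝ) {a b : ℝ} (hab : a < b)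
    (h : g.eval a * g.eval b < 0) : ∃ c, a < c ∧ c < b ∧ g.eval c = 0 := by
  have hc : ContinuousOn (fun x => g.eval x) (Set.Icc a b) :=
    (g.continuous_aeval).continuousOn
  rcases lt_or_ge (g.eval a) 0 with ha | ha
  · have hb : 0 < g.eval b := by nlinarith
    have : (0:ℝ) ∈ Set.Ioo (g.eval a) (g.eval b) := ⟨ha, hb⟩
    obtain ⟨c, hc1, hc2⟩ := intermediate_value_Ioo hab.le hc this
    exact ⟨c, hc1.1, hc1.2, hc2⟩
  · have ha' : 0 < g.eval a := by
      rcases ha.lt_or_eq with h' | h'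
      · exact h'
      · exfalso; rw [← h'] at h; simp at h
    have hb : g.eval b < 0 := by nlinarith
    have : (0:ℝ) ∈ Set.Ioo (g.eval b) (g.eval a) := ⟨hb, ha'⟩
    obtain ⟨c, hc1, hc2⟩ := intermediate_value_Ioo' hab.le hc this
    exact ⟨c, hc1.1, hc1.2, hc2⟩

lemma aux_root_above (g : Polynomial ℝ) (hstd : 0 < g.leadingCoeff)
    (hdeg : 0 < g.natDegree) (a : ℝ) (h : g.eval a < 0) :
    ∃ c, a < c ∧ g.eval c = 0 := by
  have hgne : g ≠ 0 := fun h0 => by simp [h0] at hstd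
  have ht : Tendsto (fun x => g.eval x) atTop atTop :=
    g.tendsto_atTop_of_leadingCoeff_nonneg
      (by rw [degree_eq_natDegree hgne]; exact_mod_cast hdeg) hstd.le
  have : ∀ᶠ x in atTop, 0 < g.eval x ∧ a < x :=
    (ht.eventually_gt_atTop 0).and (eventually_gt_atTop a)
  obtain ⟨b, hb⟩ := this.exists
  obtain ⟨c, h1, _, h3⟩ := aux_root_Ioo g hb.2 (by nlinarith [hb.1])
  exact ⟨c, h1, h3⟩

lemma aux_root_below (g : Polynomial ℝ) (hstd : 0 < g.leadingCoeff)
    (hdeg : 0 < g.natDegree) (a : ℝ)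
    (h : (-1 : ℝ) ^ g.natDegree * g.eval a < 0) :
    ∃ c, c < a ∧ g.eval c = 0 := by
  set d := g.natDegree with hd
  set q : Polynomial ℝ := C ((-1 : ℝ) ^ d) * g.comp (-X) with hqdef
  have hgne : g ≠ 0 := fun h0 => by simp [h0] at hstd
  have hXne : (-X : Polynomial ℝ).natDegree = 1 := by simp
  have hcompdeg : (g.comp (-X)).natDegree = d := by
    rw [natDegree_comp, hXne, mul_one]
  have hqdeg : q.natDegree = d := by
    rw [hqdef, natDegree_C_mul (by positivity), hcompdeg]
  have hqlc : q.leadingCoeff = g.leadingCoeff := by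
    rw [hqdef, leadingCoeff_mul, leadingCoeff_C, leadingCoeff_comp (by rw [hXne]; omega)]
    have : (-X : Polynomial ℝ).leadingCoeff = -1 := by
      simpa using (leadingCoeff_neg (X : Polynomial ℝ))
    rw [this, ← hd]
    have h1 : ((-1:ℝ) ^ d) * ((-1:ℝ) ^ d) = 1 := by
      rw [← mul_pow]; norm_num
    linear_combination g.leadingCoeff * h1
  have hqa : q.eval (-a) = (-1 : ℝ) ^ d * g.eval a := by
    rw [hqdef, eval_mul, eval_C, eval_comp]
    simp
  obtain ⟨c, hc1, hc2⟩ := aux_root_above q (hqlc ▸ hstd) (hqdeg ▸ hdeg) (-a) (hqa ▸ h)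
  refine ⟨-c, by linarith, ?_⟩
  have : q.eval c = (-1 : ℝ) ^ d * g.eval (-c) := by
    rw [hqdef, eval_mul, eval_C, eval_comp]; simp
  rw [this] at hc2
  have hne : ((-1:ℝ) ^ d) ≠ 0 := by positivity
  exact (mul_eq_zero.mp hc2).resolve_left hne



lemma aux_neg_one_sq (m : ℕ) : ((-1:ℝ) ^ m) * ((-1:ℝ) ^ m) = 1 := by
  rw [← mul_pow]; norm_num

lemma aux_sign_flip {m : ℕ} {A B : ℝ} (hA : 0 < (-1:ℝ) ^ m * A) (hAB : A * B < 0) :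
    0 < (-1:ℝ) ^ (m + 1) * B := by
  have h1 := aux_neg_one_sq m
  rw [pow_succ]
  nlinarith [mul_pos hA hA]

lemma aux_sign_mul {m : ℕ} {A B : ℝ} (hA : 0 < (-1:ℝ) ^ m * A) (hB : 0 < (-1:ℝ) ^ (m + 1) * B) :
    A * B < 0 := by
  have h1 := aux_neg_one_sq m
  rw [pow_succ] at hB
  nlinarith [mul_pos hA hB]

lemma aux_step {i : ℕ} (p q r : Polynomial ℝ)
    (hstdp : 0 < p.leadingCoeff) (hstdr : 0 < r.leadingCoeff)
    (hdp : p.natDegree = i) (hdr : r.natDegree = i + 2)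
    (x : Fin i → ℝ) (y : Fin (i+1) → ℝ) (hx : StrictMono x) (hy : StrictMono y)
    (hrp : p.roots = ↑(List.ofFn x)) (hrq : q.roots = ↑(List.ofFn y))
    (hI : ∀ k : Fin i, y k.castSucc < x k ∧ x k < y k.succ)
    (hsturm : ∀ θ : ℝ, q.IsRoot θ → p.eval θ * r.eval θ < 0) :
    ∃ z : Fin (i+2) → ℝ, StrictMono z ∧ r.roots = ↑(List.ofFn z) ∧
      ∀ k : Fin (i+1), z k.castSucc < y k ∧ y k < z k.succ := by
  have hpcard : Multiset.card p.roots = p.natDegree := by rw [hrp, hdp]; simp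
  have hrne : r ≠ 0 := fun h0 => by simp [h0] at hstdr
  have hsr : ∀ k : Fin (i+1), 0 < (-1:ℝ) ^ (i - (k:ℕ) + 1) * r.eval (y k) := by
    intro k
    have hroot : q.IsRoot (y k) := by
      have : y k ∈ q.roots := by
        rw [hrq, Multiset.mem_coe, List.mem_ofFn]; exact ⟨k, rfl⟩
      exact isRoot_of_mem_roots this
    have hlt : ∀ j : Fin i, (j:ℕ) < (k:ℕ) → x j < y k := by
      intro j hj
      exact lt_of_lt_of_le (hI j).2 (hy.monotone (by rw [Fin.le_def]; simpa using hj))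
    have hgt : ∀ j : Fin i, (k:ℕ) ≤ (j:ℕ) → y k < x j := by
      intro j hj
      exact lt_of_le_of_lt (hy.monotone (by rw [Fin.le_def]; simpa using hj)) (hI j).1
    have hcnt : Multiset.card (p.roots.filter (fun s => y k < s)) = i - (k:ℕ) := by
      rw [hrp]; exact aux_count_filter x (y k) (by omega) hlt hgt
    have hne : ∀ s ∈ p.roots, s ≠ y k := by
      rw [hrp]; exact aux_ne_of_count x (y k) hlt hgt
    have hsp := aux_sign p hstdp hpcard (y k) hne
    rw [hcnt] at hsp
    exact aux_sign_flip hsp (hsturm (y k) hroot)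
  obtain ⟨zb, hzb1, hzb2⟩ : ∃ c, c < y 0 ∧ r.eval c = 0 := by
    apply aux_root_below r hstdr (by omega)
    have h0 := hsr 0
    simp only [Fin.val_zero, Nat.sub_zero] at h0
    rw [hdr]
    have he : (-1:ℝ) ^ (i+2) * r.eval (y 0) = -((-1:ℝ)^(i+1) * r.eval (y 0)) := by
      rw [pow_succ]; ring
    rw [he]; linarith
  obtain ⟨zt, hzt1, hzt2⟩ : ∃ c, y (Fin.last i) < c ∧ r.eval c = 0 := by
    apply aux_root_above r hstdr (by omega)
    have h0 := hsr (Fin.last i)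
    simp only [Fin.val_last, Nat.sub_self] at h0
    norm_num at h0
    linarith
  have hmid : ∀ j : Fin i, ∃ c, y j.castSucc < c ∧ c < y j.succ ∧ r.eval c = 0 := by
    intro j
    have h1 := hsr j.castSucc
    have h2 := hsr j.succ
    set a := i - ((j:ℕ) + 1) with ha
    have e1 : i - ((j.castSucc:ℕ)) + 1 = a + 2 := by
      simp only [Fin.coe_castSucc]; omega
    have e2 : i - ((j.succ:ℕ)) + 1 = a + 1 := by
      simp only [Fin.val_succ]; omega
    rw [e1] at h1; rw [e2] at h2
    have h1' : 0 < (-1:ℝ)^a * r.eval (y j.castSucc) := by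
      have he : (-1:ℝ)^(a+2) = (-1:ℝ)^a := by rw [pow_add]; norm_num
      rwa [he] at h1
    have hprod := aux_sign_mul h1' h2
    exact aux_root_Ioo r (hy (Fin.castSucc_lt_succ (i := j))) hprod
  choose mid hm1 hm2 hm3 using hmid
  refine ⟨Fin.cons zb (Fin.snoc mid zt), ?_, ?_, ?_⟩
  all_goals {
    have hinter : ∀ k : Fin (i+1),
        (Fin.cons zb (Fin.snoc mid zt) : Fin (i+2) → ℝ) k.castSucc < y k ∧
        y k < (Fin.cons zb (Fin.snoc mid zt) : Fin (i+2) → ℝ) k.succ := by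
      intro k
      constructor
      · induction k using Fin.cases with
        | zero =>
          rw [Fin.castSucc_zero, Fin.cons_zero]
          exact hzb1
        | succ j =>
          rw [← Fin.succ_castSucc, Fin.cons_succ, Fin.snoc_castSucc]
          exact hm2 j
      · rw [Fin.cons_succ]
        induction k using Fin.lastCases with
        | last =>
          rw [Fin.snoc_last]
          exact hzt1
        | cast j =>
          rw [Fin.snoc_castSucc]
          exact hm1 j
    have hmono : StrictMono (Fin.cons zb (Fin.snoc mid zt) : Fin (i+2) → ℝ) := by
      rw [Fin.strictMono_iff_lt_succ]
      exact fun k => (hinter k).1.trans (hinter k).2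
    first
    | exact hmono
    | (exact aux_root_data r hrne hdr _ hmono (by
        intro j
        induction j using Fin.cases with
        | zero => rw [Fin.cons_zero]; exact hzb2
        | succ k =>
          rw [Fin.cons_succ]
          induction k using Fin.lastCases with
          | last => rw [Fin.snoc_last]; exact hzt2
          | cast j => rw [Fin.snoc_castSucc]; exact hm3 j))
    | exact hinter
  }

lemma aux_getD' {d : ℕ} (g : Polynomial ℝ) (x : Fin d → ℝ) (hx : StrictMono x)
    (hroots : g.roots = ↑(List.ofFn x)) (m : ℕ) (hm : m < d) :
    (sortedRoots g).getD m 0 = x ⟨m, hm⟩ :=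
  aux_getD g x hx hroots ⟨m, hm⟩

lemma aux_fn_of_simple (g : Polynomial ℝ) (hg : SimpleRooted g) (d : ℕ) (hd : g.natDegree = d) :
    ∃ x : Fin d → ℝ, StrictMono x ∧ g.roots = ↑(List.ofFn x) := by
  have hne : g ≠ 0 := hg.1.1
  have hcard : Multiset.card g.roots = d := by rw [aux_realRooted_card g hg.1, hd]
  set l := sortedRoots g with hl
  have hlen : l.length = d := by rw [hl, sortedRoots, Multiset.length_sort, hcard]
  have hcoe : (↑l : Multiset ℝ) = g.roots := by rw [hl, sortedRoots]; exact Multiset.sort_eq _ _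
  have hsorted : l.Pairwise (· ≤ ·) := Multiset.pairwise_sort _ _
  have hnodup : l.Nodup := by
    rw [← Multiset.coe_nodup, hcoe, Multiset.nodup_iff_count_le_one]
    intro a
    have h2 : ¬ (2 ≤ rootMultiplicity a g) := fun hc => hg.2 a ((le_rootMultiplicity_iff hne).mp hc)
    rw [count_roots]
    omega
  have hpl : l.Pairwise (· < ·) := by
    have h := List.Pairwise.and hsorted hnodup
    exact h.imp (fun h => lt_of_le_of_ne h.1 h.2)
  refine ⟨fun j => l.get (Fin.cast hlen.symm j), ?_, ?_⟩
  · intro a b hab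
    exact List.pairwise_iff_get.mp hpl _ _ (by rw [Fin.lt_def]; exact hab)
  · have : List.ofFn (fun j : Fin d => l.get (Fin.cast hlen.symm j)) = l := by
      apply List.ext_get (by simp [hlen])
      intro n h1 h2
      rw [List.get_ofFn]
      exact congrArg l.get (Fin.ext rfl)
    rw [this, hcoe]

lemma aux_sm0 : StrictMono (fun j : Fin 0 => (j.elim0 : ℝ)) := fun a => a.elim0

lemma aux_sm1 (v : ℝ) : StrictMono (fun _ : Fin 1 => v) := by
  intro a b hab
  rw [Subsingleton.elim a b] at hab
  exact absurd hab (lt_irrefl _)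

lemma aux_roots_deg0 (g : Polynomial ℝ) (hne : g ≠ 0) (hg : g.natDegree = 0) :
    g.roots = ↑(List.ofFn (fun j : Fin 0 => (j.elim0 : ℝ))) := by
  rw [Polynomial.eq_C_of_natDegree_eq_zero hg, Polynomial.roots_C, List.ofFn_zero]
  rfl

lemma aux_roots_deg1 (g : Polynomial ℝ) (hstd : 0 < g.leadingCoeff) (hg : g.natDegree = 1) :
    ∃ rt : ℝ, g.roots = ↑(List.ofFn (fun _ : Fin 1 => rt)) := by
  have hne : g ≠ 0 := fun h0 => by simp [h0] at hstd
  have ha : g.coeff 1 = g.leadingCoeff := by rw [Polynomial.leadingCoeff, hg]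
  have ha0 : g.coeff 1 ≠ 0 := by rw [ha]; exact hstd.ne'
  set rt := -(g.coeff 0) / g.coeff 1 with hrt
  have hroot : g.IsRoot rt := by
    have hgeq := Polynomial.eq_X_add_C_of_natDegree_le_one hg.le
    rw [IsRoot, hgeq]
    simp only [eval_add, eval_mul, eval_C, eval_X]
    rw [hrt]; field_simp
    ring
  exact ⟨rt, aux_root_data g hne hg (fun _ => rt) (aux_sm1 rt) (fun _ => hroot)⟩


/-- **Lemma on Sturm sequences.** For a sequence `f₀, …, fₙ` of standard polynomials with
`deg fᵢ = i`, the sequence is a (generalised) Sturm sequence if and only if each `fᵢ` is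
real-rooted with simple zeros and `f₀ ≺ f₁ ≺ ⋯ ≺ fₙ`. -/
theorem sturm_sequence_iff_interlacing (n : ℕ) (f : ℕ → Polynomial ℝ)
    (hstd : ∀ i, i ≤ n → Standard (f i))
    (hdeg : ∀ i, i ≤ n → (f i).natDegree = i) :
    (∀ i, 1 ≤ i → i + 1 ≤ n → ∀ θ : ℝ, (f i).IsRoot θ →
        (f (i - 1)).eval θ * (f (i + 1)).eval θ < 0) ↔
    ((∀ i, i ≤ n → SimpleRooted (f i)) ∧
      ∀ i, i + 1 ≤ n → StrictInterlaces (f i) (f (i + 1))) := by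
  have hne : ∀ i, i ≤ n → f i ≠ 0 := by
    intro i hi h0
    have := hstd i hi
    rw [Standard, h0, leadingCoeff_zero] at this
    exact lt_irrefl 0 this
  constructor
  · intro hsturm
    have hS : ∀ i, i + 1 ≤ n → ∃ (x : Fin i → ℝ) (y : Fin (i+1) → ℝ),
        StrictMono x ∧ StrictMono y ∧ (f i).roots = ↑(List.ofFn x) ∧
        (f (i+1)).roots = ↑(List.ofFn y) ∧
        ∀ k : Fin i, y k.castSucc < x k ∧ x k < y k.succ := by
      intro i
      induction i with
      | zero =>
        intro h1
        obtain ⟨rt, hrt⟩ := aux_roots_deg1 (f 1) (hstd 1 h1) (hdeg 1 h1)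
        exact ⟨(fun j => j.elim0), (fun _ => rt), aux_sm0, aux_sm1 rt,
          aux_roots_deg0 (f 0) (hne 0 (by omega)) (hdeg 0 (by omega)), hrt,
          fun k => k.elim0⟩
      | succ i ih =>
        intro h2
        obtain ⟨x, y, hx, hy, hrx, hry, hI⟩ := ih (by omega)
        have hst : ∀ θ : ℝ, (f (i+1)).IsRoot θ → (f i).eval θ * (f (i+2)).eval θ < 0 := by
          intro θ hθ
          have h := hsturm (i+1) (by omega) (by omega) θ hθ
          simpa using h
        obtain ⟨z, hz, hrz, hIz⟩ := aux_step (f i) (f (i+1)) (f (i+2))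
          (hstd i (by omega)) (hstd (i+2) (by omega))
          (hdeg i (by omega)) (hdeg (i+2) (by omega)) x y hx hy hrx hry hI hst
        exact ⟨y, z, hy, hz, hry, hrz, hIz⟩
    have hR : ∀ i, i ≤ n → ∃ x : Fin i → ℝ, StrictMono x ∧ (f i).roots = ↑(List.ofFn x) := by
      intro i hi
      match i, hi with
      | 0, h => exact ⟨fun j => j.elim0, aux_sm0, aux_roots_deg0 (f 0) (hne 0 h) (hdeg 0 h)⟩
      | (j+1), h =>
        obtain ⟨x, y, hx, hy, hrx, hry, hI⟩ := hS j h
        exact ⟨y, hy, hry⟩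
    constructor
    · intro i hi
      obtain ⟨x, hx, hrx⟩ := hR i hi
      exact aux_simpleRooted (f i) (hne i hi) (hdeg i hi) x hx hrx
    · intro i hi
      obtain ⟨x, y, hx, hy, hrx, hry, hI⟩ := hS i hi
      refine ⟨(aux_simpleRooted (f (i+1)) (hne (i+1) hi) (hdeg (i+1) hi) y hy hry).1,
        (aux_simpleRooted (f i) (hne i (by omega)) (hdeg i (by omega)) x hx hrx).1,
        by rw [hdeg (i+1) hi, hdeg i (by omega)], ?_⟩
      intro m hm
      rw [hdeg i (by omega)] at hm
      have hk1 : m < i + 1 := by omega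
      have hk2 : m + 1 < i + 1 := by omega
      rw [aux_getD' (f i) x hx hrx m hm, aux_getD' (f (i+1)) y hy hry m hk1,
        aux_getD' (f (i+1)) y hy hry (m+1) hk2]
      have h1 := (hI ⟨m, hm⟩).1
      have h2 := (hI ⟨m, hm⟩).2
      have ec : (⟨m, hm⟩ : Fin i).castSucc = ⟨m, hk1⟩ := rfl
      have es : (⟨m, hm⟩ : Fin i).succ = ⟨m+1, hk2⟩ := rfl
      rw [ec] at h1
      rw [es] at h2
      exact ⟨h1, h2⟩
  · rintro ⟨hsimple, hinter⟩ i h1 h2 θ hθ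
    have hi : i ≤ n := by omega
    have hi1 : i - 1 ≤ n := by omega
    obtain ⟨β, hβ, hrβ⟩ := aux_fn_of_simple (f i) (hsimple i hi) i (hdeg i hi)
    obtain ⟨γ, hγ, hrγ⟩ := aux_fn_of_simple (f (i-1)) (hsimple (i-1) hi1) (i-1) (hdeg (i-1) hi1)
    obtain ⟨α, hα, hrα⟩ := aux_fn_of_simple (f (i+1)) (hsimple (i+1) h2) (i+1) (hdeg (i+1) h2)
    have hmem : θ ∈ (f i).roots := (mem_roots (hne i hi)).mpr hθ
    rw [hrβ, Multiset.mem_coe, List.mem_ofFn] at hmem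
    obtain ⟨k, hk⟩ := hmem
    have hIA := hinter (i-1) (by omega)
    rw [show i - 1 + 1 = i from by omega] at hIA
    have hIB := hinter i h2
    obtain ⟨_, _, _, hA⟩ := hIA
    obtain ⟨_, _, _, hB⟩ := hIB
    rw [hdeg (i-1) hi1] at hA
    rw [hdeg i hi] at hB
    have hA' : ∀ m (hm : m < i - 1),
        β ⟨m, by omega⟩ < γ ⟨m, hm⟩ ∧ γ ⟨m, hm⟩ < β ⟨m+1, by omega⟩ := by
      intro m hm
      have h0 := hA m hm
      rwa [aux_getD' (f i) β hβ hrβ m (by omega), aux_getD' (f (i-1)) γ hγ hrγ m hm,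
        aux_getD' (f i) β hβ hrβ (m+1) (by omega)] at h0
    have hB' : ∀ m (hm : m < i),
        α ⟨m, by omega⟩ < β ⟨m, hm⟩ ∧ β ⟨m, hm⟩ < α ⟨m+1, by omega⟩ := by
      intro m hm
      have h0 := hB m hm
      rwa [aux_getD' (f (i+1)) α hα hrα m (by omega), aux_getD' (f i) β hβ hrβ m hm,
        aux_getD' (f (i+1)) α hα hrα (m+1) (by omega)] at h0
    -- counting for f (i-1)
    have hltγ : ∀ j : Fin (i-1), (j:ℕ) < (k:ℕ) → γ j < θ := by
      intro j hj
      have h0 := (hA' j j.isLt).2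
      rw [Fin.eta] at h0
      rw [← hk]
      exact lt_of_lt_of_le h0 (hβ.monotone (by rw [Fin.le_def]; simpa using hj))
    have hgtγ : ∀ j : Fin (i-1), (k:ℕ) ≤ (j:ℕ) → θ < γ j := by
      intro j hj
      have h0 := (hA' j j.isLt).1
      rw [Fin.eta] at h0
      rw [← hk]
      exact lt_of_le_of_lt (hβ.monotone (by rw [Fin.le_def]; simpa using hj)) h0
    have hcntγ : Multiset.card ((f (i-1)).roots.filter (fun s => θ < s)) = (i-1) - (k:ℕ) := by
      rw [hrγ]; exact aux_count_filter γ θ (by omega) hltγ hgtγ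
    have hneγ : ∀ s ∈ (f (i-1)).roots, s ≠ θ := by
      rw [hrγ]; exact aux_ne_of_count γ θ hltγ hgtγ
    have hsign1 := aux_sign (f (i-1)) (hstd (i-1) hi1)
      (by rw [hrγ, hdeg (i-1) hi1]; simp) θ hneγ
    rw [hcntγ] at hsign1
    -- counting for f (i+1)
    have hltα : ∀ j : Fin (i+1), (j:ℕ) < (k:ℕ)+1 → α j < θ := by
      intro j hj
      have hji : (j:ℕ) < i := by omega
      have h0 := (hB' j hji).1
      rw [Fin.eta] at h0
      rw [← hk]
      exact lt_of_lt_of_le h0 (hβ.monotone (by rw [Fin.le_def]; simp; omega))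
    have hgtα : ∀ j : Fin (i+1), (k:ℕ)+1 ≤ (j:ℕ) → θ < α j := by
      intro j hj
      have h0 := (hB' (k:ℕ) k.isLt).2
      rw [Fin.eta] at h0
      rw [← hk]
      exact lt_of_lt_of_le h0 (hα.monotone (by rw [Fin.le_def]; simpa using hj))
    have hcntα : Multiset.card ((f (i+1)).roots.filter (fun s => θ < s)) = (i+1) - ((k:ℕ)+1) := by
      rw [hrα]; exact aux_count_filter α θ (by omega) hltα hgtα
    have hneα : ∀ s ∈ (f (i+1)).roots, s ≠ θ := by
      rw [hrα]; exact aux_ne_of_count α θ hltα hgtα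
    have hsign2 := aux_sign (f (i+1)) (hstd (i+1) h2)
      (by rw [hrα, hdeg (i+1) h2]; simp) θ hneα
    rw [hcntα] at hsign2
    have he1 : (i+1) - ((k:ℕ)+1) = ((i-1) - (k:ℕ)) + 1 := by
      have := k.isLt
      omega
    rw [he1] at hsign2
    exact aux_sign_mul hsign1 hsign2
end

section
/- Let h, f, g be nonzero standard real-rooted polynomials. If h ≺ f and h ≺ g, then for all α, β ≥ 0 not both zero, h ≺ αf + βg. The same statement holds with every instance of ≺ replaced by ⪯. -/
open Polynomial

namespace IL
open Polynomial

lemma rr_card : ∀ (n : ℕ) (q : Polynomial ℝ), q.natDegree ≤ n → RealRooted q →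
    Multiset.card q.roots = q.natDegree := by
  intro n
  induction n with
  | zero => intro q hq _; have := q.card_roots'; omega
  | succ n ih =>
    intro q hq hr
    rcases Nat.eq_zero_or_pos q.natDegree with h0 | hpos
    · have := q.card_roots'; omega
    · have hq0 : q ≠ 0 := hr.1
      have hmap0 : q.map (algebraMap ℝ ℂ) ≠ 0 :=
        (Polynomial.map_ne_zero_iff (algebraMap ℝ ℂ).injective).2 hq0
      have hdeg : 0 < (q.map (algebraMap ℝ ℂ)).degree := by
        rw [degree_map_eq_of_injective (algebraMap ℝ ℂ).injective]
        exact natDegree_pos_iff_degree_pos.mp hpos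
      obtain ⟨z, hz⟩ := Complex.exists_root hdeg
      have him := hr.2 z hz
      have hzre : z = ((z.re : ℝ) : ℂ) := by
        apply Complex.ext <;> simp [him]
      have hroot : q.IsRoot z.re := by
        have : (q.map (algebraMap ℝ ℂ)).eval ((algebraMap ℝ ℂ) z.re) = (algebraMap ℝ ℂ) (q.eval z.re) := by
          rw [eval_map, eval₂_at_apply]
        have h2 : (q.map (algebraMap ℝ ℂ)).eval ((algebraMap ℝ ℂ) z.re) = 0 := by
          have : ((algebraMap ℝ ℂ) z.re) = z := by
            rw [hzre]; rfl
          rw [this]; exact hz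
        have := h2.symm.trans this
        exact (map_eq_zero_iff _ (algebraMap ℝ ℂ).injective).mp this.symm
      set c := z.re
      set q' := q /ₘ (X - C c) with hq'
      have hfac : q = (X - C c) * q' := (mul_divByMonic_eq_iff_isRoot.mpr hroot).symm
      have hq'0 : q' ≠ 0 := by
        intro h; rw [h, mul_zero] at hfac; exact hq0 hfac
      have hnd : q.natDegree = q'.natDegree + 1 := by
        rw [hfac, natDegree_mul (X_sub_C_ne_zero c) hq'0, natDegree_X_sub_C]; ring
      have hr' : RealRooted q' := by
        refine ⟨hq'0, fun w hw => ?_⟩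
        apply hr.2 w
        rw [hfac, Polynomial.map_mul]
        simp only [IsRoot, eval_mul]
        rw [hw, mul_zero]
      have hroots : q.roots = {c} + q'.roots := by
        rw [hfac, roots_mul (hfac ▸ hq0), roots_X_sub_C]
      have ih' := ih q' (by omega) hr'
      rw [hroots]; simp [ih', hnd]
end IL

namespace IL
open Polynomial List

lemma rr_card' (q : Polynomial ℝ) (h : RealRooted q) : Multiset.card q.roots = q.natDegree :=
  rr_card q.natDegree q le_rfl h

lemma rr_splits (q : Polynomial ℝ) (h : RealRooted q) : Splits q :=
  splits_iff_card_roots.2 (rr_card' q h)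

lemma rr_of_card (q : Polynomial ℝ) (h0 : q ≠ 0) (hc : Multiset.card q.roots = q.natDegree) :
    RealRooted q := by
  refine ⟨h0, fun z hz => ?_⟩
  have hsp : Splits q := splits_iff_card_roots.2 hc
  have hsp' : Splits (q.map (algebraMap ℝ ℂ)) := by
    have := hsp.map (algebraMap ℝ ℂ)
    simpa using this
  have hmap0 : q.map (algebraMap ℝ ℂ) ≠ 0 :=
    (Polynomial.map_ne_zero_iff (algebraMap ℝ ℂ).injective).2 h0
  have hz' : z ∈ (q.map (algebraMap ℝ ℂ)).roots := by
    rw [mem_roots hmap0]; exact hz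
  rw [hsp.roots_map (algebraMap ℝ ℂ)] at hz'
  obtain ⟨r, _, rfl⟩ := Multiset.mem_map.1 hz'
  simp

lemma len_sortedRoots (q : Polynomial ℝ) : (sortedRoots q).length = Multiset.card q.roots :=
  Multiset.length_sort _

lemma sortedRoots_sorted (q : Polynomial ℝ) : (sortedRoots q).Pairwise (· ≤ ·) :=
  Multiset.pairwise_sort _ _

lemma coe_sortedRoots (q : Polynomial ℝ) : (↑(sortedRoots q) : Multiset ℝ) = q.roots :=
  Multiset.sort_eq _ _

lemma getD_eq_getElem (l : List ℝ) (i : ℕ) (h : i < l.length) : l.getD i 0 = l[i] := by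
  simp [List.getD_eq_getElem?_getD, List.getElem?_eq_getElem h]

lemma getD_mem_roots (q : Polynomial ℝ) (i : ℕ) (h : i < (sortedRoots q).length) :
    (sortedRoots q).getD i 0 ∈ q.roots := by
  rw [getD_eq_getElem _ _ h, ← coe_sortedRoots]
  exact_mod_cast List.getElem_mem h

lemma getD_le_getD (q : Polynomial ℝ) (i j : ℕ) (hij : i ≤ j) (hj : j < (sortedRoots q).length) :
    (sortedRoots q).getD i 0 ≤ (sortedRoots q).getD j 0 := by
  rcases eq_or_lt_of_le hij with rfl | hlt
  · exact le_refl _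
  · rw [getD_eq_getElem _ _ (lt_trans hlt hj), getD_eq_getElem _ _ hj]
    exact List.pairwise_iff_getElem.1 (sortedRoots_sorted q) _ _ _ _ hlt

end IL

namespace IL
open Polynomial List

variable {P : ℝ → Prop} [DecidablePred P]

lemma card_filter_eq_countP (q : Polynomial ℝ) :
    Multiset.card (q.roots.filter P) = (sortedRoots q).countP (fun x => decide (P x)) := by
  rw [← coe_sortedRoots]
  simp [Multiset.filter_coe, List.countP_eq_length_filter]

lemma cnt_ge (q : Polynomial ℝ) (hdc : ∀ x y : ℝ, x ≤ y → P y → P x)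
    (i : ℕ) (hi : i < (sortedRoots q).length) (h : P ((sortedRoots q).getD i 0)) :
    i + 1 ≤ Multiset.card (q.roots.filter P) := by
  rw [card_filter_eq_countP]
  set l := sortedRoots q with hl
  have hsplit : l.countP (fun x => decide (P x)) =
      (l.take (i+1)).countP (fun x => decide (P x)) + (l.drop (i+1)).countP (fun x => decide (P x)) := by
    rw [← List.countP_append, List.take_append_drop]
  have hlen : (l.take (i+1)).length = i + 1 := by
    rw [List.length_take]; omega
  have hall : ∀ a ∈ l.take (i+1), (fun x => decide (P x)) a = true := by
    intro a ha
    obtain ⟨j, hj, rfl⟩ := List.mem_iff_getElem.1 ha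
    rw [List.getElem_take]
    have hjl : j < l.length := by
      rw [hlen] at hj; omega
    simp only [decide_eq_true_eq]
    apply hdc _ _ _ h
    rw [← getD_eq_getElem l j hjl]
    apply getD_le_getD
    · rw [hlen] at hj; omega
    · exact hi
  have htake : (l.take (i+1)).countP (fun x => decide (P x)) = i + 1 := by
    rw [List.countP_eq_length.2 hall, hlen]
  omega

lemma cnt_le (q : Polynomial ℝ) (hdc : ∀ x y : ℝ, x ≤ y → P y → P x)
    (i : ℕ) (hi : i < (sortedRoots q).length) (h : ¬ P ((sortedRoots q).getD i 0)) :
    Multiset.card (q.roots.filter P) ≤ i := by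
  rw [card_filter_eq_countP]
  set l := sortedRoots q with hl
  have hsplit : l.countP (fun x => decide (P x)) =
      (l.take i).countP (fun x => decide (P x)) + (l.drop i).countP (fun x => decide (P x)) := by
    rw [← List.countP_append, List.take_append_drop]
  have hdrop : (l.drop i).countP (fun x => decide (P x)) = 0 := by
    apply List.countP_eq_zero.2
    intro a ha
    obtain ⟨j, hj, rfl⟩ := List.mem_iff_getElem.1 ha
    rw [List.getElem_drop]
    simp only [decide_eq_true_eq]
    intro hPa
    apply h
    apply hdc _ _ _ hPa
    rw [← getD_eq_getElem l (i+j) (by rw [List.length_drop] at hj; omega)]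
    exact getD_le_getD q i (i+j) (by omega) (by rw [List.length_drop] at hj; rw [← hl]; omega)
  have htake : (l.take i).countP (fun x => decide (P x)) ≤ i := by
    calc (l.take i).countP (fun x => decide (P x)) ≤ (l.take i).length := List.countP_le_length
    _ ≤ i := by rw [List.length_take]; omega
  omega

end IL

namespace IL
open Polynomial

noncomputable def nGT (q : Polynomial ℝ) (t : ℝ) : ℕ :=
  Multiset.card (q.roots.filter (fun x => t < x))
noncomputable def cLE (q : Polynomial ℝ) (t : ℝ) : ℕ :=
  Multiset.card (q.roots.filter (fun x => x ≤ t))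
noncomputable def cLT (q : Polynomial ℝ) (t : ℝ) : ℕ :=
  Multiset.card (q.roots.filter (fun x => x < t))

lemma nGT_add_cLE (q : Polynomial ℝ) (t : ℝ) :
    nGT q t + cLE q t = Multiset.card q.roots := by
  rw [nGT, cLE]
  rw [← Multiset.card_add]
  congr 1
  have : q.roots.filter (fun x => x ≤ t) = q.roots.filter (fun x => ¬ t < x) := by
    apply Multiset.filter_congr; intro x _; constructor <;> intro h' <;> [exact not_lt.2 h'; exact not_lt.1 h']
  rw [this, Multiset.filter_add_not]

lemma cLE_eq_cLT_add_count (q : Polynomial ℝ) (t : ℝ) :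
    cLE q t = cLT q t + q.roots.count t := by
  rw [cLE, cLT]
  have h1 : q.roots.filter (fun x => x < t) + q.roots.filter (fun x => x = t)
      = q.roots.filter (fun x => x ≤ t) := by
    rw [Multiset.filter_add_filter]
    have e1 : q.roots.filter (fun a => a < t ∨ a = t) = q.roots.filter (fun x => x ≤ t) := by
      apply Multiset.filter_congr; intro x _; exact le_iff_lt_or_eq.symm
    have e2 : q.roots.filter (fun a => a < t ∧ a = t) = 0 := by
      apply Multiset.filter_eq_nil.2; rintro a _ ⟨ha1, ha2⟩; exact absurd (ha2 ▸ ha1) (lt_irrefl t)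
    rw [e1, e2, add_zero]
  rw [← h1, Multiset.card_add]
  congr 1
  have h2 : Multiset.filter (fun x => x = t) q.roots = Multiset.filter (fun x => t = x) q.roots :=
    Multiset.filter_congr (by intro x _; exact eq_comm)
  rw [h2, Multiset.count_eq_card_filter_eq]

lemma prod_sub_sign (s : Multiset ℝ) (x : ℝ) (h : ∀ a ∈ s, x < a) :
    0 < (-1:ℝ)^(Multiset.card s) * (s.map (fun a => x - a)).prod := by
  have h1 : (s.map (fun a => x - a)) = (s.map (fun a => a - x)).map Neg.neg := by
    rw [Multiset.map_map]; apply Multiset.map_congr rfl; intro a _; simp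
  rw [h1, Multiset.prod_map_neg]
  have h2 : 0 < (s.map (fun a => a - x)).prod := by
    apply Multiset.prod_pos; intro a ha
    obtain ⟨b, hb, rfl⟩ := Multiset.mem_map.1 ha
    have := h b hb; linarith
  simp only [Multiset.card_map]
  have h3 : ((-1:ℝ)^(Multiset.card s)) * ((-1:ℝ)^(Multiset.card s)) = 1 := by
    rw [← pow_add]
    exact Even.neg_one_pow (by exact Even.add_self _)
  rw [← mul_assoc, h3, one_mul]
  exact h2

lemma eval_sign (q : Polynomial ℝ) (hq : RealRooted q) (hlc : 0 < q.leadingCoeff) (x : ℝ) :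
    0 ≤ (-1:ℝ)^(nGT q x) * eval x q ∧ (x ∉ q.roots → 0 < (-1:ℝ)^(nGT q x) * eval x q) := by
  have hfac := (rr_splits q hq).eq_prod_roots
  have heval : eval x q = q.leadingCoeff * (q.roots.map (fun a => x - a)).prod := by
    conv_lhs => rw [hfac]
    rw [eval_mul, eval_C, eval_multiset_prod]
    congr 1
    rw [Multiset.map_map]
    congr 1
    apply Multiset.map_congr rfl; intro a _; simp
  have hsplit : q.roots = q.roots.filter (fun a => x < a) + q.roots.filter (fun a => ¬ x < a) :=
    (Multiset.filter_add_not _ _).symm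
  have hprod : (q.roots.map (fun a => x - a)).prod =
      ((q.roots.filter (fun a => x < a)).map (fun a => x - a)).prod *
      ((q.roots.filter (fun a => ¬ x < a)).map (fun a => x - a)).prod := by
    conv_lhs => rw [hsplit]
    rw [Multiset.map_add, Multiset.prod_add]
  have hA := prod_sub_sign (q.roots.filter (fun a => x < a)) x
    (fun a ha => (Multiset.of_mem_filter ha))
  have hBnn : 0 ≤ ((q.roots.filter (fun a => ¬ x < a)).map (fun a => x - a)).prod := by
    apply Multiset.prod_nonneg; intro a ha
    obtain ⟨b, hb, rfl⟩ := Multiset.mem_map.1 ha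
    have := Multiset.of_mem_filter hb
    simp only [not_lt] at this; linarith
  have key : (-1:ℝ)^(nGT q x) * eval x q =
      q.leadingCoeff * ((-1:ℝ)^(nGT q x) * ((q.roots.filter (fun a => x < a)).map (fun a => x - a)).prod) *
      ((q.roots.filter (fun a => ¬ x < a)).map (fun a => x - a)).prod := by
    rw [heval, hprod]; ring
  constructor
  · rw [key]
    apply mul_nonneg (mul_nonneg (le_of_lt hlc) (le_of_lt hA)) hBnn
  · intro hx
    have hBpos : 0 < ((q.roots.filter (fun a => ¬ x < a)).map (fun a => x - a)).prod := by
      apply Multiset.prod_pos; intro a ha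
      obtain ⟨b, hb, rfl⟩ := Multiset.mem_map.1 ha
      have h1 := Multiset.of_mem_filter hb
      have h2 := Multiset.mem_of_mem_filter hb
      simp only [not_lt] at h1
      rcases lt_or_eq_of_le h1 with h' | h'
      · linarith
      · exact absurd (h' ▸ h2) hx
    rw [key]
    exact mul_pos (mul_pos hlc hA) hBpos

end IL

namespace IL
open Polynomial

lemma exists_pos_ge (p : Polynomial ℝ) (hdeg : 0 < p.natDegree) (hlc : 0 < p.leadingCoeff) (M : ℝ) :
    ∃ x, M < x ∧ 0 < eval x p := by
  have ht := p.tendsto_atTop_of_leadingCoeff_nonneg (natDegree_pos_iff_degree_pos.mp hdeg) (le_of_lt hlc)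
  have h1 := ht.eventually_gt_atTop 0
  have h2 := Filter.eventually_gt_atTop M
  obtain ⟨x, hx1, hx2⟩ := (h1.and h2).exists
  exact ⟨x, hx2, hx1⟩

lemma exists_sign_le (p : Polynomial ℝ) (hdeg : 0 < p.natDegree) (hlc : 0 < p.leadingCoeff) (M : ℝ) :
    ∃ x, x < M ∧ 0 < (-1:ℝ)^p.natDegree * eval x p := by
  set n := p.natDegree with hn
  set q := C ((-1:ℝ)^n) * (p.comp (-X)) with hq
  have hcompdeg : (p.comp (-X)).natDegree = n := by
    rw [natDegree_comp]
    simp [hn]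
  have hcomp0 : p.comp (-X) ≠ 0 := by
    intro h
    have : (p.comp (-X)).natDegree = n := hcompdeg
    rw [h] at this
    simp only [natDegree_zero] at this
    omega
  have hcomplc : (p.comp (-X)).leadingCoeff = p.leadingCoeff * (-1)^n := by
    rw [leadingCoeff_comp (by simp)]
    simp [hn]
  have hqdeg : q.natDegree = n := by
    rw [hq, natDegree_C_mul (by positivity), hcompdeg]
  have hqlc : 0 < q.leadingCoeff := by
    rw [hq, leadingCoeff_mul, leadingCoeff_C, hcomplc]
    have h1 : ((-1:ℝ)^n) * (p.leadingCoeff * (-1)^n) = p.leadingCoeff := by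
      have : ((-1:ℝ)^n) * ((-1:ℝ)^n) = 1 := by
        rw [← pow_add]; exact Even.neg_one_pow (Even.add_self _)
      calc ((-1:ℝ)^n) * (p.leadingCoeff * (-1)^n) = (((-1:ℝ)^n) * ((-1:ℝ)^n)) * p.leadingCoeff := by ring
      _ = p.leadingCoeff := by rw [this, one_mul]
    rw [h1]; exact hlc
  obtain ⟨x, hx1, hx2⟩ := exists_pos_ge q (by omega) hqlc (-M)
  refine ⟨-x, by linarith, ?_⟩
  have : eval x q = (-1:ℝ)^n * eval (-x) p := by
    rw [hq, eval_mul, eval_C, eval_comp]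
    simp
  rw [this] at hx2
  exact hx2

lemma ivt_sign (p : Polynomial ℝ) (a b e : ℝ) (hab : a < b) (he : e = 1 ∨ e = -1)
    (ha : 0 < -(e * eval a p)) (hb : 0 < e * eval b p) :
    ∃ c ∈ Set.Ioo a b, eval c p = 0 := by
  have hcont : ContinuousOn (fun x => eval x p) (Set.Icc a b) := (p.continuous).continuousOn
  rcases he with rfl | rfl
  · simp only [one_mul] at ha hb
    have : (0:ℝ) ∈ Set.Ioo (eval a p) (eval b p) := ⟨by linarith, hb⟩
    obtain ⟨c, hc, hc0⟩ := intermediate_value_Ioo (le_of_lt hab) hcont this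
    exact ⟨c, hc, hc0⟩
  · have ha' : 0 < eval a p := by nlinarith
    have hb' : eval b p < 0 := by nlinarith
    have : (0:ℝ) ∈ Set.Ioo (eval b p) (eval a p) := ⟨hb', ha'⟩
    obtain ⟨c, hc, hc0⟩ := intermediate_value_Ioo' (le_of_lt hab) hcont this
    exact ⟨c, hc, hc0⟩

end IL


/-- `g ⪯ f`: interlacing. Both are real-rooted, `deg f = deg g + 1`, and listing the zeros of
`f` as `α₁ ≤ ⋯ ≤ α_d` and of `g` as `β₁ ≤ ⋯ ≤ β_{d-1}` (with multiplicity, in increasing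
order), one has `α₁ ≤ β₁ ≤ α₂ ≤ ⋯ ≤ β_{d-1} ≤ α_d`. -/
def Interlaces (g f : Polynomial ℝ) : Prop :=
  RealRooted f ∧ RealRooted g ∧ f.natDegree = g.natDegree + 1 ∧
  ∀ i, i < g.natDegree →
    (sortedRoots f).getD i 0 ≤ (sortedRoots g).getD i 0 ∧
    (sortedRoots g).getD i 0 ≤ (sortedRoots f).getD (i + 1) 0

namespace IL
open Polynomial

lemma core (h p : Polynomial ℝ) (hh : RealRooted h)
    (hmono : ∀ i, i + 1 < h.natDegree →
      (sortedRoots h).getD i 0 < (sortedRoots h).getD (i+1) 0)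
    (hdeg : p.natDegree = h.natDegree + 1) (hps : 0 < p.leadingCoeff)
    (hsign : ∀ i, i < h.natDegree →
      0 < (-1:ℝ)^(h.natDegree - i) * eval ((sortedRoots h).getD i 0) p) :
    StrictInterlaces h p := by
  set k := h.natDegree with hk
  set H : ℕ → ℝ := fun i => (sortedRoots h).getD i 0 with hH
  have hp0 : p ≠ 0 := fun hc => by simp [hc, leadingCoeff_zero] at hps
  have hpdegpos : 0 < p.natDegree := by omega
  -- far right point
  obtain ⟨x₁, hx₁M, hx₁pos⟩ := exists_pos_ge p hpdegpos hps (H (k-1))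
  -- far left point
  obtain ⟨x₀, hx₀M, hx₀sign⟩ := exists_sign_le p hpdegpos hps (min (H 0) x₁)
  -- the node sequence
  set t : ℕ → ℝ := fun i => if i = 0 then x₀ else if i ≤ k then H (i-1) else x₁ with htdef
  have ht0 : t 0 = x₀ := by simp [htdef]
  have htmid : ∀ i, 1 ≤ i → i ≤ k → t i = H (i-1) := by
    intro i h1 h2; simp only [htdef]; rw [if_neg (by omega), if_pos h2]
  have httop : t (k+1) = x₁ := by simp [htdef]
  have ht : ∀ i, i ≤ k → t i < t (i+1) := by
    intro i hi
    rcases Nat.eq_zero_or_pos i with rfl | hipos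
    · rw [ht0]
      rcases Nat.eq_zero_or_pos k with hk0 | hkpos
      · have h1 : t 1 = x₁ := by
          simp only [htdef]; rw [if_neg one_ne_zero, if_neg (by omega)]
        rw [h1]; exact lt_of_lt_of_le hx₀M (min_le_right _ _)
      · rw [htmid 1 le_rfl hkpos]
        have : x₀ < H 0 := lt_of_lt_of_le hx₀M (min_le_left _ _)
        simpa using this
    · rcases Nat.lt_or_ge (i+1) (k+1) with hlt | hge
      · rw [htmid i hipos (by omega), htmid (i+1) (by omega) (by omega)]
        have := hmono (i-1) (by omega)
        have he : i - 1 + 1 = i := by omega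
        rw [he] at this
        exact this
      · rw [htmid i hipos (by omega)]
        have he : i + 1 = k + 1 := by omega
        rw [he, httop]
        have he2 : i - 1 = k - 1 := by omega
        rw [he2]
        exact hx₁M
  have tmono : ∀ j i, i < j → j ≤ k + 1 → t i < t j := by
    intro j
    induction j with
    | zero => intro i hi _; omega
    | succ j ihj =>
      intro i hi hj
      rcases Nat.lt_or_ge i j with hij | hij
      · exact lt_trans (ihj i hij (by omega)) (ht j (by omega))
      · have : i = j := by omega
        subst this
        exact ht i (by omega)
  have hsign' : ∀ i, i ≤ k + 1 → 0 < (-1:ℝ)^(k + 1 - i) * eval (t i) p := by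
    intro i hi
    rcases Nat.eq_zero_or_pos i with rfl | hipos
    · rw [ht0]
      simpa [hdeg] using hx₀sign
    · rcases Nat.lt_or_ge i (k+1) with hlt | hge
      · rw [htmid i hipos (by omega)]
        have := hsign (i-1) (by omega)
        have he : k - (i - 1) = k + 1 - i := by omega
        rw [he] at this
        exact this
      · have he : i = k + 1 := by omega
        subst he
        rw [httop]
        simpa using hx₁pos
  have hroots : ∀ i : Fin (k+1), ∃ c, c ∈ Set.Ioo (t i) (t (i+1)) ∧ eval c p = 0 := by
    intro ⟨i, hi⟩
    simp only []
    have hik : i ≤ k := by omega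
    have h1 := hsign' i (by omega)
    have h2 := hsign' (i+1) (by omega)
    have he1 : k + 1 - i = (k - i) + 1 := by omega
    have he2 : k + 1 - (i+1) = k - i := by omega
    rw [he1, pow_succ] at h1
    rw [he2] at h2
    obtain ⟨c, hc, hc0⟩ := ivt_sign p (t i) (t (i+1)) ((-1:ℝ)^(k-i)) (ht i hik)
      (neg_one_pow_eq_or ℝ (k-i)) (by nlinarith) h2
    exact ⟨c, hc, hc0⟩
  choose γ hγIoo hγ0 using hroots
  have hγmono : ∀ i j : Fin (k+1), (i:ℕ) < (j:ℕ) → γ i < γ j := by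
    intro i j hij
    have h1 : γ i < t ((i:ℕ)+1) := (hγIoo i).2
    have h2 : t (j:ℕ) < γ j := (hγIoo j).1
    rcases Nat.lt_or_ge ((i:ℕ)+1) (j:ℕ) with hlt | hge
    · exact lt_trans h1 (lt_trans (tmono (j:ℕ) ((i:ℕ)+1) hlt (by omega)) h2)
    · have : (i:ℕ)+1 = (j:ℕ) := by omega
      rw [this] at h1
      exact lt_trans h1 h2
  set L : List ℝ := List.ofFn γ with hL
  have hLlen : L.length = k + 1 := by simp [hL]
  have hLget : ∀ (i : ℕ) (hi : i < k + 1), L.getD i 0 = γ ⟨i, hi⟩ := by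
    intro i hi
    rw [getD_eq_getElem L i (by omega)]
    simp only [hL, List.getElem_ofFn]
  have hLpair : L.Pairwise (· < ·) := by
    rw [List.pairwise_iff_getElem]
    intro i j hi hj hij
    have hi' : i < k + 1 := by omega
    have hj' : j < k + 1 := by omega
    have e1 : L[i] = γ ⟨i, hi'⟩ := by simp only [hL, List.getElem_ofFn]
    have e2 : L[j] = γ ⟨j, hj'⟩ := by simp only [hL, List.getElem_ofFn]
    rw [e1, e2]
    exact hγmono _ _ hij
  have hLnodup : L.Nodup := hLpair.imp ne_of_lt
  have hLsorted : L.Pairwise (· ≤ ·) := hLpair.imp le_of_lt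
  have hle : (↑L : Multiset ℝ) ≤ p.roots := by
    rw [Multiset.le_iff_count]
    intro a
    rcases Classical.em (a ∈ L) with ha | ha
    · have h1 : Multiset.count a (↑L : Multiset ℝ) = 1 := by
        rw [Multiset.coe_count]
        exact List.count_eq_one_of_mem hLnodup ha
      have h2 : 1 ≤ Multiset.count a p.roots := by
        rw [count_roots]
        apply (Polynomial.rootMultiplicity_pos hp0).2
        obtain ⟨i, rfl⟩ := Set.mem_range.1 ((List.mem_ofFn' _ _).1 (hL ▸ ha))
        exact hγ0 i
      omega
    · have : Multiset.count a ↑L = 0 := by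
        rw [Multiset.coe_count, List.count_eq_zero]
        exact ha
      omega
  have hcard : Multiset.card p.roots ≤ Multiset.card (↑L : Multiset ℝ) := by
    rw [Multiset.coe_card, hLlen, ← hdeg]
    exact_mod_cast p.card_roots'
  have hrootsL : p.roots = ↑L := (Multiset.eq_of_le_of_card_le hle hcard).symm
  have hpcard : Multiset.card p.roots = p.natDegree := by
    rw [hrootsL, Multiset.coe_card, hLlen, hdeg]
  have hrr : RealRooted p := rr_of_card p hp0 hpcard
  have hsortL : sortedRoots p = L := by
    have hperm : (sortedRoots p).Perm L := by
      rw [← Multiset.coe_eq_coe, coe_sortedRoots, hrootsL]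
    exact hperm.eq_of_pairwise' (sortedRoots_sorted p) hLsorted
  refine ⟨hrr, hh, hdeg, ?_⟩
  intro i hi
  have hi1 : i < k + 1 := by omega
  have hi2 : i + 1 < k + 1 := by omega
  have e1 : (sortedRoots p).getD i 0 = γ ⟨i, hi1⟩ := by rw [hsortL]; exact hLget i hi1
  have e2 : (sortedRoots p).getD (i+1) 0 = γ ⟨i+1, hi2⟩ := by rw [hsortL]; exact hLget (i+1) hi2
  have hHt : (sortedRoots h).getD i 0 = t (i+1) := by
    rw [htmid (i+1) (by omega) (by omega)]
    rfl
  constructor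
  · rw [e1, hHt]
    exact (hγIoo ⟨i, hi1⟩).2
  · rw [e2, hHt]
    exact (hγIoo ⟨i+1, hi2⟩).1

end IL

namespace IL
open Polynomial

lemma len_h (q : Polynomial ℝ) (hq : RealRooted q) : (sortedRoots q).length = q.natDegree := by
  rw [len_sortedRoots, rr_card' q hq]

lemma strict_sign (h q : Polynomial ℝ) (hI : StrictInterlaces h q) (hlc : 0 < q.leadingCoeff)
    (i : ℕ) (hi : i < h.natDegree) :
    0 < (-1:ℝ)^(h.natDegree - i) * eval ((sortedRoots h).getD i 0) q := by
  obtain ⟨hq, hh, hdeg, hIl⟩ := hI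
  set k := h.natDegree with hk
  set b := (sortedRoots h).getD i 0 with hb
  have lq : (sortedRoots q).length = k + 1 := by rw [len_h q hq, hdeg]
  have h1 : i + 1 ≤ cLT q b :=
    cnt_ge q (fun x y hxy hy => lt_of_le_of_lt hxy hy) i (by omega) (hIl i hi).1
  have h2 : cLE q b ≤ i + 1 :=
    cnt_le q (fun x y hxy hy => le_trans hxy hy) (i+1) (by omega)
      (not_le.2 (hIl i hi).2)
  have h3 := cLE_eq_cLT_add_count q b
  have hcount : q.roots.count b = 0 := by omega
  have hnotmem : b ∉ q.roots := by
    intro hmem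
    rw [← Multiset.count_pos] at hmem
    omega
  have hngt : nGT q b = k - i := by
    have := nGT_add_cLE q b
    rw [rr_card' q hq, hdeg] at this
    omega
  have := (eval_sign q hq hlc b).2 hnotmem
  rw [hngt] at this
  exact this

lemma weak_sign (h q : Polynomial ℝ) (hI : Interlaces h q) (hlc : 0 < q.leadingCoeff)
    (i : ℕ) (hi : i < h.natDegree) :
    0 ≤ (-1:ℝ)^(h.natDegree - i) * eval ((sortedRoots h).getD i 0) q ∧
    (¬ q.IsRoot ((sortedRoots h).getD i 0) →
      0 < (-1:ℝ)^(h.natDegree - i) * eval ((sortedRoots h).getD i 0) q) := by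
  obtain ⟨hq, hh, hdeg, hIl⟩ := hI
  set k := h.natDegree with hk
  set b := (sortedRoots h).getD i 0 with hb
  have lq : (sortedRoots q).length = k + 1 := by rw [len_h q hq, hdeg]
  have hq0 : q ≠ 0 := hq.1
  have main : ¬ q.IsRoot b → 0 < (-1:ℝ)^(k - i) * eval b q := by
    intro hroot
    have hnotmem : b ∉ q.roots := fun hmem => hroot ((mem_roots hq0).1 hmem)
    have h1 : i + 1 ≤ cLE q b :=
      cnt_ge q (fun x y hxy hy => le_trans hxy hy) i (by omega) (hIl i hi).1
    have h2 : cLE q b ≤ i + 1 := by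
      apply cnt_le q (fun x y hxy hy => le_trans hxy hy) (i+1) (by omega)
      intro hle
      have hge := (hIl i hi).2
      have : (sortedRoots q).getD (i+1) 0 = b := le_antisymm hle hge
      apply hnotmem
      rw [← this]
      exact getD_mem_roots q (i+1) (by omega)
    have hngt : nGT q b = k - i := by
      have := nGT_add_cLE q b
      rw [rr_card' q hq, hdeg] at this
      omega
    have := (eval_sign q hq hlc b).2 hnotmem
    rw [hngt] at this
    exact this
  constructor
  · by_cases hroot : q.IsRoot b
    · rw [hroot, mul_zero]
    · exact le_of_lt (main hroot)
  · exact main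

end IL

namespace IL
open Polynomial

lemma cLE_le_card (q : Polynomial ℝ) (t : ℝ) : cLE q t ≤ Multiset.card q.roots :=
  Multiset.card_le_card (Multiset.filter_le _ _)

lemma cLT_le_card (q : Polynomial ℝ) (t : ℝ) : cLT q t ≤ Multiset.card q.roots :=
  Multiset.card_le_card (Multiset.filter_le _ _)

lemma cnt_of_interlaces (h p : Polynomial ℝ) (hI : Interlaces h p) (t : ℝ) :
    cLE h t ≤ cLE p t ∧ cLT p t ≤ cLT h t + 1 := by
  obtain ⟨hp, hh, hdeg, hIl⟩ := hI
  set k := h.natDegree with hk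
  have lh : (sortedRoots h).length = k := len_h h hh
  have lp : (sortedRoots p).length = k + 1 := by rw [len_h p hp, hdeg]
  constructor
  · set m := cLE h t with hm
    have hmk : m ≤ k := by
      have := cLE_le_card h t
      rw [rr_card' h hh] at this
      omega
    rcases Nat.eq_zero_or_pos m with h0 | hpos
    · omega
    · have hH : (sortedRoots h).getD (m-1) 0 ≤ t := by
        by_contra hcon
        have h2 : cLE h t ≤ m - 1 := cnt_le h (fun x y hxy hy => le_trans hxy hy) (m-1) (by omega) hcon
        omega
      have hP : (sortedRoots p).getD (m-1) 0 ≤ t :=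
        le_trans (hIl (m-1) (by omega)).1 hH
      have h3 : (m-1) + 1 ≤ cLE p t := cnt_ge p (fun x y hxy hy => le_trans hxy hy) (m-1) (by omega) hP
      omega
  · set m := cLT p t with hm
    have hmk : m ≤ k + 1 := by
      have := cLT_le_card p t
      rw [rr_card' p hp, hdeg] at this
      omega
    rcases Nat.lt_or_ge m 2 with h0 | h2
    · omega
    · have hP : (sortedRoots p).getD (m-1) 0 < t := by
        by_contra hcon
        have h2 : cLT p t ≤ m - 1 := cnt_le p (fun x y hxy hy => lt_of_le_of_lt hxy hy) (m-1) (by omega) hcon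
        omega
      have hH : (sortedRoots h).getD (m-2) 0 < t := by
        have h1 := (hIl (m-2) (by omega)).2
        have he : m - 2 + 1 = m - 1 := by omega
        rw [he] at h1
        exact lt_of_le_of_lt h1 hP
      have h3 : (m-2) + 1 ≤ cLT h t := cnt_ge h (fun x y hxy hy => lt_of_le_of_lt hxy hy) (m-2) (by omega) hH
      omega

lemma interlaces_of_cnt (h p : Polynomial ℝ) (hh : RealRooted h) (hp : RealRooted p)
    (hdeg : p.natDegree = h.natDegree + 1)
    (hc : ∀ t : ℝ, cLE h t ≤ cLE p t ∧ cLT p t ≤ cLT h t + 1) : Interlaces h p := by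
  set k := h.natDegree with hk
  have lh : (sortedRoots h).length = k := len_h h hh
  have lp : (sortedRoots p).length = k + 1 := by rw [len_h p hp, hdeg]
  refine ⟨hp, hh, hdeg, fun i hi => ⟨?_, ?_⟩⟩
  · by_contra hcon
    push_neg at hcon
    set t := (sortedRoots h).getD i 0 with ht
    have h1 : i + 1 ≤ cLE h t :=
      cnt_ge h (fun x y hxy hy => le_trans hxy hy) i (by omega) le_rfl
    have h2 : cLE p t ≤ i :=
      cnt_le p (fun x y hxy hy => le_trans hxy hy) i (by omega) (not_le.2 hcon)
    have := (hc t).1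
    omega
  · by_contra hcon
    push_neg at hcon
    set t := (sortedRoots h).getD i 0 with ht
    have h1 : i + 2 ≤ cLT p t :=
      cnt_ge p (fun x y hxy hy => lt_of_le_of_lt hxy hy) (i+1) (by omega) hcon
    have h2 : cLT h t ≤ i :=
      cnt_le h (fun x y hxy hy => lt_of_le_of_lt hxy hy) i (by omega) (lt_irrefl t)
    have := (hc t).2
    omega

lemma cLE_mul (q : Polynomial ℝ) (hq : q ≠ 0) (c t : ℝ) :
    cLE ((X - C c) * q) t = (if c ≤ t then 1 else 0) + cLE q t := by
  rw [cLE, cLE, roots_mul (mul_ne_zero (X_sub_C_ne_zero c) hq), roots_X_sub_C,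
    Multiset.filter_add, Multiset.card_add, Multiset.filter_singleton]
  by_cases h : c ≤ t <;> simp [h]

lemma cLT_mul (q : Polynomial ℝ) (hq : q ≠ 0) (c t : ℝ) :
    cLT ((X - C c) * q) t = (if c < t then 1 else 0) + cLT q t := by
  rw [cLT, cLT, roots_mul (mul_ne_zero (X_sub_C_ne_zero c) hq), roots_X_sub_C,
    Multiset.filter_add, Multiset.card_add, Multiset.filter_singleton]
  by_cases h : c < t <;> simp [h]

lemma combo (f g : Polynomial ℝ) (hf : 0 < f.leadingCoeff) (hg : 0 < g.leadingCoeff)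
    (hfg : g.natDegree = f.natDegree) (α β : ℝ) (hα : 0 ≤ α) (hβ : 0 ≤ β)
    (hne : ¬(α = 0 ∧ β = 0)) :
    (α • f + β • g).natDegree = f.natDegree ∧ 0 < (α • f + β • g).leadingCoeff := by
  set d := f.natDegree with hd
  have hco : (α • f + β • g).coeff d = α * f.leadingCoeff + β * g.leadingCoeff := by
    rw [coeff_add, coeff_smul, coeff_smul, smul_eq_mul, smul_eq_mul]
    rw [show f.coeff d = f.leadingCoeff from rfl]
    rw [show g.coeff d = g.leadingCoeff by rw [leadingCoeff, hfg]]
  have hpos : 0 < α * f.leadingCoeff + β * g.leadingCoeff := by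
    have hor : 0 < α ∨ 0 < β := by
      by_contra hcon
      push_neg at hcon
      exact hne ⟨le_antisymm hcon.1 hα, le_antisymm hcon.2 hβ⟩
    rcases hor with h' | h'
    · have h1 : 0 < α * f.leadingCoeff := mul_pos h' hf
      have h2 : 0 ≤ β * g.leadingCoeff := mul_nonneg hβ (le_of_lt hg)
      linarith
    · have h1 : 0 ≤ α * f.leadingCoeff := mul_nonneg hα (le_of_lt hf)
      have h2 : 0 < β * g.leadingCoeff := mul_pos h' hg
      linarith
  have hle : (α • f + β • g).natDegree ≤ d := by
    apply le_trans (natDegree_add_le _ _)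
    apply max_le
    · exact le_trans (natDegree_smul_le _ _) le_rfl
    · exact le_trans (natDegree_smul_le _ _) (le_of_eq hfg)
  have hge : d ≤ (α • f + β • g).natDegree := by
    apply le_natDegree_of_ne_zero
    rw [hco]
    exact ne_of_gt hpos
  have hdeg : (α • f + β • g).natDegree = d := le_antisymm hle hge
  refine ⟨hdeg, ?_⟩
  rw [leadingCoeff, hdeg, hco]
  exact hpos

lemma interlaces_smul (h g : Polynomial ℝ) (β : ℝ) (hβ : 0 < β)
    (H : Interlaces h g) : Interlaces h (β • g) := by
  obtain ⟨hgr, hhr, hdeg, hIl⟩ := H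
  have hg0 : g ≠ 0 := hgr.1
  have hβ0 : β ≠ 0 := ne_of_gt hβ
  have hroots : (β • g).roots = g.roots := roots_smul_nonzero g hβ0
  have hsr : sortedRoots (β • g) = sortedRoots g := by
    rw [sortedRoots, sortedRoots, hroots]
  have hnd : (β • g).natDegree = g.natDegree := by
    rw [smul_eq_C_mul, natDegree_C_mul hβ0]
  have hne : β • g ≠ 0 := smul_ne_zero hβ0 hg0
  have hrr : RealRooted (β • g) := by
    apply rr_of_card _ hne
    rw [hroots, hnd, rr_card' g hgr]
  exact ⟨hrr, hhr, by rw [hnd]; exact hdeg, by rw [hsr]; exact hIl⟩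

end IL

namespace IL
open Polynomial

lemma strict_to_weak (h p : Polynomial ℝ) (H : StrictInterlaces h p) : Interlaces h p := by
  obtain ⟨h1, h2, h3, h4⟩ := H
  exact ⟨h1, h2, h3, fun i hi => ⟨le_of_lt (h4 i hi).1, le_of_lt (h4 i hi).2⟩⟩

lemma strict_case (h f g : Polynomial ℝ) (hfs : 0 < f.leadingCoeff) (hgs : 0 < g.leadingCoeff)
    (hIf : StrictInterlaces h f) (hIg : StrictInterlaces h g)
    (α β : ℝ) (hα : 0 ≤ α) (hβ : 0 ≤ β) (hne : ¬(α = 0 ∧ β = 0)) :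
    StrictInterlaces h (α • f + β • g) := by
  obtain ⟨hfr, hhr, hdegf, hIlf⟩ := hIf
  obtain ⟨hgr, -, hdegg, hIlg⟩ := hIg
  set k := h.natDegree with hk
  have hmono : ∀ i, i + 1 < k →
      (sortedRoots h).getD i 0 < (sortedRoots h).getD (i+1) 0 := by
    intro i hi
    exact lt_trans (hIlf i (by omega)).2 (hIlf (i+1) (by omega)).1
  have hfg : g.natDegree = f.natDegree := by omega
  obtain ⟨hdegp, hlcp⟩ := combo f g hfs hgs hfg α β hα hβ hne
  have hor : 0 < α ∨ 0 < β := by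
    by_contra hcon
    push_neg at hcon
    exact hne ⟨le_antisymm hcon.1 hα, le_antisymm hcon.2 hβ⟩
  apply core h (α • f + β • g) hhr hmono (by omega) hlcp
  intro i hi
  set b := (sortedRoots h).getD i 0 with hb
  have hev : eval b (α • f + β • g) = α * eval b f + β * eval b g := by
    rw [eval_add, eval_smul, eval_smul, smul_eq_mul, smul_eq_mul]
  have hsf := strict_sign h f ⟨hfr, hhr, hdegf, hIlf⟩ hfs i hi
  have hsg := strict_sign h g ⟨hgr, hhr, hdegg, hIlg⟩ hgs i hi
  rw [hev]
  have key : (-1:ℝ)^(k-i) * (α * eval b f + β * eval b g) =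
      α * ((-1:ℝ)^(k-i) * eval b f) + β * ((-1:ℝ)^(k-i) * eval b g) := by ring
  rw [key]
  rcases hor with h' | h'
  · have h1 : 0 < α * ((-1:ℝ)^(k-i) * eval b f) := mul_pos h' hsf
    have h2 : 0 ≤ β * ((-1:ℝ)^(k-i) * eval b g) := mul_nonneg hβ (le_of_lt hsg)
    linarith
  · have h1 : 0 ≤ α * ((-1:ℝ)^(k-i) * eval b f) := mul_nonneg hα (le_of_lt hsf)
    have h2 : 0 < β * ((-1:ℝ)^(k-i) * eval b g) := mul_pos h' hsg
    linarith

lemma weak_direct (h f g : Polynomial ℝ) (hfs : 0 < f.leadingCoeff) (hgs : 0 < g.leadingCoeff)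
    (hIf : Interlaces h f) (hIg : Interlaces h g)
    (hnc : ∀ c : ℝ, ¬(h.IsRoot c ∧ f.IsRoot c ∧ g.IsRoot c))
    (α β : ℝ) (hα : 0 < α) (hβ : 0 < β) :
    Interlaces h (α • f + β • g) := by
  obtain ⟨hfr, hhr, hdegf, hIlf⟩ := hIf
  obtain ⟨hgr, -, hdegg, hIlg⟩ := hIg
  set k := h.natDegree with hk
  have hh0 : h ≠ 0 := hhr.1
  have lh : (sortedRoots h).length = k := len_h h hhr
  have lf : (sortedRoots f).length = k + 1 := by rw [len_h f hfr, hdegf]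
  have lg : (sortedRoots g).length = k + 1 := by rw [len_h g hgr, hdegg]
  have hroot_h : ∀ i, i < k → h.IsRoot ((sortedRoots h).getD i 0) := by
    intro i hi
    exact (mem_roots hh0).1 (getD_mem_roots h i (by omega))
  have hmono : ∀ i, i + 1 < k →
      (sortedRoots h).getD i 0 < (sortedRoots h).getD (i+1) 0 := by
    intro i hi
    rcases lt_or_eq_of_le (getD_le_getD h i (i+1) (by omega) (by omega)) with hlt | heq
    · exact hlt
    · exfalso
      set b := (sortedRoots h).getD i 0 with hb
      have hf1 : (sortedRoots f).getD (i+1) 0 = b := by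
        apply le_antisymm
        · rw [heq]; exact (hIlf (i+1) (by omega)).1
        · exact (hIlf i (by omega)).2
      have hg1 : (sortedRoots g).getD (i+1) 0 = b := by
        apply le_antisymm
        · rw [heq]; exact (hIlg (i+1) (by omega)).1
        · exact (hIlg i (by omega)).2
      apply hnc b
      refine ⟨hroot_h i (by omega), ?_, ?_⟩
      · rw [← hf1]
        exact (mem_roots hfr.1).1 (getD_mem_roots f (i+1) (by omega))
      · rw [← hg1]
        exact (mem_roots hgr.1).1 (getD_mem_roots g (i+1) (by omega))
  have hfg : g.natDegree = f.natDegree := by omega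
  obtain ⟨hdegp, hlcp⟩ := combo f g hfs hgs hfg α β (le_of_lt hα) (le_of_lt hβ)
    (fun ⟨h1, _⟩ => (ne_of_gt hα) h1)
  apply strict_to_weak
  apply core h (α • f + β • g) hhr hmono (by omega) hlcp
  intro i hi
  set b := (sortedRoots h).getD i 0 with hb
  have hev : eval b (α • f + β • g) = α * eval b f + β * eval b g := by
    rw [eval_add, eval_smul, eval_smul, smul_eq_mul, smul_eq_mul]
  have hsf := weak_sign h f ⟨hfr, hhr, hdegf, hIlf⟩ hfs i hi
  have hsg := weak_sign h g ⟨hgr, hhr, hdegg, hIlg⟩ hgs i hi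
  have hnotboth : ¬ f.IsRoot b ∨ ¬ g.IsRoot b := by
    by_contra hcon
    push_neg at hcon
    exact hnc b ⟨hroot_h i hi, hcon.1, hcon.2⟩
  rw [hev]
  have key : (-1:ℝ)^(k-i) * (α * eval b f + β * eval b g) =
      α * ((-1:ℝ)^(k-i) * eval b f) + β * ((-1:ℝ)^(k-i) * eval b g) := by ring
  rw [key]
  rcases hnotboth with h' | h'
  · have h1 : 0 < α * ((-1:ℝ)^(k-i) * eval b f) := mul_pos hα (hsf.2 h')
    have h2 : 0 ≤ β * ((-1:ℝ)^(k-i) * eval b g) := mul_nonneg (le_of_lt hβ) hsg.1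
    linarith
  · have h1 : 0 ≤ α * ((-1:ℝ)^(k-i) * eval b f) := mul_nonneg (le_of_lt hα) hsf.1
    have h2 : 0 < β * ((-1:ℝ)^(k-i) * eval b g) := mul_pos hβ (hsg.2 h')
    linarith

lemma strip_root (q : Polynomial ℝ) (hq : RealRooted q) (hlc : 0 < q.leadingCoeff)
    (c : ℝ) (hc : q.IsRoot c) :
    q = (X - C c) * (q /ₘ (X - C c)) ∧ (q /ₘ (X - C c)) ≠ 0 ∧
    0 < (q /ₘ (X - C c)).leadingCoeff ∧ q.natDegree = (q /ₘ (X - C c)).natDegree + 1 ∧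
    RealRooted (q /ₘ (X - C c)) := by
  set q' := q /ₘ (X - C c) with hq'
  have hfac : q = (X - C c) * q' := (mul_divByMonic_eq_iff_isRoot.mpr hc).symm
  have hq'0 : q' ≠ 0 := by
    intro h0
    rw [h0, mul_zero] at hfac
    exact hq.1 hfac
  have hlc' : 0 < q'.leadingCoeff := by
    have : q.leadingCoeff = q'.leadingCoeff := by
      conv_lhs => rw [hfac]
      rw [leadingCoeff_mul, leadingCoeff_X_sub_C, one_mul]
    rw [← this]
    exact hlc
  have hnd : q.natDegree = q'.natDegree + 1 := by
    conv_lhs => rw [hfac]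
    rw [natDegree_mul (X_sub_C_ne_zero c) hq'0, natDegree_X_sub_C]
    ring
  have hroots : q.roots = {c} + q'.roots := by
    conv_lhs => rw [hfac]
    rw [roots_mul (hfac ▸ hq.1), roots_X_sub_C]
  have hrr : RealRooted q' := by
    apply rr_of_card _ hq'0
    have := rr_card' q hq
    rw [hroots, Multiset.card_add, Multiset.card_singleton] at this
    omega
  exact ⟨hfac, hq'0, hlc', hnd, hrr⟩

end IL

namespace IL
open Polynomial

lemma weak_main : ∀ (n : ℕ) (h f g : Polynomial ℝ), h.natDegree ≤ n →
    0 < h.leadingCoeff → 0 < f.leadingCoeff → 0 < g.leadingCoeff →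
    Interlaces h f → Interlaces h g → ∀ α β : ℝ, 0 < α → 0 < β →
    Interlaces h (α • f + β • g) := by
  intro n
  induction n with
  | zero =>
    intro h f g hn hhs hfs hgs hIf hIg α β hα hβ
    apply weak_direct h f g hfs hgs hIf hIg ?_ α β hα hβ
    intro c ⟨hch, _, _⟩
    have hhr := hIf.2.1
    have : c ∈ h.roots := (mem_roots hhr.1).2 hch
    have hcard := rr_card' h hhr
    have : 0 < Multiset.card h.roots := Multiset.card_pos_iff_exists_mem.2 ⟨c, this⟩
    omega
  | succ n ih =>
    intro h f g hn hhs hfs hgs hIf hIg α β hα hβ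
    by_cases hc : ∃ c : ℝ, h.IsRoot c ∧ f.IsRoot c ∧ g.IsRoot c
    · obtain ⟨c, hch, hcf, hcg⟩ := hc
      have hhr := hIf.2.1
      have hfr := hIf.1
      have hgr := hIg.1
      have hdegf := hIf.2.2.1
      have hdegg := hIg.2.2.1
      obtain ⟨hfach, hh'0, hh'lc, hh'deg, hh'rr⟩ := strip_root h hhr hhs c hch
      obtain ⟨hfacf, hf'0, hf'lc, hf'deg, hf'rr⟩ := strip_root f hfr hfs c hcf
      obtain ⟨hfacg, hg'0, hg'lc, hg'deg, hg'rr⟩ := strip_root g hgr hgs c hcg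
      set h' := h /ₘ (X - C c)
      set f' := f /ₘ (X - C c)
      set g' := g /ₘ (X - C c)
      have hdegf' : f'.natDegree = h'.natDegree + 1 := by omega
      have hdegg' : g'.natDegree = h'.natDegree + 1 := by omega
      have hIf' : Interlaces h' f' := by
        apply interlaces_of_cnt h' f' hh'rr hf'rr hdegf'
        intro t
        have hcnt := cnt_of_interlaces h f hIf t
        rw [hfach, hfacf] at hcnt
        rw [cLE_mul h' hh'0 c t, cLE_mul f' hf'0 c t,
            cLT_mul h' hh'0 c t, cLT_mul f' hf'0 c t] at hcnt
        constructor
        · split_ifs at hcnt <;> omega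
        · split_ifs at hcnt <;> omega
      have hIg' : Interlaces h' g' := by
        apply interlaces_of_cnt h' g' hh'rr hg'rr hdegg'
        intro t
        have hcnt := cnt_of_interlaces h g hIg t
        rw [hfach, hfacg] at hcnt
        rw [cLE_mul h' hh'0 c t, cLE_mul g' hg'0 c t,
            cLT_mul h' hh'0 c t, cLT_mul g' hg'0 c t] at hcnt
        constructor
        · split_ifs at hcnt <;> omega
        · split_ifs at hcnt <;> omega
      have hIH := ih h' f' g' (by omega) hh'lc hf'lc hg'lc hIf' hIg' α β hα hβ
      set p' := α • f' + β • g' with hp'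
      have hp_eq : α • f + β • g = (X - C c) * p' := by
        rw [hp']
        conv_lhs => rw [hfacf, hfacg]
        rw [mul_add, mul_smul_comm, mul_smul_comm]
      obtain ⟨hp'rr, -, hdegp', -⟩ := id hIH
      have hp'0 : p' ≠ 0 := hp'rr.1
      have hp0 : α • f + β • g ≠ 0 := by
        rw [hp_eq]
        exact mul_ne_zero (X_sub_C_ne_zero c) hp'0
      have hrootsp : (α • f + β • g).roots = {c} + p'.roots := by
        rw [hp_eq, roots_mul (hp_eq ▸ hp0), roots_X_sub_C]
      have hdegp : (α • f + β • g).natDegree = p'.natDegree + 1 := by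
        rw [hp_eq, natDegree_mul (X_sub_C_ne_zero c) hp'0, natDegree_X_sub_C]
        ring
      have hprr : RealRooted (α • f + β • g) := by
        apply rr_of_card _ hp0
        rw [hrootsp, Multiset.card_add, Multiset.card_singleton, rr_card' p' hp'rr]
        omega
      apply interlaces_of_cnt h (α • f + β • g) hhr hprr (by omega)
      intro t
      have hcnt := cnt_of_interlaces h' p' hIH t
      rw [hfach, hp_eq]
      rw [cLE_mul h' hh'0 c t, cLE_mul p' hp'0 c t,
          cLT_mul h' hh'0 c t, cLT_mul p' hp'0 c t]
      constructor
      · split_ifs <;> omega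
      · split_ifs <;> omega
    · push_neg at hc
      apply weak_direct h f g hfs hgs hIf hIg ?_ α β hα hβ
      intro c ⟨h1, h2, h3⟩
      exact hc c h1 h2 h3

end IL


/-- **Lemma 2.8.** Let `h, f, g` be nonzero standard real-rooted polynomials with `h ≺ f` and
`h ≺ g`. Then `h ≺ αf + βg` for all `α, β ≥ 0` not both zero; the same holds with `≺`
replaced throughout by `⪯`. -/
theorem strict_interlacing_nonneg_combination (h f g : Polynomial ℝ)
    (hh0 : h ≠ 0) (hf0 : f ≠ 0) (hg0 : g ≠ 0)
    (hhs : Standard h) (hfs : Standard f) (hgs : Standard g)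
    (hhr : RealRooted h) (hfr : RealRooted f) (hgr : RealRooted g) :
    (StrictInterlaces h f → StrictInterlaces h g →
      ∀ α β : ℝ, 0 ≤ α → 0 ≤ β → ¬ (α = 0 ∧ β = 0) →
        StrictInterlaces h (α • f + β • g)) ∧
    (Interlaces h f → Interlaces h g →
      ∀ α β : ℝ, 0 ≤ α → 0 ≤ β → ¬ (α = 0 ∧ β = 0) →
        Interlaces h (α • f + β • g)) := by
  constructor
  · intro hIf hIg α β hα hβ hne
    exact IL.strict_case h f g hfs hgs hIf hIg α β hα hβ hne
  · intro hIf hIg α β hα hβ hne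
    rcases eq_or_lt_of_le hα with hα0 | hαpos
    · have hβpos : 0 < β := by
        rcases eq_or_lt_of_le hβ with hβ0 | hβ'
        · exact absurd ⟨hα0.symm, hβ0.symm⟩ hne
        · exact hβ'
      rw [← hα0, zero_smul, zero_add]
      exact IL.interlaces_smul h g β hβpos hIg
    · rcases eq_or_lt_of_le hβ with hβ0 | hβpos
      · rw [← hβ0, zero_smul, add_zero]
        exact IL.interlaces_smul h f α hαpos hIf
      · exact IL.weak_main h.natDegree h f g le_rfl hhs hfs hgs hIf hIg α β hαpos hβpos
end

section
/- Let f(x) = a₀ + a₁x + ⋯ + aₙxⁿ and g be real-rooted real polynomials. Then the polynomial f(d/dx)g := a₀g + a₁g′ + ⋯ + aₙg⁽ⁿ⁾ is real-rooted or identically zero. Moreover, if N ≥ 1 is such that xᴺ does not divide f and deg g ≥ N − 1, then every multiple real zero of f(d/dx)g is a multiple zero of g. -/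
open Polynomial

/-- `f(d/dx) g = a₀ g + a₁ g′ + ⋯ + aₙ g⁽ⁿ⁾`, where `f = Σₖ aₖ xᵏ`. -/
noncomputable def applyDiffOp (f g : Polynomial ℝ) : Polynomial ℝ :=
  ∑ k ∈ Finset.range (f.natDegree + 1), C (f.coeff k) * derivative^[k] g

namespace HPaux

noncomputable def Dop : Module.End ℝ (Polynomial ℝ) := Polynomial.derivative

lemma applyDiffOp_eq (f g : Polynomial ℝ) : applyDiffOp f g = (aeval Dop f) g := by
  rw [applyDiffOp, aeval_eq_sum_range, LinearMap.sum_apply]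
  refine Finset.sum_congr rfl fun k _ => ?_
  rw [LinearMap.smul_apply, Module.End.pow_apply, smul_eq_C_mul]
  rfl

lemma applyDiffOp_mul (f₁ f₂ g : Polynomial ℝ) :
    applyDiffOp (f₁ * f₂) g = applyDiffOp f₁ (applyDiffOp f₂ g) := by
  simp [applyDiffOp_eq, map_mul, Module.End.mul_apply]

lemma applyDiffOp_C (c : ℝ) (g : Polynomial ℝ) : applyDiffOp (C c) g = C c * g := by
  rw [applyDiffOp_eq, aeval_C, Module.algebraMap_end_apply, smul_eq_C_mul]

lemma applyDiffOp_X_sub_C (t : ℝ) (g : Polynomial ℝ) :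
    applyDiffOp (X - C t) g = derivative g - C t * g := by
  rw [applyDiffOp_eq, map_sub, aeval_X, aeval_C, LinearMap.sub_apply,
    Module.algebraMap_end_apply, smul_eq_C_mul]
  rfl

lemma applyDiffOp_zero (f : Polynomial ℝ) : applyDiffOp f 0 = 0 := by
  rw [applyDiffOp_eq]; exact map_zero _

lemma eval_map_real (g : Polynomial ℝ) (t : ℝ) :
    (g.map (algebraMap ℝ ℂ)).eval ((t : ℝ) : ℂ) = ((g.eval t : ℝ) : ℂ) := by
  have h := eval₂_at_apply (p := g) (algebraMap ℝ ℂ) t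
  simpa [eval_map] using h

lemma exists_factor (g : Polynomial ℝ) (hg : RealRooted g) (h0 : g.natDegree ≠ 0) :
    ∃ t u, g = (X - C t) * u ∧ RealRooted u ∧ u.natDegree + 1 = g.natDegree := by
  have hg0 := hg.1
  have hmap : g.map (algebraMap ℝ ℂ) ≠ 0 := Polynomial.map_ne_zero hg0
  have hdeg : (g.map (algebraMap ℝ ℂ)).natDegree = g.natDegree :=
    natDegree_map_eq_of_injective (algebraMap ℝ ℂ).injective g
  have hpos : 0 < (g.map (algebraMap ℝ ℂ)).degree := by
    rw [← natDegree_pos_iff_degree_pos, hdeg]; omega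
  obtain ⟨z, hz⟩ := Complex.exists_root hpos
  have him : z.im = 0 := hg.2 z hz
  have hzre : z = ((z.re : ℝ) : ℂ) := Complex.ext (by simp) (by simp [him])
  have hroot : g.IsRoot z.re := by
    have h1 : ((g.eval z.re : ℝ) : ℂ) = 0 := by
      rw [← eval_map_real, ← hzre]; exact hz
    exact_mod_cast h1
  obtain ⟨u, hu⟩ := dvd_iff_isRoot.mpr hroot
  have hu0 : u ≠ 0 := by rintro rfl; rw [mul_zero] at hu; exact hg0 hu
  refine ⟨z.re, u, hu, ⟨hu0, ?_⟩, ?_⟩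
  · intro w hw
    apply hg.2 w
    have hw' : (u.map (algebraMap ℝ ℂ)).eval w = 0 := hw
    show (g.map (algebraMap ℝ ℂ)).eval w = 0
    rw [hu, Polynomial.map_mul, eval_mul, hw', mul_zero]
  · have h2 := natDegree_mul (X_sub_C_ne_zero z.re) hu0
    rw [← hu, natDegree_X_sub_C] at h2; omega

lemma S_neg : ∀ n : ℕ, ∀ g : Polynomial ℝ, RealRooted g → g.natDegree = n → ∀ θ : ℝ,
    g.eval θ ≠ 0 →
    eval θ (derivative (derivative g)) * eval θ g - (eval θ (derivative g))^2 ≤ 0 ∧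
    (g.natDegree ≠ 0 →
      eval θ (derivative (derivative g)) * eval θ g - (eval θ (derivative g))^2 < 0) := by
  intro n
  induction n using Nat.strong_induction_on with
  | _ n IH =>
    intro g hg hn θ hθ
    by_cases h0 : g.natDegree = 0
    · obtain ⟨c, rfl⟩ : ∃ c, g = C c := ⟨_, eq_C_of_natDegree_eq_zero h0⟩
      exact ⟨by simp, fun h => absurd h0 h⟩
    · obtain ⟨t, u, rfl, hu, hdu⟩ := exists_factor g hg h0
      have hu0 : eval θ u ≠ 0 := fun h => hθ (by simp [h])
      have hS := (IH u.natDegree (by omega) u hu rfl θ hu0).1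
      have e2 : derivative ((X - C t) * u) = u + (X - C t) * derivative u := by
        rw [derivative_mul]; simp
      have E1 : eval θ ((X - C t) * u) = (θ - t) * eval θ u := by simp
      have E2 : eval θ (derivative ((X - C t) * u))
          = eval θ u + (θ - t) * eval θ (derivative u) := by rw [e2]; simp
      have E3 : eval θ (derivative (derivative ((X - C t) * u)))
          = 2 * eval θ (derivative u) + (θ - t) * eval θ (derivative (derivative u)) := by
        rw [e2, derivative_add, derivative_mul]
        simp
        ring
      set a := eval θ u
      set b := eval θ (derivative u)
      set c := eval θ (derivative (derivative u))
      have key : eval θ (derivative (derivative ((X - C t) * u))) * eval θ ((X - C t) * u)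
          - (eval θ (derivative ((X - C t) * u)))^2
          = (θ - t)^2 * (c * a - b^2) - a^2 := by
        rw [E1, E2, E3]; ring
      have hlt : eval θ (derivative (derivative ((X - C t) * u))) * eval θ ((X - C t) * u)
          - (eval θ (derivative ((X - C t) * u)))^2 < 0 := by
        rw [key]
        nlinarith [sq_nonneg (θ - t), mul_self_pos.mpr hu0, hS,
          mul_nonneg (sq_nonneg (θ - t)) (neg_nonneg.mpr hS)]
      exact ⟨le_of_lt hlt, fun _ => hlt⟩

lemma T_lemma : ∀ n : ℕ, ∀ g : Polynomial ℝ, RealRooted g → g.natDegree = n → ∀ z : ℂ,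
    z.im ≠ 0 →
    (g.map (algebraMap ℝ ℂ)).eval z ≠ 0 ∧
    ((derivative (g.map (algebraMap ℝ ℂ))).eval z
      * (starRingEnd ℂ) ((g.map (algebraMap ℝ ℂ)).eval z)).im * z.im ≤ 0 ∧
    (g.natDegree ≠ 0 →
      ((derivative (g.map (algebraMap ℝ ℂ))).eval z
        * (starRingEnd ℂ) ((g.map (algebraMap ℝ ℂ)).eval z)).im * z.im < 0) := by
  intro n
  induction n using Nat.strong_induction_on with
  | _ n IH =>
    intro g hg hn z hz
    by_cases h0 : g.natDegree = 0
    · obtain ⟨c, rfl⟩ : ∃ c, g = C c := ⟨_, eq_C_of_natDegree_eq_zero h0⟩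
      have hc0 : c ≠ 0 := fun h => hg.1 (by simp [h])
      refine ⟨?_, ?_, fun h => absurd h0 h⟩
      · simp [map_C, hc0]
      · simp [map_C]
    · obtain ⟨t, u, rfl, hu, hdu⟩ := exists_factor g hg h0
      obtain ⟨hU0, hTle, _⟩ := IH u.natDegree (by omega) u hu rfl z hz
      set U := u.map (algebraMap ℝ ℂ) with hUdef
      set A := U.eval z with hA
      set B := (derivative U).eval z with hB
      set w := z - (t : ℂ) with hw
      have hmap : ((X - C t) * u).map (algebraMap ℝ ℂ) = (X - C ((t : ℝ) : ℂ)) * U := by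
        rw [Polynomial.map_mul, Polynomial.map_sub, map_X, map_C]
        norm_num
        exact Or.inl rfl
      have hwim : w.im = z.im := by simp [hw]
      have hwne : w ≠ 0 := fun h => hz (by rw [← hwim, h]; simp)
      have hev : (((X - C t) * u).map (algebraMap ℝ ℂ)).eval z = w * A := by
        rw [hmap]; simp [hw]
        exact Or.inl rfl
      have hevd : (derivative (((X - C t) * u).map (algebraMap ℝ ℂ))).eval z = A + w * B := by
        rw [hmap, derivative_mul]
        simp [hw]
        rfl
      have hprod : (derivative (((X - C t) * u).map (algebraMap ℝ ℂ))).eval z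
            * (starRingEnd ℂ) ((((X - C t) * u).map (algebraMap ℝ ℂ)).eval z)
          = ((Complex.normSq A : ℝ) : ℂ) * (starRingEnd ℂ) w
            + ((Complex.normSq w : ℝ) : ℂ) * (B * (starRingEnd ℂ) A) := by
        rw [hevd, hev, map_mul, ← Complex.mul_conj A, ← Complex.mul_conj w]
        ring
      have him : ((derivative (((X - C t) * u).map (algebraMap ℝ ℂ))).eval z
            * (starRingEnd ℂ) ((((X - C t) * u).map (algebraMap ℝ ℂ)).eval z)).im
          = Complex.normSq A * (-z.im)
            + Complex.normSq w * (B * (starRingEnd ℂ) A).im := by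
        rw [hprod]
        simp [Complex.add_im, Complex.mul_im, Complex.conj_im, hwim]
      have hAp : 0 < Complex.normSq A := Complex.normSq_pos.mpr hU0
      have hstrict : ((derivative (((X - C t) * u).map (algebraMap ℝ ℂ))).eval z
            * (starRingEnd ℂ) ((((X - C t) * u).map (algebraMap ℝ ℂ)).eval z)).im * z.im < 0 := by
        rw [him]
        nlinarith [mul_self_pos.mpr hz, Complex.normSq_nonneg w, hTle,
          mul_nonneg (Complex.normSq_nonneg w) (neg_nonneg.mpr hTle)]
      refine ⟨?_, le_of_lt hstrict, fun _ => hstrict⟩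
      rw [hev]
      exact mul_ne_zero hwne hU0

lemma step1 (g : Polynomial ℝ) (hg : RealRooted g) (r : ℝ) :
    derivative g - C r * g = 0 ∨ RealRooted (derivative g - C r * g) := by
  by_cases h0 : g.natDegree = 0
  · obtain ⟨c, rfl⟩ : ∃ c, g = C c := ⟨_, eq_C_of_natDegree_eq_zero h0⟩
    have hc0 : c ≠ 0 := fun h => hg.1 (by simp [h])
    by_cases hr : r = 0
    · left; simp [hr]
    · right
      have hval : derivative (C c) - C r * C c = C (-(r * c)) := by
        rw [derivative_C, ← C_mul, C_neg]; ring
      rw [hval]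
      refine ⟨by simp [hr, hc0], ?_⟩
      intro z hz
      exfalso
      have h1 : ((-(r * c) : ℝ) : ℂ) = 0 := by
        have := hz
        simpa [map_C, IsRoot] using this
      have : -(r * c) = 0 := by exact_mod_cast h1
      exact hr (by rcases mul_eq_zero.mp (neg_eq_zero.mp this) with h | h
                   · exact h
                   · exact absurd h hc0)
  · right
    have hne : derivative g - C r * g ≠ 0 := by
      intro h
      have heq : derivative g = C r * g := by
        have := sub_eq_zero.mp h; exact this
      have hlt := natDegree_derivative_lt h0
      by_cases hr : r = 0
      · rw [hr, C_0, zero_mul] at heq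
        exact h0 (natDegree_eq_zero_of_derivative_eq_zero heq)
      · rw [heq, natDegree_C_mul hr] at hlt; omega
    refine ⟨hne, ?_⟩
    intro z hz
    by_contra hzim
    obtain ⟨hG, _, hTs⟩ := T_lemma g.natDegree g hg rfl z hzim
    have hTs := hTs h0
    have hmap : (derivative g - C r * g).map (algebraMap ℝ ℂ)
        = derivative (g.map (algebraMap ℝ ℂ)) - C ((r : ℝ) : ℂ) * g.map (algebraMap ℝ ℂ) := by
      rw [Polynomial.map_sub, Polynomial.map_mul, map_C, derivative_map]
      norm_num
    have heval : (derivative (g.map (algebraMap ℝ ℂ))).eval z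
        = ((r : ℝ) : ℂ) * (g.map (algebraMap ℝ ℂ)).eval z := by
      have hz' : ((derivative g - C r * g).map (algebraMap ℝ ℂ)).eval z = 0 := hz
      rw [hmap, eval_sub, eval_mul, eval_C] at hz'
      linear_combination hz'
    have hT0 : ((derivative (g.map (algebraMap ℝ ℂ))).eval z
        * (starRingEnd ℂ) ((g.map (algebraMap ℝ ℂ)).eval z)).im = 0 := by
      rw [heval, mul_assoc, Complex.mul_conj]
      simp
    rw [hT0, zero_mul] at hTs
    exact lt_irrefl 0 hTs

lemma step2 (g : Polynomial ℝ) (hg : RealRooted g) (r θ : ℝ)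
    (hside : g.natDegree ≠ 0 ∨ r ≠ 0)
    (hd : (X - C θ)^2 ∣ (derivative g - C r * g)) : (X - C θ)^2 ∣ g := by
  by_cases h0 : g.natDegree = 0
  · exfalso
    obtain ⟨c, rfl⟩ : ∃ c, g = C c := ⟨_, eq_C_of_natDegree_eq_zero h0⟩
    have hr : r ≠ 0 := hside.resolve_left (not_not_intro h0)
    have hc0 : c ≠ 0 := fun h => hg.1 (by simp [h])
    have hval : derivative (C c) - C r * C c = C (-(r * c)) := by
      rw [derivative_C, ← C_mul, C_neg]; ring
    rw [hval] at hd
    have hne : (C (-(r * c)) : Polynomial ℝ) ≠ 0 := by simp [hr, hc0]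
    have hle := natDegree_le_of_dvd hd hne
    rw [natDegree_pow, natDegree_X_sub_C, natDegree_C] at hle
    omega
  · obtain ⟨p, hp⟩ := hd
    have hv1 : (derivative g - C r * g).eval θ = 0 := by rw [hp]; simp
    have hv2 : (derivative (derivative g - C r * g)).eval θ = 0 := by
      rw [hp, derivative_mul, derivative_pow]
      simp
    have hv1' : eval θ (derivative g) = r * eval θ g := by
      rw [eval_sub, eval_mul, eval_C, sub_eq_zero] at hv1
      exact hv1
    have hv2' : eval θ (derivative (derivative g)) = r * eval θ (derivative g) := by
      rw [derivative_sub, derivative_C_mul, eval_sub, eval_mul, eval_C, sub_eq_zero] at hv2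
      exact hv2
    rcases Nat.lt_or_ge (rootMultiplicity θ g) 2 with hm | hm
    · exfalso
      rcases Nat.lt_or_ge (rootMultiplicity θ g) 1 with hm0 | hm1
      · -- multiplicity 0 : not a root of g
        have hgθ : g.eval θ ≠ 0 := by
          intro h
          have h1 : (1 : ℕ) ≤ rootMultiplicity θ g :=
            (le_rootMultiplicity_iff hg.1).mpr (by rw [pow_one]; exact dvd_iff_isRoot.mpr h)
          omega
        have hS := (S_neg g.natDegree g hg rfl θ hgθ).2 h0
        rw [hv2', hv1'] at hS
        nlinarith [hS]
      · -- multiplicity exactly 1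
        have hm1' : rootMultiplicity θ g = 1 := by omega
        have hdvd1 : (X - C θ) ∣ g := by
          have := pow_rootMultiplicity_dvd g θ
          rwa [hm1', pow_one] at this
        obtain ⟨u, hu⟩ := hdvd1
        have huθ : eval θ u ≠ 0 := by
          intro h
          obtain ⟨v, hv⟩ := dvd_iff_isRoot.mpr h
          have h2 : (X - C θ)^2 ∣ g := ⟨v, by rw [hu, hv]; ring⟩
          have := (le_rootMultiplicity_iff hg.1).mpr h2
          omega
        have hder : eval θ (derivative g) = eval θ u := by
          rw [hu, derivative_mul]; simp
        have hgθ0 : eval θ g = 0 := by rw [hu]; simp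
        rw [hgθ0, mul_zero, hder] at hv1'
        exact huθ hv1'
    · exact dvd_trans (pow_dvd_pow _ hm) (pow_rootMultiplicity_dvd g θ)

lemma realRooted_C_mul (c : ℝ) (hc : c ≠ 0) (g : Polynomial ℝ) (hg : RealRooted g) :
    RealRooted (C c * g) := by
  refine ⟨mul_ne_zero (by simp [hc]) hg.1, ?_⟩
  intro z hz
  apply hg.2 z
  have h1 : (algebraMap ℝ ℂ) c * (g.map (algebraMap ℝ ℂ)).eval z = 0 := by
    have hz' : (((C c * g).map (algebraMap ℝ ℂ))).eval z = 0 := hz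
    simpa [Polynomial.map_mul, map_C] using hz'
  show (g.map (algebraMap ℝ ℂ)).eval z = 0
  rcases mul_eq_zero.mp h1 with h | h
  · exact absurd h (by simpa using hc)
  · exact h

lemma part1 : ∀ n : ℕ, ∀ f g : Polynomial ℝ, RealRooted f → f.natDegree = n → RealRooted g →
    applyDiffOp f g = 0 ∨ RealRooted (applyDiffOp f g) := by
  intro n
  induction n using Nat.strong_induction_on with
  | _ n IH =>
    intro f g hf hn hg
    by_cases h0 : f.natDegree = 0
    · obtain ⟨c, rfl⟩ : ∃ c, f = C c := ⟨_, eq_C_of_natDegree_eq_zero h0⟩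
      have hc0 : c ≠ 0 := fun h => hf.1 (by simp [h])
      right
      rw [applyDiffOp_C]
      exact realRooted_C_mul c hc0 g hg
    · obtain ⟨t, f₁, hft, hf₁, hdf⟩ := exists_factor f hf h0
      have hcomm : f = f₁ * (X - C t) := by rw [hft]; ring
      rw [hcomm, applyDiffOp_mul, applyDiffOp_X_sub_C]
      rcases step1 g hg t with h | h
      · left; rw [h, applyDiffOp_zero]
      · exact IH f₁.natDegree (by omega) f₁ (derivative g - C t * g) hf₁ rfl h

lemma part2 : ∀ n : ℕ, ∀ f g : Polynomial ℝ, ∀ θ : ℝ, RealRooted f → f.natDegree = n →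
    RealRooted g → rootMultiplicity 0 f ≤ g.natDegree →
    (X - C θ)^2 ∣ applyDiffOp f g → (X - C θ)^2 ∣ g := by
  intro n
  induction n using Nat.strong_induction_on with
  | _ n IH =>
    intro f g θ hf hn hg hrm hdvd
    by_cases h0 : f.natDegree = 0
    · obtain ⟨c, rfl⟩ : ∃ c, f = C c := ⟨_, eq_C_of_natDegree_eq_zero h0⟩
      have hc0 : c ≠ 0 := fun h => hf.1 (by simp [h])
      rw [applyDiffOp_C] at hdvd
      exact ((isUnit_C.mpr (isUnit_iff_ne_zero.mpr hc0)).dvd_mul_left).mp hdvd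
    · obtain ⟨t, f₁, hft, hf₁, hdf⟩ := exists_factor f hf h0
      have hf0 : f ≠ 0 := hf.1
      have hcomm : f = f₁ * (X - C t) := by rw [hft]; ring
      rw [hcomm, applyDiffOp_mul, applyDiffOp_X_sub_C] at hdvd
      have hrmf : rootMultiplicity (0:ℝ) f
          = rootMultiplicity (0:ℝ) f₁ + rootMultiplicity (0:ℝ) (X - C t) := by
        rw [hcomm, rootMultiplicity_mul (hcomm ▸ hf0)]
      by_cases ht : t = 0
      · subst ht
        have hrm1 : rootMultiplicity (0:ℝ) (X - C (0:ℝ)) = 1 := rootMultiplicity_X_sub_C_self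
        have hdegg : rootMultiplicity 0 f₁ + 1 ≤ g.natDegree := by
          rw [hrmf, hrm1] at hrm; omega
        have hg0 : g.natDegree ≠ 0 := by omega
        have hdne : derivative g ≠ 0 :=
          fun hh => hg0 (natDegree_eq_zero_of_derivative_eq_zero hh)
        have hdd : rootMultiplicity 0 f₁ ≤ (derivative g).natDegree := by
          have hcoeff : (derivative g).coeff (g.natDegree - 1) ≠ 0 := by
            rw [coeff_derivative]
            have hgn : g.natDegree - 1 + 1 = g.natDegree := by omega
            rw [hgn]
            refine mul_ne_zero ?_ ?_
            · exact leadingCoeff_ne_zero.mpr hg.1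
            · have : (0 : ℝ) < (g.natDegree - 1 : ℕ) + 1 := by positivity
              exact_mod_cast this.ne'
          have := le_natDegree_of_ne_zero hcoeff
          omega
        have hrr : RealRooted (derivative g) := by
          have := (step1 g hg 0).resolve_left (by simpa using hdne)
          simpa using this
        have hdvd' : (X - C θ)^2 ∣ derivative g := by
          apply IH f₁.natDegree (by omega) f₁ (derivative g) θ hf₁ rfl hrr hdd
          simpa using hdvd
        apply step2 g hg 0 θ (Or.inl hg0)
        simpa using hdvd'
      · have hrm0 : rootMultiplicity (0:ℝ) (X - C t) = 0 := by
          apply rootMultiplicity_eq_zero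
          simp [IsRoot, ht]
        have hdd : rootMultiplicity 0 f₁ ≤ g.natDegree := by
          rw [hrmf, hrm0] at hrm; omega
        have hhne : (derivative g - C t * g) ≠ 0 ∧
            (derivative g - C t * g).natDegree = g.natDegree := by
          by_cases hg0 : g.natDegree = 0
          · obtain ⟨c, rfl⟩ : ∃ c, g = C c := ⟨_, eq_C_of_natDegree_eq_zero hg0⟩
            have hc0 : c ≠ 0 := fun hh => hg.1 (by simp [hh])
            have hval : derivative (C c) - C t * C c = C (-(t * c)) := by
              rw [derivative_C, ← C_mul, C_neg]; ring
            rw [hval]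
            constructor
            · simp [ht, hc0]
            · rw [hg0]; exact natDegree_C _
          · have hlt : (derivative g).natDegree < (C t * g).natDegree := by
              rw [natDegree_C_mul ht]
              exact natDegree_derivative_lt hg0
            have hdeg := natDegree_sub_eq_right_of_natDegree_lt hlt
            rw [natDegree_C_mul ht] at hdeg
            constructor
            · intro hh
              rw [hh, natDegree_zero] at hdeg
              exact hg0 hdeg.symm
            · exact hdeg
        have hrr : RealRooted (derivative g - C t * g) := (step1 g hg t).resolve_left hhne.1
        have hih := IH f₁.natDegree (by omega) f₁ (derivative g - C t * g) θ hf₁ rfl hrr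
          (by rw [hhne.2]; exact hdd) hdvd
        exact step2 g hg t θ (Or.inr ht) hih

end HPaux

/-- **Hermite–Poulain theorem.** If `f` and `g` are real-rooted then `f(d/dx) g` is
real-rooted or zero. Moreover, if `N ≥ 1`, `xᴺ ∤ f` and `deg g ≥ N − 1`, then every multiple
real zero of `f(d/dx) g` is a multiple zero of `g`. -/
theorem hermite_poulain (f g : Polynomial ℝ) (hf : RealRooted f) (hg : RealRooted g) :
    (applyDiffOp f g = 0 ∨ RealRooted (applyDiffOp f g)) ∧
    (∀ N : ℕ, 1 ≤ N → ¬ (X ^ N ∣ f) → N - 1 ≤ g.natDegree →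
      ∀ θ : ℝ, (X - C θ) ^ 2 ∣ applyDiffOp f g → (X - C θ) ^ 2 ∣ g) := by
  constructor
  · exact HPaux.part1 f.natDegree f g hf rfl hg
  · intro N hN hXN hdeg θ ht
    have hrm : rootMultiplicity 0 f ≤ N - 1 := by
      by_contra hc
      push_neg at hc
      apply hXN
      have h1 : (X : Polynomial ℝ)^N ∣ (X - C 0)^(rootMultiplicity 0 f) := by
        simp only [C_0, sub_zero]
        exact pow_dvd_pow _ (by omega)
      exact h1.trans (pow_rootMultiplicity_dvd f 0)
    exact HPaux.part2 f.natDegree f g θ hf rfl hg (by omega) ht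
end

section
/- If a₀ + a₁x + a₂x² + ⋯ + aₙxⁿ is a real-rooted real polynomial, then so is a₀ + a₁x + (a₂/2!)x² + ⋯ + (aₙ/n!)xⁿ. -/
open Polynomial

namespace Laguerre

lemma rr_of_card {p : ℝ[X]} (hp : p ≠ 0) (h : Multiset.card p.roots = p.natDegree) :
    RealRooted p := by
  refine ⟨hp, fun z hz => ?_⟩
  have hs : p.Splits := (splits_iff_card_roots).2 h
  have hfac := hs.eq_prod_roots
  rw [IsRoot, hfac, Polynomial.map_mul, Polynomial.map_multiset_prod, eval_mul,
    eval_multiset_prod, Multiset.map_map, Multiset.map_map] at hz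
  rcases mul_eq_zero.1 hz with h1 | h2
  · rw [map_C, eval_C] at h1
    exact absurd ((_root_.map_eq_zero (algebraMap ℝ ℂ)).1 h1)
      (leadingCoeff_ne_zero.2 hp)
  · obtain ⟨r, hr, hq0⟩ := Multiset.mem_map.1 (Multiset.prod_eq_zero_iff.1 h2)
    simp only [Function.comp_apply, Polynomial.map_sub, map_X, map_C, eval_sub, eval_X,
      eval_C] at hq0
    rw [sub_eq_zero] at hq0
    rw [hq0]
    simp [Complex.ofReal_im]

lemma card_of_rr_aux : ∀ n (p : ℝ[X]), p.natDegree = n → RealRooted p →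
    Multiset.card p.roots = p.natDegree := by
  intro n
  induction n using Nat.strong_induction_on with
  | _ n ih =>
    intro p hdeg hp
    rcases eq_or_ne n 0 with rfl | hn
    · rw [eq_C_of_natDegree_eq_zero hdeg, roots_C, natDegree_C]
      rfl
    · have hp0 : p ≠ 0 := hp.1
      have hdegpos : 0 < p.degree := natDegree_pos_iff_degree_pos.1 (hdeg ▸ Nat.pos_of_ne_zero hn)
      have hmapdeg : 0 < (p.map (algebraMap ℝ ℂ)).degree := by
        rwa [degree_map]
      obtain ⟨z, hz⟩ := Complex.exists_root hmapdeg
      have hzim := hp.2 z hz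
      have hzx : z = (algebraMap ℝ ℂ) z.re := by
        apply Complex.ext <;> simp [hzim]
      have hx : p.IsRoot z.re := by
        have : eval z (p.map (algebraMap ℝ ℂ)) = (algebraMap ℝ ℂ) (eval z.re p) := by
          conv_lhs => rw [hzx]
          rw [eval_map, eval₂_at_apply]
        have h0 := hz
        rw [IsRoot, this] at h0
        exact (_root_.map_eq_zero (algebraMap ℝ ℂ)).1 h0
      set g := p /ₘ (X - C z.re) with hgdef
      have hg : (X - C z.re) * g = p := (mul_divByMonic_eq_iff_isRoot).2 hx
      have hg0 : g ≠ 0 := by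
        intro h
        rw [h, mul_zero] at hg
        exact hp0 hg.symm
      have hXg : (X - C z.re) ≠ (0 : ℝ[X]) := X_sub_C_ne_zero z.re
      have hdegg : g.natDegree = n - 1 := by
        have := natDegree_mul hXg hg0
        rw [hg, natDegree_X_sub_C, hdeg] at this
        omega
      have hgr : RealRooted g := by
        refine ⟨hg0, fun w hw => ?_⟩
        apply hp.2 w
        rw [IsRoot, ← hg, Polynomial.map_mul, eval_mul]
        rw [IsRoot] at hw
        rw [hw, mul_zero]
      have hcardg := ih (n-1) (by omega) g hdegg hgr
      rw [← hg, roots_mul (hg ▸ hp0), roots_X_sub_C, natDegree_mul hXg hg0,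
        natDegree_X_sub_C]
      simp only [Multiset.card_add, Multiset.card_singleton]
      omega

lemma card_of_rr {p : ℝ[X]} (hp : RealRooted p) : Multiset.card p.roots = p.natDegree :=
  card_of_rr_aux _ p rfl hp

lemma step_deriv {q : ℝ[X]} (hq : q ≠ 0) (hcard : Multiset.card q.roots = q.natDegree)
    (hd : q.natDegree ≠ 0) :
    derivative q ≠ 0 ∧ Multiset.card (derivative q).roots = (derivative q).natDegree ∧
      (derivative q).natDegree = q.natDegree - 1 := by
  have h0 : derivative q ≠ 0 := fun h => hd (by rw [eq_C_of_derivative_eq_zero h]; simp)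
  have hdd : (derivative q).natDegree = q.natDegree - 1 := by
    refine le_antisymm (natDegree_derivative_le q) (le_natDegree_of_ne_zero ?_)
    rw [coeff_derivative]
    have h1 : q.natDegree - 1 + 1 = q.natDegree := by omega
    rw [h1, ← leadingCoeff]
    have : q.leadingCoeff ≠ 0 := leadingCoeff_ne_zero.2 hq
    positivity
  have h1 := card_roots_le_derivative q
  have h2 := card_roots' (derivative q)
  refine ⟨h0, by omega, hdd⟩

open Filter Topology Set

/-- derivative of `eval x q * exp (-(c*x))`. -/
lemma hasDerivAt_F (q : ℝ[X]) (c x : ℝ) :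
    HasDerivAt (fun x => eval x q * Real.exp (-(c*x)))
      (eval x (derivative q - c • q) * Real.exp (-(c*x))) x := by
  have h1 : HasDerivAt (fun x : ℝ => -(c*x)) (-c) x := by
    simpa using ((hasDerivAt_id x).const_mul (-c))
  have h2 : HasDerivAt (fun x : ℝ => Real.exp (-(c*x))) (Real.exp (-(c*x)) * -c) x :=
    (Real.hasDerivAt_exp _).comp x h1
  have h3 : HasDerivAt (fun x => eval x q * Real.exp (-(c*x))) _ x := (q.hasDerivAt x).mul h2
  convert h3 using 1
  simp only [eval_sub, eval_smul, smul_eq_mul]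
  ring

lemma tendsto_F {c : ℝ} (hc : 0 < c) (q : ℝ[X]) :
    Tendsto (fun x => eval x q * Real.exp (-(c*x))) atTop (𝓝 0) := by
  have h1 := Polynomial.tendsto_div_exp_atTop (q.comp (C c⁻¹ * X))
  have h2 : Tendsto (fun x : ℝ => c * x) atTop atTop :=
    Tendsto.const_mul_atTop hc tendsto_id
  have h3 := h1.comp h2
  convert h3 using 2 with x
  simp only [Function.comp_apply, eval_comp, eval_mul, eval_C, eval_X]
  rw [inv_mul_cancel_left₀ (ne_of_gt hc), Real.exp_neg, div_eq_mul_inv]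

/-- Rolle-type lemma on `(a, ∞)`. -/
lemma exists_deriv_zero_Ioi {F : ℝ → ℝ} (hF : Differentiable ℝ F) {a x₀ : ℝ} (hax : a < x₀)
    (hFa : F a = 0) (hF0 : 0 < F x₀) (hlim : Tendsto F atTop (𝓝 0)) :
    ∃ z, a < z ∧ deriv F z = 0 := by
  obtain ⟨x₁, hx₁, hx₁'⟩ := ((hlim.eventually_lt_const hF0).and (eventually_ge_atTop (x₀ + 1))).exists
  have hax₁ : a < x₁ := by linarith
  obtain ⟨y, hy, hymax⟩ := isCompact_Icc.exists_isMaxOn ⟨a, Set.left_mem_Icc.2 hax₁.le⟩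
    hF.continuous.continuousOn
  have hyx₀ : F x₀ ≤ F y := hymax (Set.mem_Icc.2 ⟨by linarith, by linarith⟩)
  have hya : y ≠ a := fun h => by rw [h, hFa] at hyx₀; linarith
  have hyx₁ : y ≠ x₁ := fun h => by rw [h] at hyx₀; linarith
  have hyIoo : y ∈ Set.Ioo a x₁ := by
    rcases Set.mem_Icc.1 hy with ⟨h1, h2⟩
    exact ⟨lt_of_le_of_ne h1 (Ne.symm hya), lt_of_le_of_ne h2 hyx₁⟩
  refine ⟨y, hyIoo.1, ?_⟩
  exact (hymax.isLocalMax (Icc_mem_nhds hyIoo.1 hyIoo.2)).deriv_eq_zero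

lemma exists_root_beyond (q : ℝ[X]) {c a : ℝ} (hc : 0 < c) (ha : eval a q = 0)
    (hroots : ∀ x, a < x → eval x q ≠ 0) :
    ∃ z, a < z ∧ eval z (derivative q - c • q) = 0 := by
  set F := fun x => eval x q * Real.exp (-(c*x)) with hFdef
  have hdiff : Differentiable ℝ F := fun x => (hasDerivAt_F q c x).differentiableAt
  have hderiv : ∀ x, deriv F x = eval x (derivative q - c • q) * Real.exp (-(c*x)) :=
    fun x => (hasDerivAt_F q c x).deriv
  have hFa : F a = 0 := by simp [hFdef, ha]
  have hlim : Tendsto F atTop (𝓝 0) := tendsto_F hc q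
  have hFx₀ : F (a+1) ≠ 0 := by
    simp only [hFdef, mul_ne_zero_iff]
    exact ⟨hroots _ (by linarith), Real.exp_ne_zero _⟩
  have key : ∃ z, a < z ∧ deriv F z = 0 := by
    rcases hFx₀.lt_or_gt with hneg | hpos
    · have hlim' : Tendsto (fun x => -F x) atTop (𝓝 0) := by
        simpa using hlim.neg
      obtain ⟨z, hz, hz'⟩ := exists_deriv_zero_Ioi hdiff.neg (by linarith : a < a+1)
        (by simp [hFa]) (by simp only [Pi.neg_apply]; linarith) hlim'
      refine ⟨z, hz, ?_⟩
      have := deriv.neg (f := F) (x := z)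
      rw [this] at hz'
      linarith
    · exact exists_deriv_zero_Ioi hdiff (by linarith : a < a+1) hFa hpos hlim
  obtain ⟨z, hz, hz'⟩ := key
  rw [hderiv z, mul_eq_zero] at hz'
  rcases hz' with h | h
  · exact ⟨z, hz, h⟩
  · exact absurd h (Real.exp_ne_zero _)

lemma exists_root_below (q : ℝ[X]) {c a : ℝ} (hc : c < 0) (ha : eval a q = 0)
    (hroots : ∀ x, x < a → eval x q ≠ 0) :
    ∃ z, z < a ∧ eval z (derivative q - c • q) = 0 := by
  have hc' : (0:ℝ) < -c := by linarith
  have ha' : eval (-a) (q.comp (-X)) = 0 := by simpa [eval_comp] using ha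
  have hroots' : ∀ x, -a < x → eval x (q.comp (-X)) ≠ 0 := by
    intro x hx
    simp only [eval_comp, eval_neg, eval_X]
    exact hroots _ (by linarith)
  obtain ⟨z, hz, hz'⟩ := exists_root_beyond (q.comp (-X)) hc' ha' hroots'
  refine ⟨-z, by linarith, ?_⟩
  have hcompder : derivative (q.comp (-X)) = -((derivative q).comp (-X)) := by
    rw [derivative_comp]
    simp
  rw [hcompder] at hz'
  simp only [eval_sub, eval_neg, eval_comp, eval_smul, eval_neg, eval_X, smul_eq_mul] at hz' ⊢
  linarith

lemma step_c {q : ℝ[X]} (hq : q ≠ 0) (hcard : Multiset.card q.roots = q.natDegree)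
    {c : ℝ} (hc : c ≠ 0) :
    (derivative q - c • q) ≠ 0 ∧
      Multiset.card (derivative q - c • q).roots = (derivative q - c • q).natDegree ∧
      (derivative q - c • q).natDegree = q.natDegree := by
  classical
  set n := q.natDegree with hn
  set r := derivative q - c • q with hrdef
  have hcoeff : r.coeff n = -(c * q.leadingCoeff) := by
    rw [hrdef, coeff_sub, coeff_derivative, coeff_smul,
      coeff_eq_zero_of_natDegree_lt (by omega : n < n + 1), smul_eq_mul, ← leadingCoeff]
    ring
  have hlc : q.leadingCoeff ≠ 0 := leadingCoeff_ne_zero.2 hq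
  have hcoeffne : r.coeff n ≠ 0 := by
    rw [hcoeff]
    exact neg_ne_zero.2 (mul_ne_zero hc hlc)
  have hrne : r ≠ 0 := fun h => hcoeffne (by rw [h, coeff_zero])
  have hdeg : r.natDegree = n := by
    refine le_antisymm ((natDegree_sub_le _ _).trans (max_le ?_ ?_)) (le_natDegree_of_ne_zero hcoeffne)
    · exact (natDegree_derivative_le q).trans (Nat.sub_le _ _)
    · exact natDegree_smul_le c q
  rcases eq_or_ne n 0 with hn0 | hn0
  · have := card_roots' r
    constructor
    · exact hrne
    constructor
    · omega
    · omega
  -- main case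
  set s := q.roots.toFinset with hsdef
  set t := r.roots.toFinset with htdef
  have hs : s.Nonempty := by
    rw [hsdef, Multiset.toFinset_nonempty]
    intro h
    rw [h] at hcard
    simp at hcard
    omega
  -- obtain the extra root z₀ beyond the extreme root, and a sentinel B
  have hrooteval : ∀ x ∈ s, eval x q = 0 := fun x hx =>
    (mem_roots'.1 (Multiset.mem_toFinset.1 hx)).2
  obtain ⟨z₀, hz₀rt, hside⟩ :
      ∃ z₀, eval z₀ r = 0 ∧ ((∀ x ∈ s, x < z₀) ∨ (∀ x ∈ s, z₀ < x)) := by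
    rcases hc.lt_or_gt with hcneg | hcpos
    · -- c < 0 : extra root below the min root
      set a := s.min' hs with hadef
      have ha : eval a q = 0 := hrooteval _ (s.min'_mem hs)
      have hbelow : ∀ x, x < a → eval x q ≠ 0 := by
        intro x hx hx0
        have : x ∈ s := Multiset.mem_toFinset.2 (by rw [mem_roots']; exact ⟨hq, hx0⟩)
        exact absurd (s.min'_le x this) (by linarith)
      obtain ⟨z, hz, hz'⟩ := exists_root_below q hcneg ha hbelow
      exact ⟨z, hz', Or.inr (fun x hx => lt_of_lt_of_le hz (s.min'_le x hx))⟩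
    · -- c > 0 : extra root above the max root
      set a := s.max' hs with hadef
      have ha : eval a q = 0 := hrooteval _ (s.max'_mem hs)
      have habove : ∀ x, a < x → eval x q ≠ 0 := by
        intro x hx hx0
        have : x ∈ s := Multiset.mem_toFinset.2 (by rw [mem_roots']; exact ⟨hq, hx0⟩)
        exact absurd (s.le_max' x this) (by linarith)
      obtain ⟨z, hz, hz'⟩ := exists_root_beyond q hcpos ha habove
      exact ⟨z, hz', Or.inl (fun x hx => lt_of_le_of_lt (s.le_max' x hx) hz)⟩
  have hz₀t : z₀ ∈ t := Multiset.mem_toFinset.2 (by rw [mem_roots']; exact ⟨hrne, hz₀rt⟩)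
  -- sentinel B beyond everything (same side as z₀)
  obtain ⟨B, hBs, hBt, hBside⟩ :
      ∃ B, B ∉ s ∧ B ∉ t ∧ ((∀ x ∈ s, x < z₀) ∧ z₀ < B ∨ (∀ x ∈ s, z₀ < x) ∧ B < z₀) := by
    rcases hside with hpos | hneg
    · set u := insert z₀ (s ∪ t) with hudef
      have hu : u.Nonempty := Finset.insert_nonempty _ _
      refine ⟨u.max' hu + 1, ?_, ?_, Or.inl ⟨hpos, ?_⟩⟩
      · intro h
        have := u.le_max' _ (Finset.mem_insert.2 (Or.inr (Finset.mem_union_left _ h)))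
        linarith
      · intro h
        have := u.le_max' _ (Finset.mem_insert.2 (Or.inr (Finset.mem_union_right _ h)))
        linarith
      · have := u.le_max' z₀ (Finset.mem_insert_self _ _)
        linarith
    · set u := insert z₀ (s ∪ t) with hudef
      have hu : u.Nonempty := Finset.insert_nonempty _ _
      refine ⟨u.min' hu - 1, ?_, ?_, Or.inr ⟨hneg, ?_⟩⟩
      · intro h
        have := u.min'_le _ (Finset.mem_insert.2 (Or.inr (Finset.mem_union_left _ h)))
        linarith
      · intro h
        have := u.min'_le _ (Finset.mem_insert.2 (Or.inr (Finset.mem_union_right _ h)))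
        linarith
      · have := u.min'_le z₀ (Finset.mem_insert_self _ _)
        linarith
  -- interleaving
  have hinter : (insert B s).card ≤ (t \ insert B s).card + 1 := by
    apply Finset.card_le_diff_of_interleaved
    intro x hx y hy hxy _
    rcases Finset.mem_insert.1 hx with rfl | hxs
    · rcases Finset.mem_insert.1 hy with rfl | hys
      · exact absurd rfl hxy.ne
      · rcases hBside with ⟨h1, h2⟩ | ⟨h1, h2⟩
        · exact absurd hxy (by have := h1 y hys; linarith)
        · exact ⟨z₀, hz₀t, h2, h1 y hys⟩
    · rcases Finset.mem_insert.1 hy with rfl | hys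
      · rcases hBside with ⟨h1, h2⟩ | ⟨h1, h2⟩
        · exact ⟨z₀, hz₀t, h1 x hxs, h2⟩
        · exact absurd hxy (by have := h1 x hxs; linarith)
      · -- Rolle between two roots of q
        set F := fun x => eval x q * Real.exp (-(c*x)) with hFdef
        have hFx : F x = 0 := by simp [hFdef, hrooteval x hxs]
        have hFy : F y = 0 := by simp [hFdef, hrooteval y hys]
        have hcont : ContinuousOn F (Icc x y) :=
          (Continuous.mul (q.continuous_aeval) (Real.continuous_exp.comp (by continuity))).continuousOn
        obtain ⟨z, hzIoo, hz⟩ := exists_deriv_eq_zero hxy hcont (by rw [hFx, hFy])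
        rw [(hasDerivAt_F q c z).deriv, mul_eq_zero] at hz
        rcases hz with hz | hz
        · exact ⟨z, Multiset.mem_toFinset.2 (by rw [mem_roots']; exact ⟨hrne, hz⟩),
            hzIoo.1, hzIoo.2⟩
        · exact absurd hz (Real.exp_ne_zero _)
  have hds : s.card ≤ (t \ s).card := by
    have h1 : (insert B s).card = s.card + 1 := Finset.card_insert_of_notMem hBs
    have h2 : t \ insert B s = t \ s := by
      ext z
      simp only [Finset.mem_sdiff, Finset.mem_insert, not_or]
      constructor
      · rintro ⟨hzt, _, hzs⟩; exact ⟨hzt, hzs⟩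
      · rintro ⟨hzt, hzs⟩
        exact ⟨hzt, fun h => hBt (h ▸ hzt), hzs⟩
    rw [h1, h2] at hinter
    omega
  -- per-root multiplicity bound
  have key : ∀ x ∈ s, rootMultiplicity x q - 1 ≤ rootMultiplicity x r := by
    intro x hx
    have hxroot : q.IsRoot x := hrooteval x hx
    have h1 : rootMultiplicity x (derivative q) = rootMultiplicity x q - 1 :=
      derivative_rootMultiplicity_of_root hxroot
    have d1 : (X - C x) ^ (rootMultiplicity x q - 1) ∣ derivative q :=
      h1 ▸ pow_rootMultiplicity_dvd _ x
    have d2 : (X - C x) ^ (rootMultiplicity x q - 1) ∣ q :=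
      dvd_trans (pow_dvd_pow _ (Nat.sub_le _ _)) (pow_rootMultiplicity_dvd q x)
    have d3 : (X - C x) ^ (rootMultiplicity x q - 1) ∣ r := by
      rw [hrdef, smul_eq_C_mul]
      exact dvd_sub d1 (d2.mul_left _)
    exact (le_rootMultiplicity_iff hrne).2 d3
  have hcount : n ≤ Multiset.card r.roots := by
    calc n = Multiset.card q.roots := hcard.symm
    _ = ∑ x ∈ s, q.roots.count x := (Multiset.toFinset_sum_count_eq _).symm
    _ = ∑ x ∈ s, ((rootMultiplicity x q - 1) + 1) := by
        refine Finset.sum_congr rfl fun x hx => ?_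
        rw [count_roots]
        have : 0 < rootMultiplicity x q := by
          rw [← count_roots]
          exact Multiset.count_pos.2 (Multiset.mem_toFinset.1 hx)
        omega
    _ = (∑ x ∈ s, (rootMultiplicity x q - 1)) + s.card := by
        rw [Finset.sum_add_distrib, Finset.card_eq_sum_ones]
    _ ≤ (∑ x ∈ s, rootMultiplicity x r) + (t \ s).card :=
        add_le_add (Finset.sum_le_sum key) hds
    _ = (∑ x ∈ s, r.roots.count x) + ∑ x ∈ t \ s, 1 := by
        rw [Finset.card_eq_sum_ones]
        simp [count_roots]
    _ ≤ (∑ x ∈ s, r.roots.count x) + ∑ x ∈ t \ s, r.roots.count x := by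
        gcongr with x hx
        exact Multiset.count_pos.2 (Multiset.mem_toFinset.1 (Finset.mem_sdiff.1 hx).1)
    _ = ∑ x ∈ s ∪ (t \ s), r.roots.count x := (Finset.sum_union Finset.disjoint_sdiff).symm
    _ = ∑ x ∈ t, r.roots.count x := by
        refine (Finset.sum_subset (fun x hx => ?_) (fun x _ hx => ?_)).symm
        · by_cases h : x ∈ s
          · exact Finset.mem_union_left _ h
          · exact Finset.mem_union_right _ (Finset.mem_sdiff.2 ⟨hx, h⟩)
        · exact Multiset.count_eq_zero.2 (fun h => hx (Multiset.mem_toFinset.2 h))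
    _ = Multiset.card r.roots := Multiset.toFinset_sum_count_eq _
  have hle := card_roots' r
  exact ⟨hrne, by omega, hdeg⟩

noncomputable def D : Module.End ℝ ℝ[X] := Polynomial.derivative

lemma D_apply (p : ℝ[X]) : D p = derivative p := rfl

lemma fold_rr (s : Multiset ℝ) : ∀ (p : ℝ[X]), p ≠ 0 → Multiset.card p.roots = p.natDegree →
    Multiset.card s ≤ p.natDegree →
    (aeval D ((s.map (fun a => X - C a)).prod)) p ≠ 0 ∧
    Multiset.card ((aeval D ((s.map (fun a => X - C a)).prod)) p).roots =
      ((aeval D ((s.map (fun a => X - C a)).prod)) p).natDegree ∧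
    p.natDegree ≤ ((aeval D ((s.map (fun a => X - C a)).prod)) p).natDegree +
      Multiset.card s := by
  induction s using Multiset.induction with
  | empty =>
    intro p hp hcard _
    simp only [Multiset.map_zero, Multiset.prod_zero, map_one, Module.End.one_apply]
    exact ⟨hp, hcard, by simp⟩
  | cons a s ih =>
    intro p hp hcard hle
    rw [Multiset.card_cons] at hle
    obtain ⟨h1, h2, h3⟩ := ih p hp hcard (by omega)
    set q := (aeval D ((s.map (fun a => X - C a)).prod)) p with hqdef
    have hstep : (aeval D (((a ::ₘ s).map (fun a => X - C a)).prod)) p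
        = derivative q - a • q := by
      rw [Multiset.map_cons, Multiset.prod_cons, map_mul, Module.End.mul_apply, ← hqdef,
        map_sub, aeval_X, aeval_C]
      simp only [LinearMap.sub_apply]
      rfl
    rw [hstep, Multiset.card_cons]
    rcases eq_or_ne a 0 with rfl | ha
    · have hdq : q.natDegree ≠ 0 := by omega
      obtain ⟨k1, k2, k3⟩ := step_deriv h1 h2 hdq
      simp only [zero_smul, sub_zero]
      exact ⟨k1, k2, by omega⟩
    · obtain ⟨k1, k2, k3⟩ := step_c h1 h2 ha
      exact ⟨k1, k2, by omega⟩

lemma rr_reflect {f : ℝ[X]} (hf : RealRooted f) : RealRooted (reflect f.natDegree f) := by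
  refine ⟨by rw [Ne, reflect_eq_zero_iff]; exact hf.1, fun z hz => ?_⟩
  by_contra him
  have hz0 : z ≠ 0 := fun h => him (by rw [h]; rfl)
  letI : Invertible (z⁻¹) := invertibleOfNonzero (inv_ne_zero hz0)
  have hiv : ⅟(z⁻¹) = z := by
    rw [invOf_eq_inv, inv_inv]
  have hkey := (eval₂_reflect_eq_zero_iff (algebraMap ℝ ℂ) (z⁻¹) f.natDegree f le_rfl)
  rw [hiv] at hkey
  have hz' : eval₂ (algebraMap ℝ ℂ) z (reflect f.natDegree f) = 0 := by
    rw [← eval_map]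
    exact hz
  have hroot : (f.map (algebraMap ℝ ℂ)).IsRoot z⁻¹ := by
    rw [IsRoot, eval_map]
    exact hkey.1 hz'
  have him' := hf.2 _ hroot
  rw [Complex.inv_im] at him'
  have hns : Complex.normSq z ≠ 0 := by
    simpa [Complex.normSq_eq_zero] using hz0
  have : z.im = 0 := by
    field_simp at him'
    simpa using him'
  exact him this

theorem laguerre' (f : Polynomial ℝ) (hf : RealRooted f) :
    RealRooted (∑ k ∈ Finset.range (f.natDegree + 1),
      C (f.coeff k / k.factorial) * X ^ k) := by
  classical
  set n := f.natDegree with hn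
  set g := reflect n f with hg
  set T : ℝ[X] := ∑ k ∈ Finset.range (n + 1), C (f.coeff k / k.factorial) * X ^ k with hT
  have hgr : RealRooted g := rr_reflect hf
  have hgne : g ≠ 0 := hgr.1
  have hgcard : Multiset.card g.roots = g.natDegree := card_of_rr hgr
  have hgdeg : g.natDegree ≤ n := by
    rw [hg]
    refine natDegree_le_iff_coeff_eq_zero.2 fun N hN => ?_
    rw [coeff_reflect, revAt_eq_self_of_lt hN]
    exact coeff_eq_zero_of_natDegree_lt hN
  have hfac := (splits_iff_card_roots.2 hgcard).eq_prod_roots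
  have hXn : (X ^ n : ℝ[X]) ≠ 0 := pow_ne_zero _ X_ne_zero
  have hXncard : Multiset.card (X ^ n : ℝ[X]).roots = (X ^ n : ℝ[X]).natDegree := by
    rw [roots_pow, roots_X, natDegree_X_pow]
    simp
  have hcardle : Multiset.card g.roots ≤ (X ^ n : ℝ[X]).natDegree := by
    rw [natDegree_X_pow]
    omega
  obtain ⟨h1, h2, _⟩ := fold_rr g.roots (X ^ n) hXn hXncard hcardle
  set q := (aeval D ((g.roots.map (fun a => X - C a)).prod)) (X ^ n) with hq
  have hlc : g.leadingCoeff ≠ 0 := leadingCoeff_ne_zero.2 hgne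
  have happ : (aeval D g) (X ^ n : ℝ[X]) = g.leadingCoeff • q := by
    conv_lhs => rw [hfac]
    rw [map_mul, Module.End.mul_apply, aeval_C, ← hq, Module.algebraMap_end_apply]
  have hid : (aeval D g) (X ^ n : ℝ[X]) = (n.factorial : ℝ) • T := by
    rw [aeval_eq_sum_range' (show g.natDegree < n + 1 by omega), LinearMap.sum_apply]
    have hterm : ∀ i ∈ Finset.range (n + 1),
        (g.coeff i • D ^ i) (X ^ n : ℝ[X])
          = C (f.coeff (n - i) * n.descFactorial i) * X ^ (n - i) := by
      intro i hi
      rw [LinearMap.smul_apply, Module.End.pow_apply]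
      have hDi : (⇑D)^[i] (X ^ n : ℝ[X]) = derivative^[i] (X ^ n : ℝ[X]) := rfl
      have hco : g.coeff i = f.coeff (n - i) := by
        rw [hg, coeff_reflect, revAt_le (Nat.lt_succ_iff.1 (Finset.mem_range.1 hi))]
      rw [hDi, iterate_derivative_X_pow_eq_smul, hco, smul_smul, ← smul_eq_C_mul]
    rw [Finset.sum_congr rfl hterm, ← Finset.sum_range_reflect]
    rw [hT, Finset.smul_sum]
    refine Finset.sum_congr rfl fun j hj => ?_
    have hjn : j ≤ n := Nat.lt_succ_iff.1 (Finset.mem_range.1 hj)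
    have e1 : n + 1 - 1 - j = n - j := by omega
    have e2 : n - (n - j) = j := by omega
    rw [e1, e2]
    have e3 : (n.descFactorial (n - j) : ℝ) = (n.factorial : ℝ) / (j.factorial : ℝ) := by
      rw [Nat.descFactorial_eq_div (by omega : n - j ≤ n), e2]
      rw [Nat.cast_div (Nat.factorial_dvd_factorial hjn)
        (Nat.cast_ne_zero.2 (Nat.factorial_ne_zero j))]
    rw [e3, smul_eq_C_mul, ← mul_assoc, ← C_mul]
    congr 2
    field_simp
  have hsmul_eq : (n.factorial : ℝ) • T = g.leadingCoeff • q := by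
    rw [← hid, happ]
  have hfactne : (n.factorial : ℝ) ≠ 0 := Nat.cast_ne_zero.2 (Nat.factorial_ne_zero n)
  have hTne : T ≠ 0 := by
    intro h
    rw [h, smul_zero] at hsmul_eq
    exact h1 ((smul_eq_zero.1 hsmul_eq.symm).resolve_left hlc)
  have hTcard : Multiset.card T.roots = T.natDegree := by
    have e1 : T.roots = q.roots := by
      rw [← roots_smul_nonzero T hfactne, hsmul_eq, roots_smul_nonzero q hlc]
    have e2 : T.natDegree = q.natDegree := by
      have := congrArg natDegree hsmul_eq
      rwa [smul_eq_C_mul, smul_eq_C_mul, natDegree_C_mul hfactne, natDegree_C_mul hlc] at this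
    rw [e1, e2]
    exact h2
  exact rr_of_card hTne hTcard

end Laguerre

/-- **Laguerre's theorem.** If `a₀ + a₁x + ⋯ + aₙxⁿ` is real-rooted then so is
`a₀ + a₁x + (a₂/2!)x² + ⋯ + (aₙ/n!)xⁿ`. -/
theorem laguerre (f : Polynomial ℝ) (hf : RealRooted f) :
    RealRooted (∑ k ∈ Finset.range (f.natDegree + 1),
      C (f.coeff k / k.factorial) * X ^ k) := by
  exact Laguerre.laguerre' f hf
end
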